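/- arXiv:2503.01032 — 6 statements merged into one kernel-verified Lean document; each statement's English description precedes it below -/
import Mathlib

section
/- Let m ≥ 5 be an integer and let χ : E(K_m) → Z_3 be an edge-coloring such that for every vertex v, at most two colors appear on the edges incident to v, and one of the colors appearing at v appears on at most one edge incident to v (i.e., no vertex is incident to two distinct colors each appearing at least twice). Then either there is a color a ∈ Z_3 such that the edges of the other two colors form a matching in K_m, or K_m contains a monochromatic complete subgraph on m−1 vertices. -/
/-!
Call `a` dominant at `v` if at most one edge at `v` has a colour other than `a`; the local
hypothesis makes some colour dominant at every vertex, giving a colouring `col` of the vertices.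
An edge `xy` with `col x ≠ col y` is exceptional at one of its ends, and every vertex has at most
one exceptional edge, so a colour class of size `s` satisfies `s (m - s) ≤ m`. For `m ≥ 5` a class
with two vertices therefore has at least `m - 1`: either `col` is constant, which is the matching
alternative, or it takes one other value at a single vertex `z`, and then every edge avoiding `z`
has the majority colour.
-/

open Finset

variable {V C : Type*}

def IsDominantColor (χ : Sym2 V → C) (v : V) (a : C) : Prop :=
  ∀ u u' : V, u ≠ v → u' ≠ v → χ s(v, u) ≠ a → χ s(v, u') ≠ a → u = u'

theorem exists_pair_of_not_isDominantColor {χ : Sym2 V → C} {v : V} {d e : C}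
    (hde : ∀ u, u ≠ v → χ s(v, u) = d ∨ χ s(v, u) = e) (hd : ¬ IsDominantColor χ v d) :
    ∃ u u' : V, u ≠ v ∧ u' ≠ v ∧ u ≠ u' ∧ χ s(v, u) = e ∧ χ s(v, u') = e := by
  simp only [IsDominantColor, not_forall] at hd
  obtain ⟨u, u', hu, hu', hud, hu'd, huu'⟩ := hd
  exact ⟨u, u', hu, hu', huu', (hde u hu).resolve_left hud, (hde u' hu').resolve_left hu'd⟩

theorem exists_isDominantColor [Fintype C] (hC : Fintype.card C = 3)
    (χ : Sym2 V → C) {v : V} (habsent : ∃ a : C, ∀ u : V, u ≠ v → χ s(v, u) ≠ a)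
    (hrare : ¬ ∃ a b : C, a ≠ b ∧
      (∃ u u' : V, u ≠ v ∧ u' ≠ v ∧ u ≠ u' ∧ χ s(v, u) = a ∧ χ s(v, u') = a) ∧
      (∃ u u' : V, u ≠ v ∧ u' ≠ v ∧ u ≠ u' ∧ χ s(v, u) = b ∧ χ s(v, u') = b)) :
    ∃ a : C, IsDominantColor χ v a := by
  classical
  obtain ⟨c₀, hc₀⟩ := habsent
  obtain ⟨b, c, hbc, hcompl⟩ : ∃ b c : C, b ≠ c ∧ ({c₀}ᶜ : Finset C) = {b, c} :=
    card_eq_two.mp (by rw [card_compl, hC, card_singleton])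
  have hbc_of : ∀ u, u ≠ v → χ s(v, u) = b ∨ χ s(v, u) = c := fun u hu => by
    have hmem : χ s(v, u) ∈ ({c₀}ᶜ : Finset C) := by simpa using hc₀ u hu
    simpa [hcompl] using hmem
  by_contra! hnone
  exact hrare ⟨c, b, hbc.symm,
    exists_pair_of_not_isDominantColor hbc_of (hnone b),
    exists_pair_of_not_isDominantColor (fun u hu => (hbc_of u hu).symm) (hnone c)⟩

theorem IsDominantColor.apply_eq {χ : Sym2 V → C} {v u w : V} {a : C}
    (h : IsDominantColor χ v a) (hu : u ≠ v) (hw : w ≠ v) (huw : u ≠ w) (hχu : χ s(v, u) ≠ a) :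
    χ s(v, w) = a := by
  by_contra hχw
  exact huw (h u w hu hw hχu hχw)

section
variable {χ : Sym2 V → C} {col : V → C}

-- Each `X`–`Y` edge is exceptional at an end, and each vertex has at most one exceptional edge.
theorem card_mul_card_le_card_add_card (hcol : ∀ v, IsDominantColor χ v (col v))
    (X Y : Finset V) (hXY : ∀ x ∈ X, ∀ y ∈ Y, col x ≠ col y) :
    #X * #Y ≤ #X + #Y := by
  classical
  let f : V × V → V := fun p => if χ s(p.1, p.2) = col p.1 then p.2 else p.1
  have hinj : Set.InjOn f (X ×ˢ Y : Finset (V × V)) := by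
    rintro ⟨x, y⟩ hp ⟨x', y'⟩ hp' hf
    simp only [mem_coe, mem_product] at hp hp'
    have hne : ∀ x ∈ X, ∀ y ∈ Y, x ≠ y := fun x hx y hy h => hXY x hx y hy (congrArg col h)
    by_cases h : χ s(x, y) = col x <;> by_cases h' : χ s(x', y') = col x' <;>
      simp only [f, h, h', if_true, if_false] at hf
    · subst hf
      have hx : χ s(y, x) ≠ col y := by rw [Sym2.eq_swap, h]; exact hXY x hp.1 y hp.2
      have hx' : χ s(y, x') ≠ col y := by rw [Sym2.eq_swap, h']; exact hXY x' hp'.1 y hp.2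
      rw [hcol y x x' (hne x hp.1 y hp.2) (hne x' hp'.1 y hp.2) hx hx']
    · exact absurd hf.symm (hne x' hp'.1 y hp.2)
    · exact absurd hf (hne x hp.1 y' hp'.2)
    · subst hf
      rw [hcol x y y' (hne x hp.1 y hp.2).symm (hne x hp.1 y' hp'.2).symm h h']
  calc #X * #Y = #(X ×ˢ Y) := (card_product X Y).symm
    _ ≤ #(X ∪ Y) := card_le_card_of_injOn f (fun p hp => by
        simp only [mem_coe, mem_product] at hp
        by_cases h : χ s(p.1, p.2) = col p.1 <;> simp [f, h, hp]) hinj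
    _ ≤ #X + #Y := card_union_le X Y

theorem subsingleton_setOf_ne [Fintype V] (hcol : ∀ v, IsDominantColor χ v (col v))
    (hV : 5 ≤ Fintype.card V) {x y : V} {a : C} (hxy : x ≠ y) (hx : col x = a)
    (hy : col y = a) : {v | col v ≠ a}.Subsingleton := by
  classical
  set X := univ.filter (col · = a)
  set Y := univ.filter (col · ≠ a)
  have hXY : #X + #Y = Fintype.card V := card_filter_add_card_filter_not _
  have hX : 2 ≤ #X := by
    rw [← card_pair hxy]
    exact card_le_card (by simp [X, insert_subset_iff, hx, hy])
  have hmul := card_mul_card_le_card_add_card hcol X Y (by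
    intro u hu w hw
    simp only [X, Y, mem_filter, mem_univ, true_and] at hu hw
    rw [hu]; exact Ne.symm hw)
  have hY : #Y ≤ 1 := by nlinarith
  intro u hu w hw
  exact card_le_one.mp hY u (by simpa [Y] using hu) w (by simpa [Y] using hw)

theorem apply_eq_of_col_eq_of_col_ne (hcol : ∀ v, IsDominantColor χ v (col v)) {z u w : V}
    {a : C} (hz : col z ≠ a) (hu : col u = a) (hw : col w = a) (huw : u ≠ w) :
    χ s(u, w) = a := by
  have hzu : u ≠ z := fun h => hz (h ▸ hu)
  have hzw : w ≠ z := fun h => hz (h ▸ hw)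
  have key : ∀ p q, col p = a → p ≠ z → q ≠ z → p ≠ q → χ s(z, p) = col z → χ s(p, q) = a := by
    intro p q hp hpz hqz hpq hzp
    have hχ : χ s(p, z) ≠ a := by rw [Sym2.eq_swap, hzp]; exact hz
    exact (hp ▸ hcol p).apply_eq hpz.symm hpq.symm hqz.symm hχ
  by_cases hχu : χ s(z, u) = col z
  · exact key u w hu hzu hzw huw hχu
  · rw [Sym2.eq_swap]
    exact key w u hw hzw hzu huw.symm ((hcol z).apply_eq hzu hzw huw hχu)

end

theorem stmt2 (m : ℕ) (hm : 5 ≤ m) (χ : Sym2 (Fin m) → ZMod 3)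
    (hlocal : ∀ v : Fin m,
      -- at most two colors appear on the edges incident to `v`
      (∃ a : ZMod 3, ∀ u : Fin m, u ≠ v → χ s(v, u) ≠ a) ∧
      -- no two distinct colors each appear at least twice at `v`
      ¬ ∃ a b : ZMod 3, a ≠ b ∧
        (∃ u u' : Fin m, u ≠ v ∧ u' ≠ v ∧ u ≠ u' ∧ χ s(v, u) = a ∧ χ s(v, u') = a) ∧
        (∃ u u' : Fin m, u ≠ v ∧ u' ≠ v ∧ u ≠ u' ∧ χ s(v, u) = b ∧ χ s(v, u') = b)) :
    -- either the edges of the two colors other than some `a` form a matching …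
    (∃ a : ZMod 3, ∀ u v w : Fin m, v ≠ u → w ≠ u →
        χ s(u, v) ≠ a → χ s(u, w) ≠ a → v = w) ∨
    -- … or there is a monochromatic complete subgraph on `m - 1` vertices
    (∃ (S : Finset (Fin m)) (a : ZMod 3), S.card = m - 1 ∧
        ∀ u ∈ S, ∀ v ∈ S, u ≠ v → χ s(u, v) = a) := by
  choose col hcol using fun v => exists_isDominantColor (ZMod.card 3) χ (hlocal v).1 (hlocal v).2
  obtain ⟨x, y, hxy, hcol_xy⟩ := Fintype.exists_ne_map_eq_of_card_lt col
    (by rw [ZMod.card, Fintype.card_fin]; omega)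
  have hsub := subsingleton_setOf_ne hcol (by rwa [Fintype.card_fin]) hxy rfl hcol_xy.symm
  by_cases h : ∀ z, col z = col x
  · exact Or.inl ⟨col x, fun u => h u ▸ hcol u⟩
  obtain ⟨z, hz⟩ := not_forall.mp h
  have hrest : ∀ u ∈ univ.erase z, col u = col x := fun u hu => by
    by_contra hu'
    exact (mem_erase.mp hu).1 (hsub hu' hz)
  exact Or.inr ⟨univ.erase z, col x, by simp, fun u hu w hw huw =>
    apply_eq_of_col_eq_of_col_ne hcol hz (hrest u hu) (hrest w hw) huw⟩
end

section
/- Let F be a 1 (mod 3)-regular forest on n vertices with 3 dividing e(F), and suppose F is not a perfect matching (i.e., not a disjoint union of single edges). Then R(F, Z_3) ≤ n + 2. -/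
open Finset

/-- A zero-sum (over `ZMod 3`) copy of the graph `F` in the edge-colored complete graph
on `Fin N`. -/
def HasZeroSumCopy {V : Type} [Fintype V] [DecidableEq V] {N : ℕ}
    (F : SimpleGraph V) [DecidableRel F.Adj] (χ : Sym2 (Fin N) → ZMod 3) : Prop :=
  ∃ f : V → Fin N, Function.Injective f ∧ ∑ e ∈ F.edgeFinset, χ (e.map f) = 0

/-!
A forest whose degrees are all `1 (mod 3)` and which is not a matching has a vertex `w` carrying
three leaves. Fix a coloring `χ` of `K_{n+2}`.

If some vertex `p` has five other vertices `A` on which no color occurs four times, then every residue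
is the sum of the colors `χ(p, a)` over three points `a ∈ A`. Embed `F` without the three leaves,
with `w ↦ p`, away from `A`, and then place the leaves in `A` so as to cancel the color sum of the
other edges.

Otherwise every vertex `p` sees one color `c p` on all its edges but at most one, and all but at
most one vertex share the same `c p = b`. On the remaining `n + 1` vertices each vertex misses at
most one other in color `b`, so the forest embeds there greedily, leaf by leaf, with all edges of
color `b`; as `3 ∣ e(F)`, the color sum vanishes.
-/

namespace SimpleGraph

variable {V : Type*} {G : SimpleGraph V}

theorem IsAcyclic.exists_mem_card_filter_adj_le_one [DecidableEq V] [DecidableRel G.Adj]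
    (hG : G.IsAcyclic) {s : Finset V} (hs : s.Nonempty) :
    ∃ v ∈ s, #{w ∈ s | G.Adj v w} ≤ 1 := by
  by_contra! h
  let PathIn (k : ℕ) : Prop :=
    ∃ (u v : V) (p : G.Walk u v), p.IsPath ∧ p.support.toFinset ⊆ s ∧ p.length = k
  -- A path in `s` extends at its start by a neighbor other than its second vertex, which is
  -- off the path by acyclicity; this yields paths in `s` longer than `#s`.
  have extend (k : ℕ) : PathIn k → PathIn (k + 1) := by
    rintro ⟨u, v, p, hp, hps, rfl⟩
    obtain ⟨w, hw, hwsnd⟩ := exists_mem_ne (h u (hps (by simp))) p.snd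
    rw [mem_filter] at hw
    have hwp : w ∉ p.support := fun hw' => hwsnd (hG.eq_snd_of_adj_start hp hw.2 hw')
    exact ⟨w, v, .cons hw.2.symm p, hp.cons hwp, by simp [insert_subset_iff, hw.1, hps], rfl⟩
  obtain ⟨v, hv⟩ := hs
  obtain ⟨u, v, p, hp, hps, hlen⟩ : PathIn #s :=
    Nat.rec ⟨v, v, .nil, .nil, by simpa using hv, rfl⟩ extend #s
  have := card_le_card hps
  rw [List.toFinset_card_of_nodup hp.support_nodup, Walk.length_support] at this
  omega

theorem IsAcyclic.card_edgeFinset_add_one_le [Fintype V] [Nonempty V] [DecidableRel G.Adj]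
    (hG : G.IsAcyclic) : #G.edgeFinset + 1 ≤ Fintype.card V := by
  classical
  obtain ⟨T, hGT, -, hT⟩ := connected_top.exists_isTree_le_of_le_of_isAcyclic le_top hG
  rw [← hT.card_edgeFinset]
  gcongr

theorem IsAcyclic.exists_three_leaves [Fintype V] [DecidableEq V] [DecidableRel G.Adj]
    (hG : G.IsAcyclic) (hdeg : ∀ v, 2 ≤ G.degree v → 4 ≤ G.degree v) {v₀ : V}
    (hv₀ : 2 ≤ G.degree v₀) :
    ∃ w, ∃ L : Finset V, #L = 3 ∧ ∀ u ∈ L, G.neighborFinset u = {w} := by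
  set I : Finset V := {v | 2 ≤ G.degree v}
  -- `w` is a leaf of the forest induced on the vertices of degree at least two.
  obtain ⟨w, hwI, hw⟩ := hG.exists_mem_card_filter_adj_le_one (s := I) ⟨v₀, by simpa [I]⟩
  have hw4 := hdeg w (by simpa [I] using hwI)
  have hinner : #{u ∈ G.neighborFinset w | u ∈ I} ≤ #{u ∈ I | G.Adj w u} :=
    card_le_card fun u => by simp +contextual
  have hsplit := card_filter_add_card_filter_not (s := G.neighborFinset w) (· ∈ I)
  rw [card_neighborFinset_eq_degree] at hsplit
  obtain ⟨L, hLsub, hL⟩ := exists_subset_card_eq (s := {u ∈ G.neighborFinset w | u ∉ I}) (n := 3)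
    (by omega)
  refine ⟨w, L, hL, fun u hu => ?_⟩
  have hu := hLsub hu
  simp only [mem_filter, mem_neighborFinset, I, mem_univ, true_and, not_le] at hu
  have hwu : w ∈ G.neighborFinset u := by simpa using hu.1.symm
  refine eq_singleton_iff_unique_mem.2 ⟨hwu, fun x hx => ?_⟩
  exact card_le_one.1 (by rw [card_neighborFinset_eq_degree]; omega) _ hx _ hwu

theorem sum_edgeFinset_eq_add_sum_leaves {M : Type*} [AddCommMonoid M] [Fintype V]
    [DecidableEq V] [DecidableRel G.Adj] {w : V} {L : Finset V}
    (hL : ∀ u ∈ L, G.neighborFinset u = {w}) (φ : Sym2 V → M) :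
    ∑ e ∈ G.edgeFinset, φ e =
      ∑ e ∈ G.edgeFinset with ∀ x ∈ e, x ∉ L, φ e + ∑ u ∈ L, φ s(w, u) := by
  have hadj (u : V) (hu : u ∈ L) (x : V) : G.Adj u x ↔ x = w := by
    rw [← mem_neighborFinset, hL u hu, mem_singleton]
  have hstar : {e ∈ G.edgeFinset | ¬∀ x ∈ e, x ∉ L} = L.image (s(w, ·)) := by
    ext e
    induction e using Sym2.ind with | _ a b => ?_
    simp only [mem_filter, mem_edgeFinset, mem_edgeSet, Sym2.mem_iff, mem_image, Sym2.eq_iff]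
    grind [adj_comm]
  rw [← sum_filter_add_sum_filter_not G.edgeFinset (fun e => ∀ x ∈ e, x ∉ L), hstar,
    sum_image fun u _ v _ h => Sym2.congr_right.1 h]

theorem IsAcyclic.exists_injOn_mapsTo_adj_of_card_lt [DecidableEq V] [DecidableRel G.Adj]
    {W : Type*} [DecidableEq W] (hG : G.IsAcyclic) (K : SimpleGraph W) (H : Finset W)
    (ex : W → W) (hK : ∀ x ∈ H, ∀ y ∈ H, y ≠ x → y ≠ ex x → K.Adj x y)
    (s : Finset V) (hs : #s < #H) :
    ∃ f : V → W, Set.InjOn f s ∧ Set.MapsTo f s H ∧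
      ∀ a ∈ s, ∀ b ∈ s, G.Adj a b → K.Adj (f a) (f b) := by
  induction s using Finset.strongInduction with | H s ih =>
  obtain rfl | hne := s.eq_empty_or_nonempty
  · obtain ⟨y, -⟩ := card_pos.1 hs
    exact ⟨fun _ => y, by simp, by simp [Set.MapsTo], by simp⟩
  -- Embed `s` minus a vertex `v` with at most one neighbor `w` in `s`, then send `v` to a
  -- free vertex of `H` other than the non-neighbor of the image of `w`.
  obtain ⟨v, hv, hvdeg⟩ := hG.exists_mem_card_filter_adj_le_one hne
  set s' := s.erase v
  have hvs' : v ∉ s' := notMem_erase v s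
  have hs' : #s' + 1 = #s := card_erase_add_one hv
  obtain ⟨f, hinj, hmaps, hadj⟩ := ih s' (erase_ssubset hv) (by omega)
  have : Nonempty V := ⟨v⟩
  obtain ⟨w, hw⟩ := card_le_one_iff_subset_singleton.1 hvdeg
  obtain ⟨y, hyH, hy⟩ := exists_mem_notMem_of_card_lt_card
    (s := insert (ex (f w)) (s'.image f)) (t := H) <| by
      have := card_insert_le (ex (f w)) (s'.image f)
      have := card_image_le (s := s') (f := f)
      omega
  rw [mem_insert, mem_image, not_or, not_exists] at hy
  have hyf (a : V) (ha : a ∈ s') : f a ≠ y := fun h => hy.2 a ⟨ha, h⟩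
  have hvw (b : V) (hb : b ∈ s') (hvb : G.Adj v b) : b = w :=
    mem_singleton.1 (hw (mem_filter.2 ⟨mem_of_mem_erase hb, hvb⟩))
  have heq : Set.EqOn (Function.update f v y) f s' := fun a ha =>
    Function.update_of_ne (ne_of_mem_of_not_mem ha hvs') _ _
  refine ⟨Function.update f v y, ?_, ?_, ?_⟩
  · rw [← insert_erase hv, coe_insert, Set.injOn_insert (by simp)]
    refine ⟨hinj.congr heq.symm, ?_⟩
    rintro ⟨a, ha, hay⟩
    rw [heq ha, Function.update_self] at hay
    exact hyf a ha hay
  · intro a ha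
    rw [← insert_erase hv, coe_insert] at ha
    rcases ha with rfl | ha
    · simpa
    · rw [heq ha]; exact hmaps ha
  · have key (b : V) (hb : b ∈ s') (hvb : G.Adj v b) : K.Adj y (f b) := by
      obtain rfl := hvw b hb hvb
      exact (hK _ (hmaps hb) y hyH (hyf b hb).symm hy.1).symm
    intro a ha b hb hab
    rw [← insert_erase hv, mem_insert] at ha hb
    rcases ha with rfl | ha <;> rcases hb with rfl | hb
    · exact absurd hab G.irrefl
    · simpa [heq hb] using key b hb hab
    · simpa [heq ha] using (key a ha hab.symm).symm
    · rw [heq ha, heq hb]; exact hadj a ha b hb hab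

end SimpleGraph

theorem exists_injOn_mapsTo_apply_eq {α β : Type*} [DecidableEq β] {s : Finset α}
    {t : Finset β} (hst : #s ≤ #t) {a : α} {b : β} (ha : a ∈ s) (hb : b ∈ t) :
    ∃ g : α → β, Set.InjOn g s ∧ Set.MapsTo g s t ∧ g a = b := by
  have : Nonempty β := ⟨b⟩
  obtain ⟨g, hgt, hg⟩ := s.finite_toSet.exists_injOn_of_encard_le (t := (t : Set β)) (by simpa)
  refine ⟨Equiv.swap (g a) b ∘ g, (Equiv.injective _).comp_injOn hg, fun x hx => ?_,
    Equiv.swap_apply_left _ _⟩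
  simp only [Function.comp_apply, Equiv.swap_apply_def]
  split_ifs
  exacts [hb, hgt ha, hgt hx]

set_option maxRecDepth 10000 in
theorem ZMod.exists_subset_card_eq_three_sum_eq {W : Type*} (A : Finset W) (hA : #A = 5)
    (v : W → ZMod 3) (hv : ∀ a, #{q ∈ A | v q = a} ≤ 3) (t : ZMod 3) :
    ∃ T ⊆ A, #T = 3 ∧ ∑ q ∈ T, v q = t := by
  have key : ∀ v : Fin 5 → ZMod 3, (∀ a, #{i | v i = a} ≤ 3) →
      ∀ t, ∃ T : Finset (Fin 5), #T = 3 ∧ ∑ i ∈ T, v i = t := by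
    decide
  let e : Fin 5 ↪ W := (A.equivFinOfCardEq hA).symm.toEmbedding.trans (.subtype (· ∈ A))
  have he : univ.map e = A := eq_of_subset_of_card_le
    (fun x hx => by obtain ⟨i, -, rfl⟩ := mem_map.1 hx; exact Subtype.prop _) (by simp [hA])
  obtain ⟨T, hT, hTt⟩ := key (v ∘ e) (fun a => by simpa [← he, filter_map] using hv a) t
  exact ⟨T.map e, he ▸ map_subset_map.2 (subset_univ T), by simpa, by simpa⟩

theorem hasZeroSumCopy_of_three_leaves {V : Type} [Fintype V] [DecidableEq V] {N : ℕ}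
    (F : SimpleGraph V) [DecidableRel F.Adj] (χ : Sym2 (Fin N) → ZMod 3)
    (hN : Fintype.card V + 2 ≤ N) {w : V} {L : Finset V} (hL3 : #L = 3)
    (hL : ∀ u ∈ L, F.neighborFinset u = {w}) {p : Fin N} {A : Finset (Fin N)} (hpA : p ∉ A)
    (hA5 : #A = 5) (hA : ∀ b, #{q ∈ A | χ s(p, q) = b} ≤ 3) :
    HasZeroSumCopy F χ := by
  have hwL : w ∉ L := fun hw =>
    F.irrefl ((F.mem_neighborFinset w w).1 (hL w hw ▸ mem_singleton_self w))
  have : Nonempty (Fin N) := ⟨p⟩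
  obtain ⟨g, hg, hgA, hgw⟩ := exists_injOn_mapsTo_apply_eq (s := Lᶜ) (t := Aᶜ)
    (by simp [card_compl, hL3, hA5]; omega) (by simpa) (by simpa)
  set S := ∑ e ∈ F.edgeFinset with ∀ x ∈ e, x ∉ L, χ (e.map g)
  obtain ⟨T, hTA, hT3, hTS⟩ := ZMod.exists_subset_card_eq_three_sum_eq A hA5 _ hA (-S)
  obtain ⟨h, hh⟩ := L.finite_toSet.exists_bijOn_of_encard_eq (t := (T : Set (Fin N)))
    (by simp [hL3, hT3])
  set f := L.piecewise h g
  have hfL : Set.EqOn f h L := fun u hu => piecewise_eq_of_mem _ _ _ hu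
  have hfL' : Set.EqOn f g ↑Lᶜ := fun u hu => piecewise_eq_of_notMem _ _ _ (by simpa using hu)
  refine ⟨f, ?_, ?_⟩
  · rw [← Set.injOn_univ, ← Set.union_compl_self (L : Set V), Set.injOn_union disjoint_compl_right]
    refine ⟨hh.injOn.congr hfL.symm, ?_, fun x hx y hy hxy => ?_⟩
    · exact coe_compl L ▸ hg.congr hfL'.symm
    · have hfx : f x ∈ A := hfL hx ▸ hTA (hh.mapsTo hx)
      have hy : y ∈ Lᶜ := by simpa using hy
      have hfy : f y ∉ A := by simpa [hfL' hy] using hgA hy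
      exact hfy (hxy ▸ hfx)
  · have hfw : f w = p := hfL' (by simpa) ▸ hgw
    have hrest : ∑ e ∈ F.edgeFinset with ∀ x ∈ e, x ∉ L, χ (e.map f) = S :=
      sum_congr rfl fun e he =>
        congrArg χ (Sym2.map_congr fun x hx => hfL' (by simpa using (mem_filter.1 he).2 x hx))
    have hleaves : ∑ u ∈ L, χ (s(w, u).map f) = ∑ q ∈ T, χ s(p, q) :=
      sum_nbij h hh.mapsTo hh.injOn hh.surjOn fun u hu => by rw [Sym2.map_mk, hfw, hfL hu]
    rw [F.sum_edgeFinset_eq_add_sum_leaves hL, hrest, hleaves, hTS, add_neg_cancel]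

theorem exists_forall_ne_eq_of_forall_card_eq_five {α β : Type*} [DecidableEq α] [Fintype β]
    [DecidableEq β] (M : Finset α) (hM : 2 * Fintype.card β < #M) (g : α → β)
    (h : ∀ A ⊆ M, #A = 5 → ∃ b, 3 < #{q ∈ A | g q = b}) :
    ∃ b d, ∀ q ∈ M, q ≠ d → g q = b := by
  obtain ⟨b, -, hb⟩ := exists_lt_card_fiber_of_mul_lt_card_of_maps_to (s := M) (f := g)
    (t := univ) (n := 2) (fun _ _ => mem_univ _) (by rwa [card_univ, mul_comm])
  refine ⟨b, ?_⟩
  by_contra! hexc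
  -- Three points of color `b` and two exceptions `q₁ ≠ q₂` make a five-set with no color
  -- repeated four times.
  obtain ⟨T, hTb, hT⟩ := exists_subset_card_eq (n := 3) hb
  obtain ⟨r, hr⟩ := card_pos.1 (by omega : 0 < #T)
  obtain ⟨q₁, hq₁M, -, hq₁⟩ := hexc r
  obtain ⟨q₂, hq₂M, hq₂₁, hq₂⟩ := hexc q₁
  have hqT {q : α} (hq : g q ≠ b) : q ∉ T := fun h => hq (mem_filter.1 (hTb h)).2
  obtain ⟨b', hb'⟩ := h (insert q₁ (insert q₂ T))
    (insert_subset hq₁M (insert_subset hq₂M fun x hx => mem_of_mem_filter _ (hTb hx)))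
    (by rw [card_insert_of_notMem (by simp [hq₂₁.symm, hqT hq₁]),
      card_insert_of_notMem (hqT hq₂), hT])
  by_cases hbb' : b' = b
  · subst hbb'
    have : {q ∈ insert q₁ (insert q₂ T) | g q = b'} ⊆ T := by
      intro x
      simp only [mem_filter, mem_insert]
      rintro ⟨rfl | rfl | hx, hxb⟩
      exacts [absurd hxb hq₁, absurd hxb hq₂, hx]
    have := card_le_card this
    omega
  · have : {q ∈ insert q₁ (insert q₂ T) | g q = b'} ⊆ {q₁, q₂} := by
      intro x
      simp only [mem_filter, mem_insert, mem_singleton]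
      rintro ⟨rfl | rfl | hx, hxb⟩
      exacts [Or.inl rfl, Or.inr rfl, absurd (hxb.symm.trans (mem_filter.1 (hTb hx)).2) hbb']
    have := (card_le_card this).trans card_le_two
    omega

theorem eq_of_ne_of_two_lt_card_filter_eq {α β : Type*} [Fintype α] [DecidableEq β]
    (χ : Sym2 α → β) (c : α → β) (d : α → α)
    (hd : ∀ p q, q ≠ p → q ≠ d p → χ s(p, q) = c p) {b : β} (hb : 2 < #{p | c p = b})
    {q₁ q₂ : α} (hq₁ : c q₁ ≠ b) (hq₂ : c q₂ ≠ b) : q₁ = q₂ := by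
  -- An edge between classes of different colors is an exception for one of its endpoints.
  have key (r q : α) (hr : c r = b) (hq : c q ≠ b) : d r = q ∨ d q = r := by
    have hrq : r ≠ q := by rintro rfl; exact hq hr
    by_contra! h
    have h₁ := hd r q hrq.symm h.1.symm
    have h₂ := hd q r hrq h.2.symm
    rw [Sym2.eq_swap, h₁] at h₂
    exact hq (h₂.symm.trans hr)
  obtain ⟨r₁, hr₁, r₂, hr₂, r₃, hr₃, h₁₂, h₁₃, h₂₃⟩ := two_lt_card.1 hb
  simp only [mem_filter, mem_univ, true_and] at hr₁ hr₂ hr₃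
  -- Unless `q₁ = q₂`, each `rᵢ` equals `d q₁` or `d q₂`: impossible for three distinct `rᵢ`.
  grind

theorem hasZeroSumCopy_of_forall_card_eq_five {V : Type} [Fintype V] [DecidableEq V] {N : ℕ}
    (F : SimpleGraph V) [DecidableRel F.Adj] (hF : F.IsAcyclic) (hdiv : 3 ∣ #F.edgeFinset)
    (χ : Sym2 (Fin N) → ZMod 3) (hN : 8 ≤ N) (hV : Fintype.card V + 2 ≤ N)
    (h : ∀ p (A : Finset (Fin N)), p ∉ A → #A = 5 → ∃ b, 3 < #{q ∈ A | χ s(p, q) = b}) :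
    HasZeroSumCopy F χ := by
  -- Every vertex `p` sees one color `c p` on all but at most one edge `p (d p)`.
  choose c d hcd using fun p => exists_forall_ne_eq_of_forall_card_eq_five (univ.erase p)
    (by simp; omega) (fun q => χ s(p, q)) fun A hA => h p A fun hp => by simpa using hA hp
  have hd (p q : Fin N) (hqp : q ≠ p) (hqd : q ≠ d p) : χ s(p, q) = c p :=
    hcd p q (mem_erase.2 ⟨hqp, mem_univ q⟩) hqd
  obtain ⟨b, hb⟩ := Fintype.exists_lt_card_fiber_of_mul_lt_card c (n := 2) (by simp; omega)
  have hH : Fintype.card V < #{p | c p = b} := by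
    have hcompl : #{p | ¬c p = b} ≤ 1 := card_le_one.2 fun q₁ hq₁ q₂ hq₂ =>
      eq_of_ne_of_two_lt_card_filter_eq χ c d hd hb (mem_filter.1 hq₁).2 (mem_filter.1 hq₂).2
    have := card_filter_add_card_filter_not (s := univ) (fun p => c p = b)
    simp only [card_univ, Fintype.card_fin] at this
    omega
  obtain ⟨f, hf, -, hfb⟩ := hF.exists_injOn_mapsTo_adj_of_card_lt
    (SimpleGraph.fromEdgeSet {e | χ e = b}) _ d
    (fun x hx y _ hyx hyd => ⟨(hd x y hyx hyd).trans (mem_filter.1 hx).2, hyx.symm⟩)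
    univ (by simpa using hH)
  refine ⟨f, by simpa using hf, ?_⟩
  have hedge : ∀ e ∈ F.edgeFinset, χ (e.map f) = b := by
    intro e he
    induction e using Sym2.ind with | _ x y => ?_
    have := hfb x (mem_univ x) y (mem_univ y) (by simpa using he)
    simpa using this.1
  rw [sum_congr rfl hedge, sum_const, nsmul_eq_mul, (ZMod.natCast_eq_zero_iff _ 3).2 hdiv,
    zero_mul]

theorem stmt3 {V : Type} [Fintype V] [DecidableEq V]
    (F : SimpleGraph V) [DecidableRel F.Adj] (n : ℕ)
    (hcard : Fintype.card V = n)
    (hforest : F.IsAcyclic)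
    (hdiv : 3 ∣ F.edgeFinset.card)
    (hreg : ∀ v, F.degree v % 3 = 1)
    (hnotmatching : ¬ ∀ v, F.degree v = 1)
    (χ : Sym2 (Fin (n + 2)) → ZMod 3) :
    HasZeroSumCopy F χ := by
  obtain ⟨v₀, hv₀⟩ := not_forall.1 hnotmatching
  have hdeg (v : V) (hv : 2 ≤ F.degree v) : 4 ≤ F.degree v := by have := hreg v; omega
  have hv₀4 : 4 ≤ F.degree v₀ := hdeg v₀ (by have := hreg v₀; omega)
  obtain ⟨w, L, hL3, hL⟩ := hforest.exists_three_leaves hdeg (by omega : 2 ≤ F.degree v₀)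
  have : Nonempty V := ⟨v₀⟩
  -- `e(F)` is a multiple of three and at least `deg v₀ ≥ 4`, so `n > e(F) ≥ 6`.
  have hn : 7 ≤ n := by
    have := F.degree_le_card_edgeFinset v₀
    have := hforest.card_edgeFinset_add_one_le
    omega
  by_cases hgood : ∃ p A, p ∉ A ∧ #A = 5 ∧ ∀ b, #{q ∈ A | χ s(p, q) = b} ≤ 3
  · obtain ⟨p, A, hpA, hA5, hA⟩ := hgood
    exact hasZeroSumCopy_of_three_leaves F χ (by omega) hL3 hL hpA hA5 hA
  · push Not at hgood
    exact hasZeroSumCopy_of_forall_card_eq_five F hforest hdiv χ (by omega) (by omega) hgood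
end

section
/- Let F be a forest on n ≥ 7 vertices with 3 dividing e(F), which is not a star and not 1 (mod 3)-regular, and which contains two sibling leaves (two leaves with a common neighbor). Then R(F, Z_3) ≤ n + 1. -/
open Finset

/-- `F` is a star: there is a center adjacent to all other vertices,
and every edge is incident to the center. -/
def IsStar {V : Type} (F : SimpleGraph V) : Prop :=
  ∃ c : V, (∀ v, v ≠ c → F.Adj c v) ∧ (∀ u w, F.Adj u w → u = c ∨ w = c)

set_option linter.unusedSectionVars false
set_option maxHeartbeats 1000000
open Function



section Infra

variable {V : Type} [Fintype V] [DecidableEq V] {N : ℕ}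
variable (F : SimpleGraph V) [DecidableRel F.Adj]

/-- total weight of an embedding -/
def Sm (χ : Sym2 (Fin N) → ZMod 3) (f : V → Fin N) : ZMod 3 :=
  ∑ e ∈ F.edgeFinset, χ (e.map f)

lemma update_inj {f : V → Fin N} (hf : Function.Injective f) {w : Fin N}
    (hw : w ∉ Set.range f) (v : V) : Function.Injective (Function.update f v w) := by
  intro a b hab
  by_cases ha : a = v <;> by_cases hb : b = v
  · rw [ha, hb]
  · rw [ha, Function.update_self, Function.update_of_ne hb] at hab
    exact absurd ⟨b, hab.symm⟩ hw
  · rw [hb, Function.update_self, Function.update_of_ne ha] at hab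
    exact absurd ⟨a, hab⟩ hw
  · rw [Function.update_of_ne ha, Function.update_of_ne hb] at hab
    exact hf hab

lemma incident_filter_eq (v : V) :
    {e ∈ F.edgeFinset | v ∈ e} = (F.neighborFinset v).image (fun u => s(v, u)) := by
  ext e
  induction e with
  | _ a b =>
    simp only [Finset.mem_filter, SimpleGraph.mem_edgeFinset, SimpleGraph.mem_edgeSet,
      Finset.mem_image, SimpleGraph.mem_neighborFinset, Sym2.mem_iff]
    constructor
    · rintro ⟨hab, rfl | rfl⟩
      · exact ⟨b, hab, rfl⟩
      · exact ⟨a, hab.symm, Sym2.eq_swap⟩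
    · rintro ⟨u, hu, he⟩
      rw [Sym2.eq_iff] at he
      rcases he with ⟨rfl, rfl⟩ | ⟨rfl, rfl⟩
      · exact ⟨hu, Or.inl rfl⟩
      · exact ⟨hu.symm, Or.inr rfl⟩

lemma Sm_update (χ : Sym2 (Fin N) → ZMod 3) {f : V → Fin N} (v : V) (w : Fin N) :
    Sm F χ (Function.update f v w)
      = Sm F χ f + ∑ u ∈ F.neighborFinset v, (χ s(w, f u) - χ s(f v, f u)) := by
  classical
  have hsplit : ∀ g : V → Fin N, Sm F χ g =
      (∑ e ∈ {e ∈ F.edgeFinset | v ∈ e}, χ (e.map g))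
        + ∑ e ∈ {e ∈ F.edgeFinset | ¬ v ∈ e}, χ (e.map g) := by
    intro g
    rw [Sm, ← Finset.sum_filter_add_sum_filter_not F.edgeFinset (fun e => v ∈ e)]
  have hnotinc : ∑ e ∈ {e ∈ F.edgeFinset | ¬ v ∈ e}, χ (e.map (Function.update f v w))
      = ∑ e ∈ {e ∈ F.edgeFinset | ¬ v ∈ e}, χ (e.map f) := by
    apply Finset.sum_congr rfl
    intro e he
    rw [Finset.mem_filter] at he
    congr 1
    induction e with
    | _ a b =>
      have ha : a ≠ v := fun h => he.2 (by simp [h])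
      have hb : b ≠ v := fun h => he.2 (by simp [h])
      simp [Sym2.map_pair_eq, Function.update_of_ne ha, Function.update_of_ne hb]
  have hinc : ∀ g : V → Fin N, (∀ u, u ≠ v → g u = f u) →
      ∑ e ∈ {e ∈ F.edgeFinset | v ∈ e}, χ (e.map g)
        = ∑ u ∈ F.neighborFinset v, χ s(g v, f u) := by
    intro g hg
    rw [incident_filter_eq]
    rw [Finset.sum_image]
    · apply Finset.sum_congr rfl
      intro u hu
      rw [SimpleGraph.mem_neighborFinset] at hu
      have huv : u ≠ v := fun h => (F.irrefl (h ▸ hu))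
      simp [Sym2.map_pair_eq, hg u huv]
    · intro a ha b hb hab
      rw [Sym2.eq_iff] at hab
      rcases hab with ⟨-, h⟩ | ⟨h1, h2⟩
      · exact h
      · exact h2.trans h1
  have h1 := hinc (Function.update f v w) (fun u hu => Function.update_of_ne hu w f)
  have h2 := hinc f (fun u _ => rfl)
  rw [hsplit (Function.update f v w), hsplit f, hnotinc, h1, Function.update_self, h2]
  rw [Finset.sum_sub_distrib]
  ring

end Infra


section Ext

variable {V : Type} [Fintype V] [DecidableEq V] {N : ℕ}

/-- extend a partial injective prescription to a full injection missing `w` -/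
lemma exists_ext (hV : Fintype.card V + 1 = N) (s : Finset V) (g : V → Fin N)
    (hginj : Set.InjOn g s) (w : Fin N) (hw : ∀ v ∈ s, g v ≠ w) :
    ∃ f : V → Fin N, Function.Injective f ∧ (∀ v ∈ s, f v = g v) ∧ w ∉ Set.range f := by
  classical
  set t : Finset (Fin N) := insert w (s.image g) with ht
  have hcardim : (s.image g).card = s.card := Finset.card_image_of_injOn hginj
  have hwim : w ∉ s.image g := by
    simp only [Finset.mem_image]
    rintro ⟨v, hv, hgv⟩
    exact hw v hv hgv
  have hcardt : t.card = s.card + 1 := by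
    rw [ht, Finset.card_insert_of_notMem hwim, hcardim]
  have hst : s.card ≤ Fintype.card V := s.card_le_univ
  have hcc : Fintype.card {x // x ∈ sᶜ} = Fintype.card {x // x ∈ tᶜ} := by
    rw [Fintype.card_coe, Fintype.card_coe, Finset.card_compl, Finset.card_compl,
      hcardt, Fintype.card_fin, ← hV]
    omega
  obtain e := Fintype.equivOfCardEq hcc
  refine ⟨fun v => if h : v ∈ s then g v else (e ⟨v, by simp [h]⟩ : Fin N), ?_, ?_, ?_⟩
  · intro a b hab
    by_cases ha : a ∈ s <;> by_cases hb : b ∈ s <;> simp only [ha, hb, dif_pos, dif_neg,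
      not_false_iff] at hab
    · exact hginj ha hb hab
    · exfalso
      have h1 : g a ∈ t := by
        rw [ht]; exact Finset.mem_insert_of_mem (Finset.mem_image_of_mem g ha)
      have h2 : (e ⟨b, by simp [hb]⟩ : Fin N) ∈ tᶜ := (e ⟨b, by simp [hb]⟩).2
      rw [hab] at h1
      exact (Finset.mem_compl.mp h2) h1
    · exfalso
      have h1 : g b ∈ t := by
        rw [ht]; exact Finset.mem_insert_of_mem (Finset.mem_image_of_mem g hb)
      have h2 : (e ⟨a, by simp [ha]⟩ : Fin N) ∈ tᶜ := (e ⟨a, by simp [ha]⟩).2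
      rw [← hab] at h1
      exact (Finset.mem_compl.mp h2) h1
    · have := Subtype.ext_iff.mpr hab
      have h2 := e.injective (Subtype.ext (by exact hab))
      exact Subtype.ext_iff.mp h2
  · intro v hv; simp [hv]
  · rintro ⟨v, hv⟩
    by_cases h : v ∈ s <;> simp only [h, dif_pos, dif_neg, not_false_iff] at hv
    · exact hw v h hv
    · have h2 : (e ⟨v, by simp [h]⟩ : Fin N) ∈ tᶜ := (e ⟨v, by simp [h]⟩).2
      rw [hv] at h2
      exact (Finset.mem_compl.mp h2) (by rw [ht]; exact Finset.mem_insert_self w _)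

end Ext

section ExtList

variable {V : Type} [Fintype V] [DecidableEq V] {N : ℕ}

lemma nodup_map_inj {α β : Type*} (f : α → β) (L : List α) (h : (L.map f).Nodup) :
    ∀ a ∈ L, ∀ b ∈ L, f a = f b → a = b := by
  induction L with
  | nil => intro a ha; simp at ha
  | cons x xs ih =>
    rw [List.map_cons, List.nodup_cons] at h
    intro a ha b hb hab
    rcases List.mem_cons.mp ha with rfl | ha' <;> rcases List.mem_cons.mp hb with rfl | hb'
    · rfl
    · exact absurd (hab ▸ List.mem_map_of_mem (f := f) hb') h.1
    · exact absurd (hab ▸ List.mem_map_of_mem (f := f) ha') h.1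
    · exact ih h.2 a ha' b hb' hab

/-- lookup in an association list -/
def glook : List (V × Fin N) → Fin N → V → Fin N
  | [], d, _ => d
  | pr :: rest, d, v => if pr.1 = v then pr.2 else glook rest d v

lemma glook_eq (L : List (V × Fin N)) (d : Fin N)
    (h : ∀ a ∈ L, ∀ b ∈ L, a.1 = b.1 → a = b) :
    ∀ pr ∈ L, glook L d pr.1 = pr.2 := by
  induction L with
  | nil => intro pr hpr; simp at hpr
  | cons x xs ih =>
    intro pr hpr
    rcases List.mem_cons.mp hpr with rfl | hpr'
    · simp [glook]
    · by_cases hx : x.1 = pr.1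
      · have := h x (List.mem_cons_self) pr hpr hx
        simp [glook, this]
      · simp only [glook, hx, if_false]
        exact ih (fun a ha b hb => h a (List.mem_cons_of_mem x ha) b (List.mem_cons_of_mem x hb))
          pr hpr'

lemma exists_ext_list (hV : Fintype.card V + 1 = N) (L : List (V × Fin N))
    (h1 : (L.map Prod.fst).Nodup) (h2 : (L.map Prod.snd).Nodup)
    (w : Fin N) (hw : ∀ pr ∈ L, pr.2 ≠ w) :
    ∃ f : V → Fin N, Function.Injective f ∧ (∀ pr ∈ L, f pr.1 = pr.2) ∧ w ∉ Set.range f := by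
  classical
  have hfst := nodup_map_inj Prod.fst L h1
  have hsnd := nodup_map_inj Prod.snd L h2
  set s : Finset V := (L.map Prod.fst).toFinset with hs
  set g : V → Fin N := glook L w with hg
  have hmem : ∀ v ∈ s, ∃ pr ∈ L, pr.1 = v := by
    intro v hv
    rw [hs, List.mem_toFinset, List.mem_map] at hv
    obtain ⟨pr, hpr, h⟩ := hv
    exact ⟨pr, hpr, h⟩
  have hgval : ∀ pr ∈ L, g pr.1 = pr.2 := glook_eq L w hfst
  have hinj : Set.InjOn g s := by
    intro v hv v' hv' hvv
    obtain ⟨pr, hpr, rfl⟩ := hmem v hv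
    obtain ⟨pr', hpr', rfl⟩ := hmem v' hv'
    rw [hgval pr hpr, hgval pr' hpr'] at hvv
    rw [hsnd pr hpr pr' hpr' hvv]
  have hww : ∀ v ∈ s, g v ≠ w := by
    intro v hv
    obtain ⟨pr, hpr, rfl⟩ := hmem v hv
    rw [hgval pr hpr]
    exact hw pr hpr
  obtain ⟨f, hf, hfs, hwf⟩ := exists_ext hV s g hinj w hww
  refine ⟨f, hf, ?_, hwf⟩
  intro pr hpr
  rw [hfs pr.1 (by rw [hs, List.mem_toFinset]; exact List.mem_map_of_mem (f := Prod.fst) hpr)]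
  exact hgval pr hpr

end ExtList

section ExtN
variable {V : Type} [Fintype V] [DecidableEq V] {N : ℕ}


lemma ext1 (hV : Fintype.card V + 1 = N) (v1 : V) (t1 w : Fin N) (h : t1 ≠ w) :
    ∃ f : V → Fin N, Function.Injective f ∧ f v1 = t1 ∧ w ∉ Set.range f := by
  obtain ⟨f, hf, hp, hr⟩ := exists_ext_list hV [(v1,t1)] (by simp) (by simp) w
    (by intro pr hpr; simp at hpr; rw [hpr]; exact h)
  exact ⟨f, hf, hp (v1,t1) (by simp), hr⟩

lemma ext2 (hV : Fintype.card V + 1 = N) (v1 v2 : V) (t1 t2 w : Fin N)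
    (hv : v1 ≠ v2) (ht : t1 ≠ t2) (h1 : t1 ≠ w) (h2 : t2 ≠ w) :
    ∃ f : V → Fin N, Function.Injective f ∧ f v1 = t1 ∧ f v2 = t2 ∧ w ∉ Set.range f := by
  obtain ⟨f, hf, hp, hr⟩ := exists_ext_list hV [(v1,t1),(v2,t2)] (by simp [hv])
    (by simp [ht]) w
    (by intro pr hpr; simp at hpr; rcases hpr with h|h <;> rw [h] <;> assumption)
  exact ⟨f, hf, hp (v1,t1) (by simp), hp (v2,t2) (by simp), hr⟩

lemma ext3 (hV : Fintype.card V + 1 = N) (v1 v2 v3 : V) (t1 t2 t3 w : Fin N)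
    (hv1 : v1 ≠ v2) (hv2 : v1 ≠ v3) (hv3 : v2 ≠ v3)
    (ht1 : t1 ≠ t2) (ht2 : t1 ≠ t3) (ht3 : t2 ≠ t3)
    (h1 : t1 ≠ w) (h2 : t2 ≠ w) (h3 : t3 ≠ w) :
    ∃ f : V → Fin N, Function.Injective f ∧ f v1 = t1 ∧ f v2 = t2 ∧ f v3 = t3 ∧
      w ∉ Set.range f := by
  obtain ⟨f, hf, hp, hr⟩ := exists_ext_list hV [(v1,t1),(v2,t2),(v3,t3)]
    (by simp [hv1, hv2, hv3]) (by simp [ht1, ht2, ht3]) w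
    (by intro pr hpr; simp at hpr; rcases hpr with h|h|h <;> rw [h] <;> assumption)
  exact ⟨f, hf, hp (v1,t1) (by simp), hp (v2,t2) (by simp), hp (v3,t3) (by simp), hr⟩

lemma ext4 (hV : Fintype.card V + 1 = N) (v1 v2 v3 v4 : V) (t1 t2 t3 t4 w : Fin N)
    (hv1 : v1 ≠ v2) (hv2 : v1 ≠ v3) (hv3 : v1 ≠ v4) (hv4 : v2 ≠ v3) (hv5 : v2 ≠ v4)
    (hv6 : v3 ≠ v4)
    (ht1 : t1 ≠ t2) (ht2 : t1 ≠ t3) (ht3 : t1 ≠ t4) (ht4 : t2 ≠ t3) (ht5 : t2 ≠ t4)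
    (ht6 : t3 ≠ t4)
    (h1 : t1 ≠ w) (h2 : t2 ≠ w) (h3 : t3 ≠ w) (h4 : t4 ≠ w) :
    ∃ f : V → Fin N, Function.Injective f ∧ f v1 = t1 ∧ f v2 = t2 ∧ f v3 = t3 ∧
      f v4 = t4 ∧ w ∉ Set.range f := by
  obtain ⟨f, hf, hp, hr⟩ := exists_ext_list hV [(v1,t1),(v2,t2),(v3,t3),(v4,t4)]
    (by simp [hv1, hv2, hv3, hv4, hv5, hv6]) (by simp [ht1, ht2, ht3, ht4, ht5, ht6]) w
    (by intro pr hpr; simp at hpr; rcases hpr with h|h|h|h <;> rw [h] <;> assumption)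
  exact ⟨f, hf, hp (v1,t1) (by simp), hp (v2,t2) (by simp), hp (v3,t3) (by simp), hp (v4,t4) (by simp), hr⟩

lemma ext6 (hV : Fintype.card V + 1 = N) (v1 v2 v3 v4 v5 v6 : V)
    (t1 t2 t3 t4 t5 t6 w : Fin N)
    (hv1 : v1 ≠ v2) (hv2 : v1 ≠ v3) (hv3 : v1 ≠ v4) (hv4 : v1 ≠ v5) (hv5 : v1 ≠ v6)
    (hv6 : v2 ≠ v3) (hv7 : v2 ≠ v4) (hv8 : v2 ≠ v5) (hv9 : v2 ≠ v6)
    (hv10 : v3 ≠ v4) (hv11 : v3 ≠ v5) (hv12 : v3 ≠ v6)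
    (hv13 : v4 ≠ v5) (hv14 : v4 ≠ v6) (hv15 : v5 ≠ v6)
    (ht1 : t1 ≠ t2) (ht2 : t1 ≠ t3) (ht3 : t1 ≠ t4) (ht4 : t1 ≠ t5) (ht5 : t1 ≠ t6)
    (ht6 : t2 ≠ t3) (ht7 : t2 ≠ t4) (ht8 : t2 ≠ t5) (ht9 : t2 ≠ t6)
    (ht10 : t3 ≠ t4) (ht11 : t3 ≠ t5) (ht12 : t3 ≠ t6)
    (ht13 : t4 ≠ t5) (ht14 : t4 ≠ t6) (ht15 : t5 ≠ t6)
    (h1 : t1 ≠ w) (h2 : t2 ≠ w) (h3 : t3 ≠ w) (h4 : t4 ≠ w) (h5 : t5 ≠ w) (h6 : t6 ≠ w) :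
    ∃ f : V → Fin N, Function.Injective f ∧ f v1 = t1 ∧ f v2 = t2 ∧ f v3 = t3 ∧
      f v4 = t4 ∧ f v5 = t5 ∧ f v6 = t6 ∧ w ∉ Set.range f := by
  obtain ⟨f, hf, hp, hr⟩ := exists_ext_list hV
    [(v1,t1),(v2,t2),(v3,t3),(v4,t4),(v5,t5),(v6,t6)]
    (by simp [hv1, hv2, hv3, hv4, hv5, hv6, hv7, hv8, hv9, hv10, hv11, hv12, hv13, hv14,
      hv15])
    (by simp [ht1, ht2, ht3, ht4, ht5, ht6, ht7, ht8, ht9, ht10, ht11, ht12, ht13, ht14,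
      ht15]) w
    (by intro pr hpr; simp at hpr; rcases hpr with h|h|h|h|h|h <;> rw [h] <;> assumption)
  exact ⟨f, hf, hp (v1,t1) (by simp), hp (v2,t2) (by simp), hp (v3,t3) (by simp),
    hp (v4,t4) (by simp), hp (v5,t5) (by simp), hp (v6,t6) (by simp), hr⟩

end ExtN

section Sums
variable {V : Type} [Fintype V] [DecidableEq V] {N : ℕ}
variable (F : SimpleGraph V) [DecidableRel F.Adj]


lemma Sm_structured (χ : Sym2 (Fin N) → ZMod 3) (f : V → Fin N) (α : ZMod 3)
    (gf : V → ZMod 3)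
    (H : ∀ ⦃u v : V⦄, F.Adj u v → χ (s(f u, f v)) = α + gf u + gf v) :
    Sm F χ f = F.edgeFinset.card • α + ∑ v, F.degree v • gf v := by
  classical
  have h1 : ∀ e ∈ F.edgeFinset, χ (e.map f) = α + ∑ v ∈ univ.filter (· ∈ e), gf v := by
    intro e he
    induction e with
    | _ a b =>
      rw [SimpleGraph.mem_edgeFinset, SimpleGraph.mem_edgeSet] at he
      have hab : a ≠ b := he.ne
      have hset : univ.filter (· ∈ s(a,b)) = {a, b} := by
        ext z
        simp [Sym2.mem_iff]
      rw [Sym2.map_pair_eq, H he, hset, Finset.sum_pair hab, add_assoc]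
  rw [Sm, Finset.sum_congr rfl h1, Finset.sum_add_distrib, Finset.sum_const]
  congr 1
  have h2 : ∀ e ∈ F.edgeFinset, (∑ v ∈ univ.filter (· ∈ e), gf v)
      = ∑ v ∈ univ, if v ∈ e then gf v else 0 := by
    intro e _
    rw [Finset.sum_filter]
  rw [Finset.sum_congr rfl h2, Finset.sum_comm]
  apply Finset.sum_congr rfl
  intro v _
  rw [← Finset.sum_filter]
  rw [Finset.sum_const]
  congr 1
  rw [← SimpleGraph.card_incidenceFinset_eq_degree]
  congr 1
  rw [SimpleGraph.incidenceFinset_eq_filter]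

lemma sum_comp_inj (hV : Fintype.card V + 1 = N) (f : V → Fin N)
    (hf : Function.Injective f) (w : Fin N) (hw : w ∉ Set.range f) (h : Fin N → ZMod 3) :
    ∑ v, h (f v) = (∑ z, h z) - h w := by
  have himg : Finset.univ.image f = Finset.univ.erase w := by
    apply Finset.eq_of_subset_of_card_le
    · intro z hz
      rw [Finset.mem_image] at hz
      obtain ⟨v, _, rfl⟩ := hz
      exact Finset.mem_erase.mpr ⟨fun h => hw ⟨v, h⟩, Finset.mem_univ _⟩
    · rw [Finset.card_erase_of_mem (Finset.mem_univ w),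
        Finset.card_image_of_injective _ hf]
      simp [hV]
  have := Finset.sum_image (f := h) (g := f)
    (fun a _ b _ hab => hf hab) (s := Finset.univ)
  rw [← this, himg]
  rw [← Finset.add_sum_erase _ h (Finset.mem_univ w)]
  ring

lemma card_smul_zero {k : ℕ} (hk : 3 ∣ k) (x : ZMod 3) : k • x = 0 := by
  rw [nsmul_eq_mul]
  have : (k : ZMod 3) = 0 := by
    obtain ⟨m, rfl⟩ := hk
    push_cast
    rw [show ((3:ZMod 3)) = 0 from rfl, zero_mul]
  rw [this, zero_mul]

lemma zmod3_cases (d : ℕ) :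
    ((d : ZMod 3) = 0 ∧ d % 3 = 0) ∨ ((d : ZMod 3) = 1 ∧ d % 3 = 1)
      ∨ ((d : ZMod 3) = 2 ∧ d % 3 = 2) := by
  have hc : ((d % 3 : ℕ) : ZMod 3) = (d : ZMod 3) := ZMod.natCast_mod d 3
  have h : d % 3 < 3 := Nat.mod_lt _ (by norm_num)
  interval_cases h' : d % 3
  · left; exact ⟨by rw [← hc]; norm_num, rfl⟩
  · right; left; exact ⟨by rw [← hc]; norm_num, rfl⟩
  · right; right; exact ⟨by rw [← hc]; norm_num, rfl⟩

lemma zmod3_ge2 {d : ℕ} (h : (d : ZMod 3) = 2) : 2 ≤ d := by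
  rcases zmod3_cases d with ⟨h1, h2⟩ | ⟨h1, h2⟩ | ⟨h1, h2⟩ <;> first
    | (rw [h1] at h; exact absurd h (by decide))
    | omega

lemma zmod3_one_ge4 {d : ℕ} (h : (d : ZMod 3) = 1) (h2 : 2 ≤ d) : 4 ≤ d := by
  rcases zmod3_cases d with ⟨h1, hm⟩ | ⟨h1, hm⟩ | ⟨h1, hm⟩ <;> first
    | (rw [h1] at h; exact absurd h (by decide))
    | omega

lemma zmod3_one_ge1 {d : ℕ} (h : (d : ZMod 3) = 1) : 1 ≤ d := by
  rcases zmod3_cases d with ⟨h1, hm⟩ | ⟨h1, hm⟩ | ⟨h1, hm⟩ <;> first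
    | (rw [h1] at h; exact absurd h (by decide))
    | omega

lemma zmod3_mod_one {d : ℕ} (h : (d : ZMod 3) = 1) : d % 3 = 1 := by
  rcases zmod3_cases d with ⟨h1, hm⟩ | ⟨h1, hm⟩ | ⟨h1, hm⟩ <;> first
    | (rw [h1] at h; exact absurd h (by decide))
    | omega

end Sums

section Leaf
variable {V : Type} [Fintype V] [DecidableEq V]
variable (F : SimpleGraph V) [DecidableRel F.Adj]

lemma acyclic_no_triangle (hF : F.IsAcyclic) {a b c : V}
    (h1 : F.Adj a b) (h2 : F.Adj b c) (h3 : F.Adj a c) : False := by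
  have hab : a ≠ b := h1.ne
  have hbc : b ≠ c := h2.ne
  have hac : a ≠ c := h3.ne
  have hP2 : (SimpleGraph.Walk.cons h1 (SimpleGraph.Walk.cons h2 SimpleGraph.Walk.nil)).IsPath := by
    simp [SimpleGraph.Walk.cons_isPath_iff, hab, hac, hbc]
  have := hF.path_unique (SimpleGraph.Path.singleton h3) ⟨_, hP2⟩
  have hlen := congrArg (fun P : F.Path a c => P.1.length) this
  simp [SimpleGraph.Path.singleton] at hlen

lemma adj_start_unique (hF : F.IsAcyclic) :
    ∀ {v u : V} (r : F.Walk v u), r.IsPath → ∀ {z z' : V}, F.Adj v z → F.Adj v z' →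
      z ∈ r.support → z' ∈ r.support → z = z' := by
  have key : ∀ {v u : V} (r : F.Walk v u), r.IsPath → ∀ {y : V} (h : F.Adj v y)
      (q : F.Walk y u), r = SimpleGraph.Walk.cons h q → ∀ {z : V}, F.Adj v z →
      z ∈ r.support → z = y := by
    intro v u r hr y h q hq z hz hzs
    subst hq
    rw [SimpleGraph.Walk.support_cons, List.mem_cons] at hzs
    rcases hzs with rfl | hzs
    · exact absurd rfl hz.ne'
    · rw [SimpleGraph.Walk.cons_isPath_iff] at hr
      have htu : (q.takeUntil z hzs).IsPath := hr.1.takeUntil hzs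
      have hvn : v ∉ (q.takeUntil z hzs).support :=
        fun hv => hr.2 (q.support_takeUntil_subset hzs hv)
      have hP2 : (SimpleGraph.Walk.cons h (q.takeUntil z hzs)).IsPath :=
        (SimpleGraph.Walk.cons_isPath_iff _ _).2 ⟨htu, hvn⟩
      have := hF.path_unique (SimpleGraph.Path.singleton hz) ⟨_, hP2⟩
      have hlen := congrArg (fun P : F.Path v z => P.1.length) this
      simp only [SimpleGraph.Path.singleton, SimpleGraph.Walk.length_cons,
        SimpleGraph.Walk.length_nil] at hlen
      have : (q.takeUntil z hzs).length = 0 := by omega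
      exact (SimpleGraph.Walk.eq_of_length_eq_zero this).symm
  intro v u r hr z z' hz hz' hzs hzs'
  cases r with
  | nil =>
    rw [SimpleGraph.Walk.support_nil, List.mem_singleton] at hzs
    exact absurd hzs hz.ne'
  | cons h q =>
    rw [key _ hr h q rfl hz hzs, key _ hr h q rfl hz' hzs']

/-- every nonempty vertex subset of an acyclic graph has a vertex with at most one
neighbour inside the set -/
lemma exists_induced_leaf (hF : F.IsAcyclic) (s : Finset V) (hs : s.Nonempty) :
    ∃ v ∈ s, (s.filter (F.Adj v)).card ≤ 1 := by
  classical
  set P : ℕ → Prop := fun t => ∃ (u v : V) (p : F.Walk u v), p.IsPath ∧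
    (∀ x ∈ p.support, x ∈ s) ∧ p.length = t with hP
  obtain ⟨v₀, hv₀⟩ := hs
  have hP0 : P 0 := ⟨v₀, v₀, SimpleGraph.Walk.nil, by simp, by simpa using hv₀, rfl⟩
  set t₀ := Nat.findGreatest P (Fintype.card V) with ht₀def
  have ht₀ : P t₀ := Nat.findGreatest_spec (Nat.zero_le _) hP0
  obtain ⟨u, v, p, hpath, hsupp, hlen⟩ := ht₀
  set r := p.reverse with hr
  have hrpath : r.IsPath := (SimpleGraph.Walk.isPath_reverse_iff p).2 hpath
  have hrsupp : ∀ x ∈ r.support, x ∈ s := by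
    intro x hx
    apply hsupp
    rwa [SimpleGraph.Walk.support_reverse, List.mem_reverse] at hx
  refine ⟨v, hrsupp v r.start_mem_support, ?_⟩
  rw [Finset.card_le_one]
  intro z hz z' hz'
  rw [Finset.mem_filter] at hz hz'
  have hmem : ∀ z'', z'' ∈ s → F.Adj v z'' → z'' ∈ r.support := by
    intro z'' hzs hadj
    by_contra hns
    have hext : (SimpleGraph.Walk.cons hadj.symm r).IsPath :=
      (SimpleGraph.Walk.cons_isPath_iff _ _).2 ⟨hrpath, hns⟩
    have hlext : (SimpleGraph.Walk.cons hadj.symm r).length = t₀ + 1 := by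
      rw [SimpleGraph.Walk.length_cons, SimpleGraph.Walk.length_reverse, hlen]
    have hbound : t₀ + 1 ≤ Fintype.card V := by
      have := hext.length_lt
      omega
    refine Nat.findGreatest_is_greatest (P := P) (by omega) hbound ?_
    exact
      ⟨_, _, _, hext, by
        intro x hx
        rw [SimpleGraph.Walk.support_cons, List.mem_cons] at hx
        rcases hx with rfl | hx
        · exact hzs
        · exact hrsupp x hx, hlext⟩
  exact adj_start_unique F hF r hrpath hz.2 hz'.2 (hmem z hz.1 hz.2) (hmem z' hz'.1 hz'.2)

end Leaf

section Greedy
variable {V : Type} [Fintype V] [DecidableEq V] {N : ℕ}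
variable (F : SimpleGraph V) [DecidableRel F.Adj]


lemma greedy_avoid (hV : Fintype.card V + 1 = N) (hF : F.IsAcyclic)
    (χ : Sym2 (Fin N) → ZMod 3) (μ : ZMod 3)
    (hmatch : ∀ x : Fin N, (univ.filter (fun z => z ≠ x ∧ χ s(x,z) ≠ μ)).card ≤ 1) :
    ∃ f : V → Fin N, Function.Injective f ∧ ∀ u v : V, F.Adj u v → χ s(f u, f v) = μ := by
  classical
  suffices H : ∀ (k : ℕ) (s : Finset V), s.card = k → ∃ h : V → Fin N, Set.InjOn h ↑s ∧
      ∀ u ∈ s, ∀ v ∈ s, F.Adj u v → χ s(h u, h v) = μ by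
    obtain ⟨h, hinj, hedge⟩ := H (Finset.univ.card) Finset.univ rfl
    refine ⟨h, ?_, fun u v huv => hedge u (mem_univ u) v (mem_univ v) huv⟩
    intro a b hab
    exact hinj (by simp) (by simp) hab
  intro k
  induction k with
  | zero =>
    intro s hs
    rw [Finset.card_eq_zero] at hs
    subst hs
    exact ⟨fun _ => ⟨0, by omega⟩, by simp, by simp⟩
  | succ m ih =>
    intro s hs
    have hsne : s.Nonempty := Finset.card_pos.mp (by omega)
    obtain ⟨v, hvs, hvdeg⟩ := exists_induced_leaf F hF s hsne
    set s' := s.erase v with hs'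
    have hcard' : s'.card = m := by
      rw [hs', Finset.card_erase_of_mem hvs, hs]
      omega
    obtain ⟨h', hinj', hedge'⟩ := ih s' hcard'
    set bad : Finset (Fin N) := (s'.image h') ∪
      ((s'.filter (F.Adj v)).biUnion
        (fun u => univ.filter (fun z => z ≠ h' u ∧ χ s(h' u, z) ≠ μ))) with hbad
    have hbadcard : bad.card < N := by
      have h1 : (s'.image h').card ≤ m := hcard' ▸ Finset.card_image_le
      have h2 : ((s'.filter (F.Adj v)).biUnion
          (fun u => univ.filter (fun z => z ≠ h' u ∧ χ s(h' u, z) ≠ μ))).card ≤ 1 := by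
        calc _ ≤ ∑ u ∈ s'.filter (F.Adj v),
            (univ.filter (fun z => z ≠ h' u ∧ χ s(h' u, z) ≠ μ)).card :=
              Finset.card_biUnion_le
        _ ≤ ∑ u ∈ s'.filter (F.Adj v), 1 := Finset.sum_le_sum (fun u _ => hmatch (h' u))
        _ = (s'.filter (F.Adj v)).card := by rw [Finset.sum_const, smul_eq_mul, mul_one]
        _ ≤ (s.filter (F.Adj v)).card := Finset.card_le_card
            (Finset.filter_subset_filter _ (Finset.erase_subset v s))
        _ ≤ 1 := hvdeg
      have h3 : s.card ≤ Fintype.card V := s.card_le_univ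
      calc bad.card ≤ (s'.image h').card + _ := Finset.card_union_le _ _
        _ < N := by omega
    have hbadne : (badᶜ).Nonempty := by
      rw [← Finset.card_pos, Finset.card_compl]
      have hcu : Fintype.card (Fin N) = N := Fintype.card_fin N
      omega
    obtain ⟨y, hy⟩ := hbadne
    rw [Finset.mem_compl] at hy
    have hynotim : ∀ u ∈ s', h' u ≠ y := by
      intro u hu h
      exact hy (Finset.mem_union_left _ (h ▸ Finset.mem_image_of_mem h' hu))
    have hypart : ∀ u ∈ s', F.Adj v u → χ s(h' u, y) = μ := by
      intro u hu hadj
      by_contra hne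
      apply hy
      apply Finset.mem_union_right
      apply Finset.mem_biUnion.mpr
      refine ⟨u, Finset.mem_filter.mpr ⟨hu, hadj⟩,
        Finset.mem_filter.mpr ⟨mem_univ _, ?_, hne⟩⟩
      intro h
      exact (hynotim u hu) h.symm
    refine ⟨Function.update h' v y, ?_, ?_⟩
    · intro a ha b hb hab
      simp only [Finset.coe_erase, Finset.mem_coe] at ha hb
      by_cases hav : a = v <;> by_cases hbv : b = v
      · rw [hav, hbv]
      · have hbs' : b ∈ s' := by
          rw [hs']; exact Finset.mem_erase.mpr ⟨hbv, hb⟩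
        rw [hav, Function.update_self, Function.update_of_ne hbv] at hab
        exact absurd hab.symm (hynotim b hbs')
      · have has' : a ∈ s' := by
          rw [hs']; exact Finset.mem_erase.mpr ⟨hav, ha⟩
        rw [hbv, Function.update_self, Function.update_of_ne hav] at hab
        exact absurd hab (hynotim a has')
      · have has' : a ∈ s' := Finset.mem_erase.mpr ⟨hav, ha⟩
        have hbs' : b ∈ s' := Finset.mem_erase.mpr ⟨hbv, hb⟩
        rw [Function.update_of_ne hav, Function.update_of_ne hbv] at hab
        exact hinj' (by simpa using has') (by simpa using hbs') hab
    · intro a ha b hb hadj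
      by_cases hav : a = v <;> by_cases hbv : b = v
      · subst hav; subst hbv; exact absurd hadj (F.irrefl)
      · subst hav
        have hbs' : b ∈ s' := Finset.mem_erase.mpr ⟨hbv, hb⟩
        rw [Function.update_self, Function.update_of_ne hbv]
        rw [show s(y, h' b) = s(h' b, y) from Sym2.eq_swap]
        exact hypart b hbs' hadj
      · subst hbv
        have has' : a ∈ s' := Finset.mem_erase.mpr ⟨hav, ha⟩
        rw [Function.update_self, Function.update_of_ne hav]
        exact hypart a has' hadj.symm
      · have has' : a ∈ s' := Finset.mem_erase.mpr ⟨hav, ha⟩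
        have hbs' : b ∈ s' := Finset.mem_erase.mpr ⟨hbv, hb⟩
        rw [Function.update_of_ne hav, Function.update_of_ne hbv]
        exact hedge' a has' b hbs' hadj

end Greedy

section Case2
variable {V : Type} [Fintype V] [DecidableEq V] {N : ℕ}
variable (F : SimpleGraph V) [DecidableRel F.Adj]






lemma caseII (hV : Fintype.card V + 1 = N) (hN : 8 ≤ N) (hF : F.IsAcyclic)
    (hdiv : 3 ∣ F.edgeFinset.card) (χ : Sym2 (Fin N) → ZMod 3)
    (hA : ∀ f : V → Fin N, Function.Injective f → Sm F χ f ≠ 0)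
    (HII : ∀ x : Fin N, ∃ c, (univ.filter (fun z => z ≠ x ∧ χ s(x,z) ≠ c)).card ≤ 1) :
    False := by
  classical
  -- the majority colour at each vertex
  set μ : Fin N → ZMod 3 := fun x => (HII x).choose with hμ
  have hdev : ∀ x, (univ.filter (fun z => z ≠ x ∧ χ s(x,z) ≠ μ x)).card ≤ 1 :=
    fun x => (HII x).choose_spec
  -- at most one deviant
  have K : ∀ x z z' : Fin N, z ≠ x → z' ≠ x → z ≠ z' → χ s(x,z) ≠ μ x →
      χ s(x,z') ≠ μ x → False := by
    intro x z z' hzx hz'x hzz' h1 h2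
    have hz : z ∈ univ.filter (fun z => z ≠ x ∧ χ s(x,z) ≠ μ x) :=
      Finset.mem_filter.mpr ⟨mem_univ _, hzx, h1⟩
    have hz' : z' ∈ univ.filter (fun z => z ≠ x ∧ χ s(x,z) ≠ μ x) :=
      Finset.mem_filter.mpr ⟨mem_univ _, hz'x, h2⟩
    have h2c := Finset.one_lt_card.mpr ⟨z, hz, z', hz', hzz'⟩
    have hd := hdev x
    omega
  -- final blow: a uniform structure lemma
  have FINISH : ∀ (mustar : ZMod 3) (f : V → Fin N), Function.Injective f →
      (∀ ⦃u v : V⦄, F.Adj u v → χ s(f u, f v) = mustar) → False := by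
    intro mustar f hf H
    apply hA f hf
    rw [Sm_structured F χ f mustar (fun _ => 0) (by intro u v huv; rw [H huv]; ring)]
    rw [card_smul_zero hdiv]
    simp
  by_cases hconst : ∀ x y : Fin N, μ x = μ y
  · -- constant majority: greedy placement avoiding the matching of deviant edges
    have h0 : (0 : ℕ) < N := by omega
    set μ₀ := μ ⟨0, h0⟩ with hμ₀
    obtain ⟨f, hf, hedge⟩ := greedy_avoid F hV hF χ μ₀ (by
      intro x
      rw [show μ₀ = μ x from hconst _ x]
      exact hdev x)
    exact FINISH μ₀ f hf (fun u v huv => hedge u v huv)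
  · push_neg at hconst
    obtain ⟨q1, q2, hq12⟩ := hconst
    have hq : q1 ≠ q2 := fun h => hq12 (by rw [h])
    -- generic vertices
    set G : Finset (Fin N) := univ \ (insert q1 (insert q2
      ((univ.filter (fun z => z ≠ q1 ∧ χ s(q1,z) ≠ μ q1)) ∪
       (univ.filter (fun z => z ≠ q2 ∧ χ s(q2,z) ≠ μ q2))))) with hG
    have hGcard : N - 4 ≤ G.card := by
      have h1 : (insert q1 (insert q2
        ((univ.filter (fun z => z ≠ q1 ∧ χ s(q1,z) ≠ μ q1)) ∪
         (univ.filter (fun z => z ≠ q2 ∧ χ s(q2,z) ≠ μ q2))))).card ≤ 4 := by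
        calc _ ≤ (insert q2
            ((univ.filter (fun z => z ≠ q1 ∧ χ s(q1,z) ≠ μ q1)) ∪
             (univ.filter (fun z => z ≠ q2 ∧ χ s(q2,z) ≠ μ q2)))).card + 1 :=
          Finset.card_insert_le _ _
        _ ≤ ((univ.filter (fun z => z ≠ q1 ∧ χ s(q1,z) ≠ μ q1)) ∪
             (univ.filter (fun z => z ≠ q2 ∧ χ s(q2,z) ≠ μ q2))).card + 1 + 1 := by
          have := Finset.card_insert_le q2
            ((univ.filter (fun z => z ≠ q1 ∧ χ s(q1,z) ≠ μ q1)) ∪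
             (univ.filter (fun z => z ≠ q2 ∧ χ s(q2,z) ≠ μ q2)))
          omega
        _ ≤ 4 := by
          have := Finset.card_union_le
            (univ.filter (fun z => z ≠ q1 ∧ χ s(q1,z) ≠ μ q1))
            (univ.filter (fun z => z ≠ q2 ∧ χ s(q2,z) ≠ μ q2))
          have h1 := hdev q1
          have h2 := hdev q2
          omega
      have h2 := Finset.card_sdiff_add_card_eq_card (Finset.subset_univ
        (insert q1 (insert q2
        ((univ.filter (fun z => z ≠ q1 ∧ χ s(q1,z) ≠ μ q1)) ∪
         (univ.filter (fun z => z ≠ q2 ∧ χ s(q2,z) ≠ μ q2))))))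
      have h3 : (univ : Finset (Fin N)).card = N := by simp
      rw [← hG] at h2
      omega
    -- membership facts for G
    have hGmem : ∀ x ∈ G, x ≠ q1 ∧ x ≠ q2 ∧ χ s(q1,x) = μ q1 ∧ χ s(q2,x) = μ q2 := by
      intro x hx
      rw [hG, Finset.mem_sdiff, Finset.mem_insert, Finset.mem_insert, Finset.mem_union,
        Finset.mem_filter, Finset.mem_filter] at hx
      push_neg at hx
      obtain ⟨-, h1, h2, h3, h4⟩ := hx
      exact ⟨h1, h2, by
        by_contra hc
        exact hc (h3 (mem_univ x) h1), by
        by_contra hc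
        exact hc (h4 (mem_univ x) h2)⟩
    have hsym : ∀ a b : Fin N, χ s(a,b) = χ s(b,a) := fun a b => by rw [Sym2.eq_swap]
    have hμG : ∀ x ∈ G, μ x = μ q1 ∨ μ x = μ q2 := by
      intro x hx
      obtain ⟨hx1, hx2, hc1, hc2⟩ := hGmem x hx
      by_contra hc
      push_neg at hc
      refine K x q1 q2 (Ne.symm hx1) (Ne.symm hx2) hq ?_ ?_
      · rw [hsym x q1, hc1]; exact fun h => hc.1 h.symm
      · rw [hsym x q2, hc2]; exact fun h => hc.2 h.symm
    have hdevof : ∀ x ∈ G, ∃ qq, (qq = q1 ∨ qq = q2) ∧ qq ≠ x ∧ μ qq ≠ μ x ∧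
        χ s(x,qq) ≠ μ x ∧ ∀ z, z ≠ x → z ≠ qq → χ s(x,z) = μ x := by
      intro x hx
      obtain ⟨hx1, hx2, hc1, hc2⟩ := hGmem x hx
      rcases hμG x hx with h | h
      · refine ⟨q2, Or.inr rfl, Ne.symm hx2, ?_, ?_, ?_⟩
        · rw [h]; exact fun hh => hq12 hh.symm
        · rw [hsym x q2, hc2, h]; exact fun hh => hq12 hh.symm
        · intro z hz hzq2
          by_contra hcc
          refine K x z q2 hz (Ne.symm hx2) hzq2 hcc ?_
          rw [hsym x q2, hc2, h]; exact fun hh => hq12 hh.symm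
      · refine ⟨q1, Or.inl rfl, Ne.symm hx1, ?_, ?_, ?_⟩
        · rw [h]; exact hq12
        · rw [hsym x q1, hc1, h]; exact hq12
        · intro z hz hzq1
          by_contra hcc
          refine K x z q1 hz (Ne.symm hx1) hzq1 hcc ?_
          rw [hsym x q1, hc1, h]; exact hq12
    have hμGG : ∀ x ∈ G, ∀ y ∈ G, x ≠ y → μ x = μ y := by
      intro x hx y hy hxy
      obtain ⟨qx, hqx0, hqx1, hqx2, hqx3, hqx4⟩ := hdevof x hx
      obtain ⟨qy, hqy0, hqy1, hqy2, hqy3, hqy4⟩ := hdevof y hy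
      have hyqx : y ≠ qx := by
        obtain ⟨h1, h2, -, -⟩ := hGmem y hy
        rcases hqx0 with rfl | rfl
        · exact h1
        · exact h2
      have hxqy : x ≠ qy := by
        obtain ⟨h1, h2, -, -⟩ := hGmem x hx
        rcases hqy0 with rfl | rfl
        · exact h1
        · exact h2
      have e1 : χ s(x,y) = μ x := hqx4 y (Ne.symm hxy) hyqx
      have e2 : χ s(y,x) = μ y := hqy4 x hxy hxqy
      rw [← e1, hsym x y, e2]
    have hG2 : 1 < G.card := by omega
    obtain ⟨x1, hx1G, x2, hx2G, hx12⟩ := Finset.one_lt_card.mp hG2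
    set mustar := μ x1 with hmustar
    have hμGstar : ∀ x ∈ G, μ x = mustar := by
      intro x hx
      by_cases h : x = x1
      · rw [h]
      · exact hμGG x hx x1 hx1G h
    -- identify v* and q#
    have hvq : ∃ vstar qsharp : Fin N, ((vstar = q1 ∧ qsharp = q2) ∨ (vstar = q2 ∧ qsharp = q1))
        ∧ μ vstar ≠ mustar ∧ μ qsharp = mustar := by
      rcases hμG x1 hx1G with h | h
      · exact ⟨q2, q1, Or.inr ⟨rfl, rfl⟩, by rw [hmustar, h]; exact fun hh => hq12 hh.symm,
          by rw [hmustar, h]⟩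
      · exact ⟨q1, q2, Or.inl ⟨rfl, rfl⟩, by rw [hmustar, h]; exact hq12,
          by rw [hmustar, h]⟩
    obtain ⟨vstar, qsharp, hvq0, hvne, hqs⟩ := hvq
    have hxdev : ∀ x ∈ G, ∀ z, z ≠ x → z ≠ vstar → χ s(x,z) = mustar := by
      intro x hx z hz hzv
      obtain ⟨qq, hqq0, hqq1, hqq2, hqq3, hqq4⟩ := hdevof x hx
      have hqqv : qq = vstar := by
        rw [hμGstar x hx] at hqq2
        rcases hqq0 with rfl | rfl <;> rcases hvq0 with ⟨h1, h2⟩ | ⟨h1, h2⟩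
        · exact h1.symm
        · exact absurd (h2 ▸ hqs) hqq2
        · exact absurd (h2 ▸ hqs) hqq2
        · exact h1.symm
      rw [← hμGstar x hx]
      exact hqq4 z hz (hqqv ▸ hzv)
    have CH : ∀ u, u ≠ vstar → μ u = mustar := by
      intro u hu
      by_cases hG' : u ∈ G
      · exact hμGstar u hG'
      by_cases hq1' : u = q1
      · rcases hvq0 with ⟨h1, h2⟩ | ⟨h1, h2⟩
        · exact absurd (hq1'.trans h1.symm) hu
        · rw [hq1', ← h2]; exact hqs
      by_cases hq2' : u = q2
      · rcases hvq0 with ⟨h1, h2⟩ | ⟨h1, h2⟩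
        · rw [hq2', ← h2]; exact hqs
        · exact absurd (hq2'.trans h1.symm) hu
      -- generic u: two witnesses in G
      have hw1 : χ s(x1, u) = mustar := hxdev x1 hx1G u (fun h => hG' (h ▸ hx1G)) hu
      have hw2 : χ s(x2, u) = mustar := hxdev x2 hx2G u (fun h => hG' (h ▸ hx2G)) hu
      by_contra hc
      refine K u x1 x2 (fun h => hG' (h ▸ hx1G)) (fun h => hG' (h ▸ hx2G)) hx12 ?_ ?_
      · rw [hsym u x1, hw1]; exact fun h => hc h.symm
      · rw [hsym u x2, hw2]; exact fun h => hc h.symm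
    have MAIN : ∀ u w : Fin N, u ≠ vstar → w ≠ vstar → u ≠ w → χ s(u,w) = mustar := by
      intro u w hu hw huw
      by_contra hcc
      have hcu : χ s(u,w) ≠ μ u := by rw [CH u hu]; exact hcc
      have hcw : χ s(w,u) ≠ μ w := by rw [CH w hw, hsym w u]; exact hcc
      have h1 : χ s(u, vstar) = μ u := by
        by_contra hc2
        exact K u w vstar (Ne.symm huw) (Ne.symm hu) hw hcu hc2
      have h2 : χ s(w, vstar) = μ w := by
        by_contra hc2
        exact K w u vstar huw (Ne.symm hw) hu hcw hc2
      refine K vstar u w hu hw huw ?_ ?_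
      · rw [hsym vstar u, h1, CH u hu]; exact fun h => hvne h.symm
      · rw [hsym vstar w, h2, CH w hw]; exact fun h => hvne h.symm
    obtain ⟨f, hf, -, hwr⟩ := exists_ext hV ∅ (fun _ => vstar) (by simp) vstar
      (by simp)
    exact FINISH mustar f hf (fun u v huv =>
      MAIN (f u) (f v) (fun h => hwr ⟨u, h⟩) (fun h => hwr ⟨v, h⟩) (fun h => huv.ne (hf h)))

end Case2

section Case1
variable {V : Type} [Fintype V] [DecidableEq V] {N : ℕ}
variable (F : SimpleGraph V) [DecidableRel F.Adj]



















lemma caseI (hV : Fintype.card V + 1 = N) (hN : 8 ≤ N) (hF : F.IsAcyclic)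
    (hdiv : 3 ∣ F.edgeFinset.card)
    (hnotstar : ¬ IsStar F) (hnotreg : ¬ ∀ v, F.degree v % 3 = 1)
    (p l1 l2 : V) (hl12 : l1 ≠ l2) (hd1 : F.degree l1 = 1) (hd2 : F.degree l2 = 1)
    (ha1 : F.Adj p l1) (ha2 : F.Adj p l2)
    (χ : Sym2 (Fin N) → ZMod 3)
    (hA : ∀ f : V → Fin N, Function.Injective f → Sm F χ f ≠ 0)
    (C1 : ∀ q' x y z : Fin N, x ≠ q' → y ≠ q' → z ≠ q' → x ≠ y → x ≠ z → y ≠ z →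
      χ s(q',x) = χ s(q',y) ∨ χ s(q',x) = χ s(q',z) ∨ χ s(q',y) = χ s(q',z))
    (q : Fin N) (a b : ZMod 3) (hab : a ≠ b) (A B : Finset (Fin N))
    (hmemA : ∀ z, z ∈ A ↔ z ≠ q ∧ χ s(q,z) = a)
    (hmemB : ∀ z, z ∈ B ↔ z ≠ q ∧ χ s(q,z) = b)
    (hcover : ∀ z : Fin N, z = q ∨ z ∈ A ∨ z ∈ B)
    (hAcard : 4 ≤ A.card) (hBcard : 2 ≤ B.card) : False := by
  classical
  have hsym : ∀ x y : Fin N, χ s(x,y) = χ s(y,x) := fun x y => by rw [Sym2.eq_swap]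
  have hpl1 : p ≠ l1 := ha1.ne
  have hpl2 : p ≠ l2 := ha2.ne
  have hNsing : ∀ l : V, F.degree l = 1 → F.Adj p l → F.neighborFinset l = {p} := by
    intro l hdeg hadj
    have hp : p ∈ F.neighborFinset l := (SimpleGraph.mem_neighborFinset F l p).mpr hadj.symm
    have hcard : (F.neighborFinset l).card = 1 := hdeg
    obtain ⟨x, hx⟩ := Finset.card_eq_one.mp hcard
    rw [hx] at hp ⊢
    rw [Finset.mem_singleton] at hp
    rw [hp]
  have hNl1 : F.neighborFinset l1 = {p} := hNsing l1 hd1 ha1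
  have hNl2 : F.neighborFinset l2 = {p} := hNsing l2 hd2 ha2
  have hnadj12 : ¬ F.Adj l1 l2 := by
    intro h
    have : l2 ∈ F.neighborFinset l1 := (SimpleGraph.mem_neighborFinset F l1 l2).mpr h
    rw [hNl1, Finset.mem_singleton] at this
    exact hpl2 this.symm
  have hdab : a - b ≠ 0 := sub_ne_zero_of_ne hab
  -- disjointness etc.
  have hAB : ∀ z, z ∈ A → z ∈ B → False := by
    intro z hzA hzB
    exact hab (((hmemA z).1 hzA).2 ▸ ((hmemB z).1 hzB).2 ▸ rfl)
  have hAq : ∀ z ∈ A, z ≠ q := fun z hz => ((hmemA z).1 hz).1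
  have hBq : ∀ z ∈ B, z ≠ q := fun z hz => ((hmemB z).1 hz).1
  have hAa : ∀ z ∈ A, χ s(q,z) = a := fun z hz => ((hmemA z).1 hz).2
  have hBb : ∀ z ∈ B, χ s(q,z) = b := fun z hz => ((hmemB z).1 hz).2
  -- a vertex not adjacent to l1/l2 is distinct from them whenever it has a neighbour ≠ p
  have hnbrl : ∀ u v : V, F.Adj v u → v ≠ p → u ≠ l1 ∧ u ≠ l2 := by
    intro u v hadj hvp
    constructor
    · intro hul
      have : v ∈ F.neighborFinset l1 := (SimpleGraph.mem_neighborFinset F l1 v).mpr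
        (by rw [← hul]; exact hadj.symm)
      rw [hNl1, Finset.mem_singleton] at this
      exact hvp this
    · intro hul
      have : v ∈ F.neighborFinset l2 := (SimpleGraph.mem_neighborFinset F l2 v).mpr
        (by rw [← hul]; exact hadj.symm)
      rw [hNl2, Finset.mem_singleton] at this
      exact hvp this
  -- the orbit inequalities
  have orbit : ∀ f : V → Fin N, Function.Injective f → ∀ w, w ∉ Set.range f →
      Sm F χ f ≠ 0 ∧ Sm F χ f + (χ s(w, f p) - χ s(f l1, f p)) ≠ 0 ∧
        Sm F χ f + (χ s(w, f p) - χ s(f l2, f p)) ≠ 0 := by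
    intro f hf w hw
    refine ⟨hA f hf, ?_, ?_⟩
    · have h1 := hA (Function.update f l1 w) (update_inj hf hw l1)
      rw [Sm_update F χ l1 w, hNl1, Finset.sum_singleton] at h1
      exact h1
    · have h1 := hA (Function.update f l2 w) (update_inj hf hw l2)
      rw [Sm_update F χ l2 w, hNl2, Finset.sum_singleton] at h1
      exact h1
  -- key Z/3 facts
  have zkey : ∀ T D aa bb : ZMod 3, aa ≠ bb → T ≠ 0 → T + (aa - bb) ≠ 0 → T + D ≠ 0 →
      T + D + (bb - aa) ≠ 0 → D = aa - bb := by decide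
  -- E-AB relocation identity
  have EAB : ∀ v : V, v ≠ p → v ≠ l1 → v ≠ l2 → ∀ x1 ∈ A, ∀ x2 ∈ A, ∀ y1 ∈ B, ∀ y2 ∈ B,
      x1 ≠ x2 → y1 ≠ y2 → ∀ f : V → Fin N, Function.Injective f → f p = q → f l1 = x1 →
      f l2 = y1 → f v = y2 → x2 ∉ Set.range f →
      ∑ u ∈ F.neighborFinset v, (χ s(x2, f u) - χ s(y2, f u)) = a - b := by
    intro v hvp hvl1 hvl2 x1 hx1 x2 hx2 y1 hy1 y2 hy2 hx12 hy12 f hf hfp hfl1 hfl2 hfv hx2r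
    obtain ⟨O1, -, O3⟩ := orbit f hf x2 hx2r
    rw [hfp, hfl2, hsym x2 q, hsym y1 q, hAa x2 hx2, hBb y1 hy1] at O3
    set f' := Function.update f v x2 with hf'
    have hf'inj : Function.Injective f' := update_inj hf hx2r v
    have hy2r : y2 ∉ Set.range f' := by
      rintro ⟨u, hu⟩
      by_cases huv : u = v
      · rw [huv, hf', Function.update_self] at hu
        exact hAB x2 hx2 (hu ▸ hy2)
      · rw [hf', Function.update_of_ne huv] at hu
        exact huv (hf (hu.trans hfv.symm))
    have hf'p : f' p = q := by rw [hf', Function.update_of_ne (Ne.symm hvp)]; exact hfp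
    have hf'l1 : f' l1 = x1 := by rw [hf', Function.update_of_ne (Ne.symm hvl1)]; exact hfl1
    have hf'l2 : f' l2 = y1 := by rw [hf', Function.update_of_ne (Ne.symm hvl2)]; exact hfl2
    obtain ⟨O1', O2', -⟩ := orbit f' hf'inj y2 hy2r
    rw [hf'p, hf'l1, hsym y2 q, hsym x1 q, hBb y2 hy2, hAa x1 hx1] at O2'
    have hupd : Sm F χ f' = Sm F χ f
        + ∑ u ∈ F.neighborFinset v, (χ s(x2, f u) - χ s(f v, f u)) := Sm_update F χ v x2
    rw [hfv] at hupd
    rw [hupd] at O1' O2'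
    exact zkey (Sm F χ f) _ a b hab O1 O3 O1' O2'
  -- pick helper
  have pick : ∀ (S T : Finset (Fin N)), T.card < S.card → ∃ x ∈ S, x ∉ T := by
    intro S T h
    have : (S \ T).Nonempty := by
      rw [← Finset.card_pos]
      have := Finset.le_card_sdiff T S
      omega
    obtain ⟨x, hx⟩ := this
    rw [Finset.mem_sdiff] at hx
    exact ⟨x, hx.1, hx.2⟩

  -- two elements of each class
  obtain ⟨xA0, hxA0, xA1, hxA1, hxA01⟩ := Finset.one_lt_card.mp
    (show 1 < A.card by omega)
  obtain ⟨yB0, hyB0, yB1, hyB1, hyB01⟩ := Finset.one_lt_card.mp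
    (show 1 < B.card by omega)
  -- the isolated-vertex kill
  have isokill : ∀ vi : V, vi ≠ p → vi ≠ l1 → vi ≠ l2 → F.neighborFinset vi = ∅ →
      False := by
    intro vi h1 h2 h3 hNe
    obtain ⟨f, hf, hfp, hfl1, hfl2, hfvi, hwr⟩ := ext4 hV p l1 l2 vi q xA0 yB0 yB1 xA1
      hpl1 hpl2 (Ne.symm h1) hl12 (Ne.symm h2) (Ne.symm h3)
      (Ne.symm (hAq xA0 hxA0)) (Ne.symm (hBq yB0 hyB0)) (Ne.symm (hBq yB1 hyB1))
      (fun h => hAB xA0 hxA0 (h ▸ hyB0)) (fun h => hAB xA0 hxA0 (h ▸ hyB1)) hyB01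
      (fun h => (hAq xA1 hxA1) h.symm) hxA01
      (fun h => hAB xA1 hxA1 (h ▸ hyB0)) (fun h => hAB xA1 hxA1 (h ▸ hyB1))
    have := EAB vi h1 h2 h3 xA0 hxA0 xA1 hxA1 yB0 hyB0 yB1 hyB1 hxA01 hyB01 f hf hfp
      hfl1 hfl2 hfvi hwr
    rw [hNe, Finset.sum_empty] at this
    exact hdab this.symm
  -- the swap trio
  have V0 : ∃ v0 u0 z' : V, (v0 ≠ p ∧ v0 ≠ l1 ∧ v0 ≠ l2) ∧ (F.Adj v0 u0 ∧ u0 ≠ p) ∧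
      (¬F.Adj v0 z' ∧ z' ≠ p ∧ z' ≠ l1 ∧ z' ≠ l2 ∧ z' ≠ v0 ∧ z' ≠ u0) := by
    by_cases hstar : ∀ v : V, v ≠ p → v ≠ l1 → v ≠ l2 → ∀ u, F.Adj v u → u = p
    · exfalso
      rw [IsStar] at hnotstar
      push_neg at hnotstar
      by_cases hall : ∀ v, v ≠ p → F.Adj p v
      · obtain ⟨u, w', hadj, hup, hwp⟩ := hnotstar p hall
        have hul1 : u ≠ l1 := by
          intro h
          have : w' ∈ F.neighborFinset l1 :=
            (SimpleGraph.mem_neighborFinset F l1 w').mpr (h ▸ hadj)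
          rw [hNl1, Finset.mem_singleton] at this
          exact hwp this
        have hul2 : u ≠ l2 := by
          intro h
          have : w' ∈ F.neighborFinset l2 :=
            (SimpleGraph.mem_neighborFinset F l2 w').mpr (h ▸ hadj)
          rw [hNl2, Finset.mem_singleton] at this
          exact hwp this
        exact hwp (hstar u hup hul1 hul2 w' hadj)
      · push_neg at hall
        obtain ⟨z, hz1, hz2⟩ := hall
        have hz3 : z ≠ l1 := fun h => hz2 (h ▸ ha1)
        have hz4 : z ≠ l2 := fun h => hz2 (h ▸ ha2)
        apply isokill z hz1 hz3 hz4
        rw [Finset.eq_empty_iff_forall_notMem]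
        intro u hu
        rw [SimpleGraph.mem_neighborFinset] at hu
        have hup := hstar z hz1 hz3 hz4 u hu
        rw [hup] at hu
        exact hz2 hu.symm
    · push_neg at hstar
      obtain ⟨v1, hv1p, hv1l1, hv1l2, u1, hadj1, hu1p⟩ := hstar
      by_cases hz1 : ∃ z', ¬F.Adj v1 z' ∧ z' ≠ p ∧ z' ≠ l1 ∧ z' ≠ l2 ∧ z' ≠ v1 ∧ z' ≠ u1
      · obtain ⟨z', hz'⟩ := hz1
        exact ⟨v1, u1, z', ⟨hv1p, hv1l1, hv1l2⟩, ⟨hadj1, hu1p⟩, hz'⟩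
      · push_neg at hz1
        have hu1l := hnbrl u1 v1 hadj1 hv1p
        by_cases hz2 : ∃ z', ¬F.Adj u1 z' ∧ z' ≠ p ∧ z' ≠ l1 ∧ z' ≠ l2 ∧ z' ≠ u1 ∧
            z' ≠ v1
        · obtain ⟨z', hz'⟩ := hz2
          exact ⟨u1, v1, z', ⟨hu1p, hu1l.1, hu1l.2⟩, ⟨hadj1.symm, hv1p⟩, hz'⟩
        · push_neg at hz2
          exfalso
          have hzex : ∃ z : V, z ≠ p ∧ z ≠ l1 ∧ z ≠ l2 ∧ z ≠ v1 ∧ z ≠ u1 := by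
            have hne : ((univ : Finset V) \ {p,l1,l2,v1,u1}).Nonempty := by
              rw [← Finset.card_pos]
              have c1 := Finset.card_insert_le p ({l1,l2,v1,u1} : Finset V)
              have c2 := Finset.card_insert_le l1 ({l2,v1,u1} : Finset V)
              have c3 := Finset.card_insert_le l2 ({v1,u1} : Finset V)
              have c4 := Finset.card_insert_le v1 ({u1} : Finset V)
              have c5 : ({u1} : Finset V).card = 1 := Finset.card_singleton u1
              have c6 := Finset.card_sdiff_add_card_eq_card
                (Finset.subset_univ ({p,l1,l2,v1,u1} : Finset V))
              have c7 : (univ : Finset V).card = Fintype.card V := Finset.card_univ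
              omega
            obtain ⟨z, hz⟩ := hne
            rw [Finset.mem_sdiff] at hz
            have := hz.2
            simp only [Finset.mem_insert, Finset.mem_singleton, not_or] at this
            exact ⟨z, this.1, this.2.1, this.2.2.1, this.2.2.2.1, this.2.2.2.2⟩
          obtain ⟨z, hzp, hzl1, hzl2, hzv1, hzu1⟩ := hzex
          have ha : F.Adj v1 z := by
            by_contra hna
            exact hzu1 (hz1 z hna hzp hzl1 hzl2 hzv1)
          have hb : F.Adj u1 z := by
            by_contra hnb
            exact hzv1 (hz2 z hnb hzp hzl1 hzl2 hzu1)
          exact acyclic_no_triangle F hF hadj1 hb ha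
  obtain ⟨v0, u0, z', ⟨hv0p, hv0l1, hv0l2⟩, ⟨hadj0, hu0p⟩,
    hnadj0, hz'p, hz'l1, hz'l2, hz'v0, hz'u0⟩ := V0
  have hu0l := hnbrl u0 v0 hadj0 hv0p
  have hu0v0 : u0 ≠ v0 := hadj0.ne'
  -- constancy of the A-B differences (swap argument)
  have KABcore : ∀ x2 ∈ A, ∀ y2 ∈ B, ∀ y1s ∈ B, y1s ≠ y2 → ∀ s s' : Fin N,
      s ≠ q → s ≠ x2 → s ≠ y2 → s ≠ y1s → s' ≠ q → s' ≠ x2 → s' ≠ y2 → s' ≠ y1s →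
      χ s(x2,s) - χ s(y2,s) = χ s(x2,s') - χ s(y2,s') := by
    intro x2 hx2 y2 hy2 y1s hy1s hy12 s s' hsq hsx2 hsy2 hsy1 hs'q hs'x2 hs'y2 hs'y1
    by_cases hss' : s = s'
    · rw [hss']
    obtain ⟨x1, hx1, hx1n⟩ := pick A {x2,s,s'} (by
      have c1 := Finset.card_insert_le x2 ({s,s'} : Finset (Fin N))
      have c2 := Finset.card_insert_le s ({s'} : Finset (Fin N))
      have c3 : ({s'} : Finset (Fin N)).card = 1 := Finset.card_singleton s'
      omega)
    simp only [Finset.mem_insert, Finset.mem_singleton, not_or] at hx1n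
    obtain ⟨hx1x2, hx1s, hx1s'⟩ := hx1n
    obtain ⟨f, hf, hfp, hfl1, hfl2, hfv0, hfu0, hfz', hwr⟩ := ext6 hV p l1 l2 v0 u0 z'
      q x1 y1s y2 s s' x2
      hpl1 hpl2 (Ne.symm hv0p) (Ne.symm hu0p) (Ne.symm hz'p)
      hl12 (Ne.symm hv0l1) (Ne.symm hu0l.1) (Ne.symm hz'l1)
      (Ne.symm hv0l2) (Ne.symm hu0l.2) (Ne.symm hz'l2)
      (Ne.symm hu0v0) (Ne.symm hz'v0) (Ne.symm hz'u0)
      (Ne.symm (hAq x1 hx1)) (Ne.symm (hBq y1s hy1s)) (Ne.symm (hBq y2 hy2))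
      (Ne.symm hsq) (Ne.symm hs'q)
      (fun h => hAB x1 hx1 (h ▸ hy1s)) (fun h => hAB x1 hx1 (h ▸ hy2))
      hx1s hx1s'
      hy12 (fun h => hsy1 h.symm) (fun h => hs'y1 h.symm)
      (fun h => hsy2 h.symm) (fun h => hs'y2 h.symm) hss'
      (Ne.symm (hAq x2 hx2)) hx1x2 (fun h => hAB x2 hx2 (h ▸ hy1s))
      (fun h => hAB x2 hx2 (h ▸ hy2)) hsx2 hs'x2
    have h1 := EAB v0 hv0p hv0l1 hv0l2 x1 hx1 x2 hx2 y1s hy1s y2 hy2 hx1x2 hy12 f hf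
      hfp hfl1 hfl2 hfv0 hwr
    set g : V → Fin N := f ∘ (Equiv.swap u0 z') with hg
    have hginj : Function.Injective g := hf.comp (Equiv.swap u0 z').injective
    have hrange : Set.range g = Set.range f := by
      rw [hg]
      rw [Set.range_comp, Equiv.range_eq_univ, Set.image_univ]
    have swapne : ∀ x : V, x ≠ u0 → x ≠ z' → g x = f x := by
      intro x h1' h2'
      rw [hg]
      show f ((Equiv.swap u0 z') x) = f x
      rw [Equiv.swap_apply_of_ne_of_ne h1' h2']
    have hgp : g p = q := by rw [swapne p (Ne.symm hu0p) (Ne.symm hz'p)]; exact hfp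
    have hgl1 : g l1 = x1 := by
      rw [swapne l1 (Ne.symm hu0l.1) (Ne.symm hz'l1)]; exact hfl1
    have hgl2 : g l2 = y1s := by
      rw [swapne l2 (Ne.symm hu0l.2) (Ne.symm hz'l2)]; exact hfl2
    have hgv0 : g v0 = y2 := by
      rw [swapne v0 (Ne.symm hu0v0) (Ne.symm hz'v0)]; exact hfv0
    have h2 := EAB v0 hv0p hv0l1 hv0l2 x1 hx1 x2 hx2 y1s hy1s y2 hy2 hx1x2 hy12 g hginj
      hgp hgl1 hgl2 hgv0 (by rw [hrange]; exact hwr)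
    have hu0mem : u0 ∈ F.neighborFinset v0 :=
      (SimpleGraph.mem_neighborFinset F v0 u0).mpr hadj0
    rw [← Finset.add_sum_erase _ _ hu0mem] at h1 h2
    have hsame : ∑ u ∈ (F.neighborFinset v0).erase u0, (χ s(x2, g u) - χ s(y2, g u))
        = ∑ u ∈ (F.neighborFinset v0).erase u0, (χ s(x2, f u) - χ s(y2, f u)) := by
      apply Finset.sum_congr rfl
      intro u hu
      have hu1 : u ≠ u0 := (Finset.mem_erase.mp hu).1
      have hu2 : u ≠ z' := by
        intro h
        apply hnadj0
        rw [← h]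
        exact (SimpleGraph.mem_neighborFinset F v0 u).mp (Finset.mem_erase.mp hu).2
      rw [swapne u hu1 hu2]
    rw [hfu0] at h1
    rw [hsame] at h2
    have hgu0 : g u0 = s' := by
      rw [hg]
      show f ((Equiv.swap u0 z') u0) = s'
      rw [Equiv.swap_apply_left]
      exact hfz'
    rw [hgu0] at h2
    exact add_right_cancel (h1.trans h2.symm)
  -- the degree relations
  have MV1 : ∀ v : V, v ≠ p → v ≠ l1 → v ≠ l2 → ¬F.Adj p v → ∀ x2 ∈ A, ∀ y2 ∈ B,
      ∀ y1s ∈ B, y1s ≠ y2 → ∀ s : Fin N, s ≠ q → s ≠ x2 → s ≠ y2 → s ≠ y1s →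
      (F.degree v : ZMod 3) * (χ s(x2,s) - χ s(y2,s)) = a - b := by
    intro v hvp hvl1 hvl2 hvnadj x2 hx2 y2 hy2 y1s hy1s hy12 s hsq hsx2 hsy2 hsy1
    obtain ⟨x1, hx1, hx1n⟩ := pick A {x2} (by
      have c3 : ({x2} : Finset (Fin N)).card = 1 := Finset.card_singleton x2
      omega)
    rw [Finset.mem_singleton] at hx1n
    obtain ⟨f, hf, hfp, hfl1, hfl2, hfv, hwr⟩ := ext4 hV p l1 l2 v q x1 y1s y2 x2
      hpl1 hpl2 (Ne.symm hvp) hl12 (Ne.symm hvl1) (Ne.symm hvl2)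
      (Ne.symm (hAq x1 hx1)) (Ne.symm (hBq y1s hy1s)) (Ne.symm (hBq y2 hy2))
      (fun h => hAB x1 hx1 (h ▸ hy1s)) (fun h => hAB x1 hx1 (h ▸ hy2)) hy12
      (Ne.symm (hAq x2 hx2)) hx1n (fun h => hAB x2 hx2 (h ▸ hy1s))
      (fun h => hAB x2 hx2 (h ▸ hy2))
    have h1 := EAB v hvp hvl1 hvl2 x1 hx1 x2 hx2 y1s hy1s y2 hy2 hx1n hy12 f hf hfp
      hfl1 hfl2 hfv hwr
    have hterm : ∀ u ∈ F.neighborFinset v,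
        χ s(x2, f u) - χ s(y2, f u) = χ s(x2,s) - χ s(y2,s) := by
      intro u hu
      have hadj : F.Adj v u := (SimpleGraph.mem_neighborFinset F v u).mp hu
      have hup : u ≠ p := by
        intro h
        exact hvnadj (h ▸ hadj).symm
      have hul := hnbrl u v hadj hvp
      have huv : u ≠ v := hadj.ne'
      exact KABcore x2 hx2 y2 hy2 y1s hy1s hy12 (f u) s
        (fun h => hup (hf (h.trans hfp.symm)))
        (fun h => hwr ⟨u, h⟩)
        (fun h => huv (hf (h.trans hfv.symm)))
        (fun h => hul.2 (hf (h.trans hfl2.symm)))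
        hsq hsx2 hsy2 hsy1
    rw [Finset.sum_congr rfl hterm, Finset.sum_const, nsmul_eq_mul] at h1
    exact h1
  have MV2 : ∀ v : V, v ≠ l1 → v ≠ l2 → F.Adj p v → ∀ x2 ∈ A, ∀ y2 ∈ B,
      ∀ y1s ∈ B, y1s ≠ y2 → ∀ s : Fin N, s ≠ q → s ≠ x2 → s ≠ y2 → s ≠ y1s →
      ((F.degree v - 1 : ℕ) : ZMod 3) * (χ s(x2,s) - χ s(y2,s)) = 0 := by
    intro v hvl1 hvl2 hvadj x2 hx2 y2 hy2 y1s hy1s hy12 s hsq hsx2 hsy2 hsy1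
    have hvp : v ≠ p := hvadj.ne'
    obtain ⟨x1, hx1, hx1n⟩ := pick A {x2} (by
      have c3 : ({x2} : Finset (Fin N)).card = 1 := Finset.card_singleton x2
      omega)
    rw [Finset.mem_singleton] at hx1n
    obtain ⟨f, hf, hfp, hfl1, hfl2, hfv, hwr⟩ := ext4 hV p l1 l2 v q x1 y1s y2 x2
      hpl1 hpl2 (Ne.symm hvp) hl12 (Ne.symm hvl1) (Ne.symm hvl2)
      (Ne.symm (hAq x1 hx1)) (Ne.symm (hBq y1s hy1s)) (Ne.symm (hBq y2 hy2))
      (fun h => hAB x1 hx1 (h ▸ hy1s)) (fun h => hAB x1 hx1 (h ▸ hy2)) hy12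
      (Ne.symm (hAq x2 hx2)) hx1n (fun h => hAB x2 hx2 (h ▸ hy1s))
      (fun h => hAB x2 hx2 (h ▸ hy2))
    have h1 := EAB v hvp hvl1 hvl2 x1 hx1 x2 hx2 y1s hy1s y2 hy2 hx1n hy12 f hf hfp
      hfl1 hfl2 hfv hwr
    have hpmem : p ∈ F.neighborFinset v :=
      (SimpleGraph.mem_neighborFinset F v p).mpr hvadj.symm
    rw [← Finset.add_sum_erase _ _ hpmem, hfp] at h1
    have hfirst : χ s(x2, q) - χ s(y2, q) = a - b := by
      rw [hsym x2 q, hsym y2 q, hAa x2 hx2, hBb y2 hy2]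
    have hterm : ∀ u ∈ (F.neighborFinset v).erase p,
        χ s(x2, f u) - χ s(y2, f u) = χ s(x2,s) - χ s(y2,s) := by
      intro u hu
      have hup : u ≠ p := (Finset.mem_erase.mp hu).1
      have hadj : F.Adj v u :=
        (SimpleGraph.mem_neighborFinset F v u).mp (Finset.mem_erase.mp hu).2
      have hul := hnbrl u v hadj hvp
      have huv : u ≠ v := hadj.ne'
      exact KABcore x2 hx2 y2 hy2 y1s hy1s hy12 (f u) s
        (fun h => hup (hf (h.trans hfp.symm)))
        (fun h => hwr ⟨u, h⟩)
        (fun h => huv (hf (h.trans hfv.symm)))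
        (fun h => hul.2 (hf (h.trans hfl2.symm)))
        hsq hsx2 hsy2 hsy1
    rw [hfirst, Finset.sum_congr rfl hterm, Finset.sum_const, nsmul_eq_mul] at h1
    have hcard : ((F.neighborFinset v).erase p).card = F.degree v - 1 := by
      rw [Finset.card_erase_of_mem hpmem]
      rfl
    rw [hcard] at h1
    rwa [add_eq_left] at h1

  -- a non-neighbour of p exists
  have vnp : ∃ v : V, v ≠ p ∧ v ≠ l1 ∧ v ≠ l2 ∧ ¬F.Adj p v := by
    rw [IsStar] at hnotstar
    push_neg at hnotstar
    by_cases hall : ∀ v, v ≠ p → F.Adj p v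
    · obtain ⟨u, w', hadj, hup, hwp⟩ := hnotstar p hall
      exact absurd (acyclic_no_triangle F hF (hall u hup) hadj (hall w' hwp)) not_false
    · push_neg at hall
      obtain ⟨v, hv1, hv2⟩ := hall
      exact ⟨v, hv1, (fun h => hv2 (h ▸ ha1)), (fun h => hv2 (h ▸ ha2)), hv2⟩
  obtain ⟨vs, hvsp, hvsl1, hvsl2, hvsnadj⟩ := vnp
  -- fixed tuple for evaluations
  obtain ⟨sA0, hsA0, hsA0x⟩ := pick A {xA0} (by
    have c3 : ({xA0} : Finset (Fin N)).card = 1 := Finset.card_singleton xA0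
    omega)
  rw [Finset.mem_singleton] at hsA0x
  have hsA0q : sA0 ≠ q := hAq _ hsA0
  have hsA0y0 : sA0 ≠ yB0 := fun h => hAB sA0 hsA0 (h ▸ hyB0)
  have hsA0y1 : sA0 ≠ yB1 := fun h => hAB sA0 hsA0 (h ▸ hyB1)
  set δ0 := χ s(xA0, sA0) - χ s(yB0, sA0) with hδ0def
  set m := (F.degree vs : ZMod 3) with hmdef
  have hmδ : m * δ0 = a - b := MV1 vs hvsp hvsl1 hvsl2 hvsnadj xA0 hxA0 yB0 hyB0 yB1
    hyB1 (Ne.symm hyB01) sA0 hsA0q hsA0x hsA0y0 hsA0y1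
  have hδ0ne : δ0 ≠ 0 := fun h => hdab (by rw [h, mul_zero] at hmδ; exact hmδ.symm)
  have hmne : m ≠ 0 := fun h => hdab (by rw [h, zero_mul] at hmδ; exact hmδ.symm)
  have hdegnbr : ∀ v : V, v ≠ l1 → v ≠ l2 → F.Adj p v → (F.degree v : ZMod 3) = 1 := by
    intro v h1 h2 h3
    have hmv := MV2 v h1 h2 h3 xA0 hxA0 yB0 hyB0 yB1 hyB1 (Ne.symm hyB01) sA0 hsA0q
      hsA0x hsA0y0 hsA0y1
    rw [← hδ0def] at hmv
    have hz : ((F.degree v - 1 : ℕ) : ZMod 3) = 0 := by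
      rcases mul_eq_zero.mp hmv with h | h
      · exact h
      · exact absurd h hδ0ne
    have hd1' : 1 ≤ F.degree v := by
      have hm' : p ∈ F.neighborFinset v := (SimpleGraph.mem_neighborFinset F v p).mpr h3.symm
      have := Finset.card_pos.mpr ⟨p, hm'⟩
      rw [SimpleGraph.card_neighborFinset_eq_degree] at this
      exact this
    have heq : F.degree v = (F.degree v - 1) + 1 := by omega
    rw [heq, Nat.cast_add, Nat.cast_one, hz, zero_add]
  have hdegnon : ∀ v : V, v ≠ p → v ≠ l1 → v ≠ l2 → ¬F.Adj p v →
      (F.degree v : ZMod 3) = m := by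
    intro v h1 h2 h3 h4
    have hv := MV1 v h1 h2 h3 h4 xA0 hxA0 yB0 hyB0 yB1 hyB1 (Ne.symm hyB01) sA0 hsA0q
      hsA0x hsA0y0 hsA0y1
    rw [← hδ0def] at hv
    exact mul_right_cancel₀ hδ0ne (hv.trans hmδ.symm)
  by_cases hm2 : m = 2
  · -- structural kill of the m = 2 case
    set W : Finset V := univ.filter (fun v => v ≠ p ∧ v ≠ l1 ∧ v ≠ l2 ∧ ¬F.Adj p v)
      with hW
    set X2 : Finset V := univ.filter
      (fun v => F.Adj p v ∧ v ≠ l1 ∧ v ≠ l2 ∧ 2 ≤ F.degree v) with hX2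
    have hWdeg : ∀ v ∈ W, 2 ≤ F.degree v := by
      intro v hv
      rw [hW, Finset.mem_filter] at hv
      obtain ⟨-, h1, h2, h3, h4⟩ := hv
      exact zmod3_ge2 (by rw [hdegnon v h1 h2 h3 h4]; exact hm2)
    have hsub : ∀ v, v ∈ W ∪ X2 → ∀ u, F.Adj v u → u ≠ p → u ∈ W ∪ X2 := by
      intro v hv u hadj hup
      have hvp' : v ≠ p := by
        rcases Finset.mem_union.mp hv with h | h
        · exact (Finset.mem_filter.mp h).2.1
        · exact ((Finset.mem_filter.mp h).2.1).ne'
      have hul := hnbrl u v hadj hvp'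
      by_cases hpu : F.Adj p u
      · apply Finset.mem_union_right
        rw [hX2, Finset.mem_filter]
        refine ⟨mem_univ u, hpu, hul.1, hul.2, ?_⟩
        have h1 : p ∈ F.neighborFinset u :=
          (SimpleGraph.mem_neighborFinset F u p).mpr hpu.symm
        have h2 : v ∈ F.neighborFinset u :=
          (SimpleGraph.mem_neighborFinset F u v).mpr hadj.symm
        have h3 := Finset.one_lt_card.mpr ⟨p, h1, v, h2, (fun h => hvp' h.symm)⟩
        rw [SimpleGraph.card_neighborFinset_eq_degree] at h3
        exact h3
      · apply Finset.mem_union_left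
        rw [hW, Finset.mem_filter]
        exact ⟨mem_univ u, hup, hul.1, hul.2, hpu⟩
    have hvsW : vs ∈ W := by
      rw [hW, Finset.mem_filter]
      exact ⟨mem_univ vs, hvsp, hvsl1, hvsl2, hvsnadj⟩
    obtain ⟨v', hv'mem, hv'leaf⟩ := exists_induced_leaf F hF (W ∪ X2) ⟨vs,
      Finset.mem_union_left _ hvsW⟩
    -- produce two neighbours of v' inside W ∪ X2
    have htwo : ∃ u1 u2 : V, F.Adj v' u1 ∧ F.Adj v' u2 ∧ u1 ≠ u2 ∧ u1 ≠ p ∧ u2 ≠ p := by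
      rcases Finset.mem_union.mp hv'mem with h | h
      · -- v' ∈ W : degree ≥ 2, no neighbour is p
        have hdeg := hWdeg v' h
        rw [hW, Finset.mem_filter] at h
        rw [← SimpleGraph.card_neighborFinset_eq_degree] at hdeg
        obtain ⟨u1, hu1, u2, hu2, h12⟩ := Finset.one_lt_card.mp
          (show 1 < (F.neighborFinset v').card by omega)
        rw [SimpleGraph.mem_neighborFinset] at hu1 hu2
        have hnp : ∀ u, F.Adj v' u → u ≠ p := by
          intro u hu hh
          exact h.2.2.2.2 (hh ▸ hu).symm
        exact ⟨u1, u2, hu1, hu2, h12, hnp u1 hu1, hnp u2 hu2⟩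
      · -- v' ∈ X2 : degree ≥ 4
        rw [hX2, Finset.mem_filter] at h
        have hdeg4 : 4 ≤ F.degree v' :=
          zmod3_one_ge4 (hdegnbr v' h.2.2.1 h.2.2.2.1 h.2.1) h.2.2.2.2
        have hcard : 2 ≤ ((F.neighborFinset v').erase p).card := by
          have hpm : p ∈ F.neighborFinset v' :=
            (SimpleGraph.mem_neighborFinset F v' p).mpr h.2.1.symm
          have hle := Finset.card_erase_of_mem hpm
          rw [SimpleGraph.card_neighborFinset_eq_degree] at hle
          omega
        obtain ⟨u1, hu1, u2, hu2, h12⟩ := Finset.one_lt_card.mp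
          (show 1 < ((F.neighborFinset v').erase p).card by omega)
        have hu1' := Finset.mem_erase.mp hu1
        have hu2' := Finset.mem_erase.mp hu2
        rw [SimpleGraph.mem_neighborFinset] at hu1' hu2'
        exact ⟨u1, u2, hu1'.2, hu2'.2, h12, hu1'.1, hu2'.1⟩
    obtain ⟨u1, u2, ha1', ha2', h12', hp1', hp2'⟩ := htwo
    have hmem1 : u1 ∈ (W ∪ X2).filter (F.Adj v') :=
      Finset.mem_filter.mpr ⟨hsub v' hv'mem u1 ha1' hp1', ha1'⟩
    have hmem2 : u2 ∈ (W ∪ X2).filter (F.Adj v') :=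
      Finset.mem_filter.mpr ⟨hsub v' hv'mem u2 ha2' hp2', ha2'⟩
    have := Finset.one_lt_card.mpr ⟨u1, hmem1, u2, hmem2, h12'⟩
    omega
  -- m = 1
  have hm1 : m = 1 := by
    have : ∀ x : ZMod 3, x ≠ 0 → x ≠ 2 → x = 1 := by decide
    exact this m hmne hm2

  -- all A-B differences equal a - b
  have hDval : ∀ x2 ∈ A, ∀ y2 ∈ B, ∀ y1s ∈ B, y1s ≠ y2 → ∀ s : Fin N,
      s ≠ q → s ≠ x2 → s ≠ y2 → s ≠ y1s → χ s(x2,s) - χ s(y2,s) = a - b := by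
    intro x2 hx2 y2 hy2 y1s hy1s hy12 s h1 h2 h3 h4
    have hv := MV1 vs hvsp hvsl1 hvsl2 hvsnadj x2 hx2 y2 hy2 y1s hy1s hy12 s h1 h2 h3 h4
    rw [← hmdef, hm1, one_mul] at hv
    exact hv
  set δ := a - b with hδdef
  have DA0 : ∀ x ∈ A, ∀ z ∈ A, ∀ s ∈ A, s ≠ x → s ≠ z → χ s(x,s) = χ s(z,s) := by
    intro x hx z hz s hs hsx hsz
    have h1 := hDval x hx yB0 hyB0 yB1 hyB1 (Ne.symm hyB01) s (hAq s hs) hsx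
      (fun h => hAB s hs (h ▸ hyB0)) (fun h => hAB s hs (h ▸ hyB1))
    have h2 := hDval z hz yB0 hyB0 yB1 hyB1 (Ne.symm hyB01) s (hAq s hs) hsz
      (fun h => hAB s hs (h ▸ hyB0)) (fun h => hAB s hs (h ▸ hyB1))
    have h3 := h1.trans h2.symm
    have := congrArg (fun t => t + χ s(yB0,s)) h3
    simpa using this
  set α := χ s(xA0, sA0) with hαdef
  have hA0 : ∀ x'' ∈ A, x'' ≠ xA0 → χ s(xA0, x'') = α := by
    intro x'' hx'' hne
    rw [hsym xA0 x'', DA0 x'' hx'' sA0 hsA0 xA0 hxA0 (Ne.symm hne) (Ne.symm hsA0x),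
      hsym sA0 xA0, hαdef]
  have SAA : ∀ x ∈ A, ∀ x' ∈ A, x ≠ x' → χ s(x, x') = α := by
    intro x hx x' hx' hxx'
    by_cases h2 : x' = xA0
    · rw [h2, hsym x xA0]
      exact hA0 x hx (fun h => hxx' (h.trans h2.symm))
    · by_cases h1 : x = xA0
      · rw [h1]
        exact hA0 x' hx' h2
      · rw [DA0 x hx xA0 hxA0 x' hx' (Ne.symm hxx') h2]
        exact hA0 x' hx' h2
  have S2 : ∀ y ∈ B, ∀ x ∈ A, χ s(y,x) = α - δ := by
    intro y hy x hx
    obtain ⟨x2, hx2, hx2n⟩ := pick A {x} (by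
      have c3 : ({x} : Finset (Fin N)).card = 1 := Finset.card_singleton x
      omega)
    rw [Finset.mem_singleton] at hx2n
    obtain ⟨y1s, hy1s, hy1sn⟩ := pick B {y} (by
      have c3 : ({y} : Finset (Fin N)).card = 1 := Finset.card_singleton y
      omega)
    rw [Finset.mem_singleton] at hy1sn
    have h := hDval x2 hx2 y hy y1s hy1s hy1sn x (hAq x hx) (Ne.symm hx2n)
      (fun h => hAB x hx (h ▸ hy)) (fun h => hAB x hx (h ▸ hy1s))
    rw [SAA x2 hx2 x hx hx2n] at h
    have h2 := sub_eq_iff_eq_add.mp h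
    rw [h2]
    ring
  have S3 : 3 ≤ B.card → ∀ y ∈ B, ∀ y' ∈ B, y ≠ y' → χ s(y,y') = α - δ - δ := by
    intro hB3 y hy y' hy' hyy'
    obtain ⟨y1s, hy1s, hy1sn⟩ := pick B {y, y'} (by
      have c1 := Finset.card_insert_le y ({y'} : Finset (Fin N))
      have c3 : ({y'} : Finset (Fin N)).card = 1 := Finset.card_singleton y'
      omega)
    simp only [Finset.mem_insert, Finset.mem_singleton, not_or] at hy1sn
    have h := hDval xA0 hxA0 y hy y1s hy1s hy1sn.1 y' (hBq y' hy')
      (fun h => hAB xA0 hxA0 (h ▸ hy')) (Ne.symm hyy') (fun h => hy1sn.2 h.symm)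
    rw [hsym xA0 y', S2 y' hy' xA0 hxA0] at h
    have h2 := sub_eq_iff_eq_add.mp h
    rw [h2]
    ring
  have S5 : a = α ∨ a = α - δ := by
    have hc := C1 xA0 q sA0 yB0 (Ne.symm (hAq xA0 hxA0)) hsA0x
      (fun h => hAB xA0 hxA0 (h ▸ hyB0)) (Ne.symm hsA0q)
      (Ne.symm (hBq yB0 hyB0)) hsA0y0
    have e1 : χ s(xA0,q) = a := by rw [hsym xA0 q]; exact hAa xA0 hxA0
    have e2 : χ s(xA0,sA0) = α := hαdef.symm
    have e3 : χ s(xA0,yB0) = α - δ := by rw [hsym xA0 yB0]; exact S2 yB0 hyB0 xA0 hxA0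
    rcases hc with h|h|h
    · left; rw [← e1, ← e2]; exact h
    · right; rw [← e1, ← e3]; exact h
    · exfalso
      have h' : α = α - δ := by rw [← e2, ← e3]; exact h
      have hz : δ = 0 := by
        have := sub_eq_self.mp h'.symm
        exact this
      rw [hδdef] at hz
      exact hdab hz
  set θ := a - α with hθdef
  have hθcases : θ = 0 ∨ θ = -δ := by
    rcases S5 with h | h
    · left; rw [hθdef, h]; ring
    · right; rw [hθdef, h]; ring
  set g : Fin N → ZMod 3 := fun z => if z ∈ B then -δ else if z = q then θ else 0
    with hgdef
  have hgA : ∀ x ∈ A, g x = 0 := by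
    intro x hx
    have h1 : x ∉ B := fun h => hAB x hx h
    have h2 : x ≠ q := hAq x hx
    rw [hgdef]
    simp [h1, h2]
  have hgB : ∀ y ∈ B, g y = -δ := by
    intro y hy
    rw [hgdef]
    simp [hy]
  have hgq : g q = θ := by
    have h1 : q ∉ B := fun h => hBq q h rfl
    rw [hgdef]
    simp [h1]
  have EDGE : ∀ f : V → Fin N, Function.Injective f →
      (∀ u v : V, F.Adj u v → f u ∈ B → f v ∈ B → χ s(f u, f v) = α + -δ + -δ) →
      ∀ ⦃u v : V⦄, F.Adj u v → χ s(f u, f v) = α + g (f u) + g (f v) := by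
    intro f hf HBB u v huv
    have hne : f u ≠ f v := fun h => (F.ne_of_adj huv) (hf h)
    rcases hcover (f u) with hu | hu | hu <;> rcases hcover (f v) with hv | hv | hv
    · exact absurd (hu.trans hv.symm) hne
    · rw [hu, hgq, hgA _ hv, hAa _ hv, hθdef]; ring
    · rw [hu, hgq, hgB _ hv, hBb _ hv, hθdef, hδdef]; ring
    · rw [hv, hgq, hgA _ hu, hsym (f u) q, hAa _ hu, hθdef]; ring
    · rw [hgA _ hu, hgA _ hv, SAA _ hu _ hv hne]; ring
    · rw [hgA _ hu, hgB _ hv, hsym (f u) (f v), S2 _ hv _ hu]; ring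
    · rw [hv, hgq, hgB _ hu, hsym (f u) q, hBb _ hu, hθdef, hδdef]; ring
    · rw [hgB _ hu, hgA _ hv, S2 _ hu _ hv]; ring
    · rw [hgB _ hu, hgB _ hv]; exact HBB u v huv hu hv
  have hdeg1 : ∀ v : V, v ≠ p → (F.degree v : ZMod 3) = 1 := by
    intro v hvp'
    by_cases h1 : v = l1
    · rw [h1, hd1, Nat.cast_one]
    by_cases h2 : v = l2
    · rw [h2, hd2, Nat.cast_one]
    by_cases h3 : F.Adj p v
    · exact hdegnbr v h1 h2 h3
    · exact (hdegnon v hvp' h1 h2 h3).trans hm1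
  have hτ : (F.degree p : ZMod 3) ≠ 1 := by
    intro hone
    apply hnotreg
    intro v
    by_cases hvp' : v = p
    · rw [hvp']; exact zmod3_mod_one hone
    · exact zmod3_mod_one (hdeg1 v hvp')
  have hsumg : ∑ z, g z = (B.card : ZMod 3) * (-δ) + θ := by
    rw [← Finset.sum_filter_add_sum_filter_not univ (· ∈ B) g]
    have h1 : univ.filter (· ∈ B) = B := by
      ext z
      simp
    have h2 : ∑ z ∈ univ.filter (· ∈ B), g z = (B.card : ZMod 3) * (-δ) := by
      rw [h1, Finset.sum_congr rfl (fun z hz => hgB z hz), Finset.sum_const, nsmul_eq_mul]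
    rw [h2]
    congr 1
    have hqmem : q ∈ univ.filter (fun z => ¬ z ∈ B) := by
      simp only [Finset.mem_filter]
      exact ⟨mem_univ q, fun h => hBq q h rfl⟩
    rw [Finset.sum_eq_single_of_mem q hqmem]
    · exact hgq
    · intro z hz hzq
      rw [Finset.mem_filter] at hz
      rw [hgdef]
      simp [hz.2, hzq]
  have ENDG : ∀ f : V → Fin N, Function.Injective f → ∀ w, w ∉ Set.range f →
      (∀ u v : V, F.Adj u v → f u ∈ B → f v ∈ B → χ s(f u, f v) = α + -δ + -δ) →
      Sm F χ f = ((B.card : ZMod 3) * (-δ) + θ - g w)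
        + ((F.degree p : ZMod 3) - 1) * g (f p) := by
    intro f hf w hw HBB
    rw [Sm_structured F χ f α (fun v => g (f v)) (fun u v huv => EDGE f hf HBB huv)]
    rw [card_smul_zero hdiv, zero_add]
    rw [← Finset.add_sum_erase univ (fun v => F.degree v • g (f v)) (mem_univ p)]
    have hrest : ∑ v ∈ univ.erase p, F.degree v • g (f v)
        = ∑ v ∈ univ.erase p, g (f v) := by
      apply Finset.sum_congr rfl
      intro v hv
      rw [nsmul_eq_mul, hdeg1 v (Finset.mem_erase.mp hv).1, one_mul]
    rw [hrest]
    have hsplit2 : ∑ v ∈ univ.erase p, g (f v) = (∑ v, g (f v)) - g (f p) := by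
      rw [← Finset.add_sum_erase univ (fun v => g (f v)) (mem_univ p)]
      ring
    rw [hsplit2, sum_comp_inj hV f hf w hw g, hsumg, nsmul_eq_mul]
    ring
  have KILL : ∀ f : V → Fin N, Function.Injective f → ∀ w, w ∉ Set.range f →
      (∀ u v : V, F.Adj u v → f u ∈ B → f v ∈ B → χ s(f u, f v) = α + -δ + -δ) →
      ((B.card : ZMod 3) * (-δ) + θ - g w) + ((F.degree p : ZMod 3) - 1) * g (f p) = 0 →
      False := by
    intro f hf w hw HBB hval
    exact hA f hf (by rw [ENDG f hf w hw HBB]; exact hval)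
  have hB2 : B.card = 2 → B = {yB0, yB1} := by
    intro h2
    apply (Finset.eq_of_subset_of_card_le ?_ ?_).symm
    · intro z hz
      simp only [Finset.mem_insert, Finset.mem_singleton] at hz
      rcases hz with rfl | rfl
      · exact hyB0
      · exact hyB1
    · rw [h2, Finset.card_insert_of_notMem (by simpa using hyB01), Finset.card_singleton]
  have hBBgen : ∀ f : V → Fin N, Function.Injective f →
      (B.card = 2 → ∀ u v : V, F.Adj u v → f u ∈ B → f v ∈ B → False) →
      (∀ u v : V, F.Adj u v → f u ∈ B → f v ∈ B → χ s(f u, f v) = α + -δ + -δ) := by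
    intro f hf hguard u v huv hu hv
    by_cases hB3 : 3 ≤ B.card
    · rw [S3 hB3 _ hu _ hv (fun h => (F.ne_of_adj huv) (hf h))]
      ring
    · exact absurd (hguard (by omega) u v huv hu hv) not_false
  -- placements
  have P00 : ((B.card : ZMod 3) * (-δ) + θ - 0) + ((F.degree p : ZMod 3) - 1) * 0 = 0 →
      False := by
    intro hval
    obtain ⟨f, hf, hfp, hfl1, hfl2, hw⟩ := ext3 hV p l1 l2 xA0 yB0 yB1 xA1
      hpl1 hpl2 hl12
      (fun h => hAB xA0 hxA0 (h ▸ hyB0)) (fun h => hAB xA0 hxA0 (h ▸ hyB1)) hyB01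
      hxA01 (fun h => hAB xA1 hxA1 (h ▸ hyB0)) (fun h => hAB xA1 hxA1 (h ▸ hyB1))
    apply KILL f hf xA1 hw (hBBgen f hf ?_)
    · rw [hgA xA1 hxA1, hfp, hgA xA0 hxA0]
      exact hval
    · intro hcard2 u v huv hu hv
      have hBeq := hB2 hcard2
      rw [hBeq] at hu hv
      simp only [Finset.mem_insert, Finset.mem_singleton] at hu hv
      have hne : f u ≠ f v := fun h => (F.ne_of_adj huv) (hf h)
      rcases hu with hu|hu <;> rcases hv with hv|hv
      · exact hne (hu.trans hv.symm)
      · have h1 : u = l1 := hf (hu.trans hfl1.symm)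
        have h2 : v = l2 := hf (hv.trans hfl2.symm)
        exact hnadj12 (h1 ▸ h2 ▸ huv)
      · have h1 : u = l2 := hf (hu.trans hfl2.symm)
        have h2 : v = l1 := hf (hv.trans hfl1.symm)
        exact hnadj12 (h1 ▸ h2 ▸ huv).symm
      · exact hne (hu.trans hv.symm)
  have P10 : ((B.card : ZMod 3) * (-δ) + θ - (-δ)) + ((F.degree p : ZMod 3) - 1) * 0 = 0 →
      False := by
    intro hval
    obtain ⟨f, hf, hfp, hw⟩ := ext1 hV p xA0 yB0 (fun h => hAB xA0 hxA0 (h ▸ hyB0))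
    apply KILL f hf yB0 hw (hBBgen f hf ?_)
    · rw [hgB yB0 hyB0, hfp, hgA xA0 hxA0]
      exact hval
    · intro hcard2 u v huv hu hv
      have hBeq := hB2 hcard2
      rw [hBeq] at hu hv
      simp only [Finset.mem_insert, Finset.mem_singleton] at hu hv
      have hne : f u ≠ f v := fun h => (F.ne_of_adj huv) (hf h)
      have hu' : f u = yB1 := by
        rcases hu with hu|hu
        · exact absurd ⟨u, hu⟩ hw
        · exact hu
      have hv' : f v = yB1 := by
        rcases hv with hv|hv
        · exact absurd ⟨v, hv⟩ hw
        · exact hv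
      exact hne (hu'.trans hv'.symm)
  have P11 : ((B.card : ZMod 3) * (-δ) + θ - (-δ))
      + ((F.degree p : ZMod 3) - 1) * (-δ) = 0 → False := by
    intro hval
    obtain ⟨f, hf, hfp, hw⟩ := ext1 hV p yB1 yB0 (Ne.symm hyB01)
    apply KILL f hf yB0 hw (hBBgen f hf ?_)
    · rw [hgB yB0 hyB0, hfp, hgB yB1 hyB1]
      exact hval
    · intro hcard2 u v huv hu hv
      have hBeq := hB2 hcard2
      rw [hBeq] at hu hv
      simp only [Finset.mem_insert, Finset.mem_singleton] at hu hv
      have hne : f u ≠ f v := fun h => (F.ne_of_adj huv) (hf h)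
      have hu' : f u = yB1 := by
        rcases hu with hu|hu
        · exact absurd ⟨u, hu⟩ hw
        · exact hu
      have hv' : f v = yB1 := by
        rcases hv with hv|hv
        · exact absurd ⟨v, hv⟩ hw
        · exact hv
      exact hne (hu'.trans hv'.symm)
  have P01 : ((B.card : ZMod 3) * (-δ) + θ - 0)
      + ((F.degree p : ZMod 3) - 1) * (-δ) = 0 → False := by
    intro hval
    obtain ⟨f, hf, hfp, hfvs, hw⟩ := ext2 hV p vs yB0 yB1 xA0 (Ne.symm hvsp) hyB01
      (fun h => hAB xA0 hxA0 (h ▸ hyB0)) (fun h => hAB xA0 hxA0 (h ▸ hyB1))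
    apply KILL f hf xA0 hw (hBBgen f hf ?_)
    · rw [hgA xA0 hxA0, hfp, hgB yB0 hyB0]
      exact hval
    · intro hcard2 u v huv hu hv
      have hBeq := hB2 hcard2
      rw [hBeq] at hu hv
      simp only [Finset.mem_insert, Finset.mem_singleton] at hu hv
      have hne : f u ≠ f v := fun h => (F.ne_of_adj huv) (hf h)
      rcases hu with hu|hu <;> rcases hv with hv|hv
      · exact hne (hu.trans hv.symm)
      · have h1 : u = p := hf (hu.trans hfp.symm)
        have h2 : v = vs := hf (hv.trans hfvs.symm)
        exact hvsnadj (h1 ▸ h2 ▸ huv)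
      · have h1 : u = vs := hf (hu.trans hfvs.symm)
        have h2 : v = p := hf (hv.trans hfp.symm)
        exact hvsnadj (h1 ▸ h2 ▸ huv).symm
      · exact hne (hu.trans hv.symm)
  -- final dispatch
  have htri : ∀ x : ZMod 3, x = 0 ∨ x = 1 ∨ x = 2 := by decide
  have hτ02 : (F.degree p : ZMod 3) = 0 ∨ (F.degree p : ZMod 3) = 2 := by
    rcases htri (F.degree p : ZMod 3) with h|h|h
    · exact Or.inl h
    · exact absurd h hτ
    · exact Or.inr h
  rcases hτ02 with hτe | hτe <;> rcases hθcases with hθe | hθe <;>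
    rcases htri ((B.card : ZMod 3)) with hβe | hβe | hβe
  · apply P00
    rw [hβe, hθe, hτe]
    have hzz : ∀ d : ZMod 3, ((0:ZMod 3) * (-d) + 0 - 0) + ((0:ZMod 3) - 1) * 0 = 0 := by decide
    exact hzz δ
  · apply P10
    rw [hβe, hθe, hτe]
    have hzz : ∀ d : ZMod 3, ((1:ZMod 3) * (-d) + 0 - (-d)) + ((0:ZMod 3) - 1) * 0 = 0 := by decide
    exact hzz δ
  · apply P11
    rw [hβe, hθe, hτe]
    have hzz : ∀ d : ZMod 3, ((2:ZMod 3) * (-d) + 0 - (-d)) + ((0:ZMod 3) - 1) * (-d) = 0 := by decide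
    exact hzz δ
  · apply P10
    rw [hβe, hθe, hτe]
    have hzz : ∀ d : ZMod 3, ((0:ZMod 3) * (-d) + (-d) - (-d)) + ((0:ZMod 3) - 1) * 0 = 0 := by decide
    exact hzz δ
  · apply P11
    rw [hβe, hθe, hτe]
    have hzz : ∀ d : ZMod 3, ((1:ZMod 3) * (-d) + (-d) - (-d)) + ((0:ZMod 3) - 1) * (-d) = 0 := by decide
    exact hzz δ
  · apply P00
    rw [hβe, hθe, hτe]
    have hzz : ∀ d : ZMod 3, ((2:ZMod 3) * (-d) + (-d) - 0) + ((0:ZMod 3) - 1) * 0 = 0 := by decide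
    exact hzz δ
  · apply P00
    rw [hβe, hθe, hτe]
    have hzz : ∀ d : ZMod 3, ((0:ZMod 3) * (-d) + 0 - 0) + ((2:ZMod 3) - 1) * 0 = 0 := by decide
    exact hzz δ
  · apply P10
    rw [hβe, hθe, hτe]
    have hzz : ∀ d : ZMod 3, ((1:ZMod 3) * (-d) + 0 - (-d)) + ((2:ZMod 3) - 1) * 0 = 0 := by decide
    exact hzz δ
  · apply P01
    rw [hβe, hθe, hτe]
    have hzz : ∀ d : ZMod 3, ((2:ZMod 3) * (-d) + 0 - 0) + ((2:ZMod 3) - 1) * (-d) = 0 := by decide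
    exact hzz δ
  · apply P10
    rw [hβe, hθe, hτe]
    have hzz : ∀ d : ZMod 3, ((0:ZMod 3) * (-d) + (-d) - (-d)) + ((2:ZMod 3) - 1) * 0 = 0 := by decide
    exact hzz δ
  · apply P01
    rw [hβe, hθe, hτe]
    have hzz : ∀ d : ZMod 3, ((1:ZMod 3) * (-d) + (-d) - 0) + ((2:ZMod 3) - 1) * (-d) = 0 := by decide
    exact hzz δ
  · apply P00
    rw [hβe, hθe, hτe]
    have hzz : ∀ d : ZMod 3, ((2:ZMod 3) * (-d) + (-d) - 0) + ((2:ZMod 3) - 1) * 0 = 0 := by decide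
    exact hzz δ

end Case1

section Main
variable {V : Type} [Fintype V] [DecidableEq V]

theorem stmt4 {V : Type} [Fintype V] [DecidableEq V]
    (F : SimpleGraph V) [DecidableRel F.Adj] (n : ℕ)
    (hcard : Fintype.card V = n) (hn : 7 ≤ n)
    (hforest : F.IsAcyclic)
    (hdiv : 3 ∣ F.edgeFinset.card)
    (hnotstar : ¬ IsStar F)
    (hnotreg : ¬ ∀ v, F.degree v % 3 = 1)
    (hsiblings : ∃ l₁ l₂ p : V, l₁ ≠ l₂ ∧ F.degree l₁ = 1 ∧ F.degree l₂ = 1 ∧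
      F.Adj p l₁ ∧ F.Adj p l₂)
    (χ : Sym2 (Fin (n + 1)) → ZMod 3) :
    HasZeroSumCopy F χ := by
  classical
  by_contra hA0
  have hA : ∀ f : V → Fin (n+1), Function.Injective f → Sm F χ f ≠ 0 := by
    intro f hf h
    exact hA0 ⟨f, hf, h⟩
  obtain ⟨l1, l2, p, hl12, hd1, hd2, ha1, ha2⟩ := hsiblings
  have hV : Fintype.card V + 1 = n + 1 := by rw [hcard]
  have hN : 8 ≤ n + 1 := by omega
  have hpl1 : p ≠ l1 := ha1.ne
  have hpl2 : p ≠ l2 := ha2.ne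
  have hsym : ∀ x y : Fin (n+1), χ s(x,y) = χ s(y,x) := fun x y => by rw [Sym2.eq_swap]
  have hNsing : ∀ l : V, F.degree l = 1 → F.Adj p l → F.neighborFinset l = {p} := by
    intro l hdeg hadj
    have hp : p ∈ F.neighborFinset l := (SimpleGraph.mem_neighborFinset F l p).mpr hadj.symm
    have hcard1 : (F.neighborFinset l).card = 1 := hdeg
    obtain ⟨x, hx⟩ := Finset.card_eq_one.mp hcard1
    rw [hx] at hp ⊢
    rw [Finset.mem_singleton] at hp
    rw [hp]
  have hNl1 : F.neighborFinset l1 = {p} := hNsing l1 hd1 ha1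
  have hNl2 : F.neighborFinset l2 = {p} := hNsing l2 hd2 ha2
  have orbit : ∀ f : V → Fin (n+1), Function.Injective f → ∀ w, w ∉ Set.range f →
      Sm F χ f ≠ 0 ∧ Sm F χ f + (χ s(w, f p) - χ s(f l1, f p)) ≠ 0 ∧
        Sm F χ f + (χ s(w, f p) - χ s(f l2, f p)) ≠ 0 := by
    intro f hf w hw
    refine ⟨hA f hf, ?_, ?_⟩
    · have h1 := hA (Function.update f l1 w) (update_inj hf hw l1)
      rw [Sm_update F χ l1 w, hNl1, Finset.sum_singleton] at h1
      exact h1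
    · have h1 := hA (Function.update f l2 w) (update_inj hf hw l2)
      rw [Sm_update F χ l2 w, hNl2, Finset.sum_singleton] at h1
      exact h1
  have C1 : ∀ q' x y z : Fin (n+1), x ≠ q' → y ≠ q' → z ≠ q' → x ≠ y → x ≠ z → y ≠ z →
      χ s(q',x) = χ s(q',y) ∨ χ s(q',x) = χ s(q',z) ∨ χ s(q',y) = χ s(q',z) := by
    intro q' x y z hxq hyq hzq hxy hxz hyz
    by_contra hc
    push_neg at hc
    obtain ⟨f, hf, hfp, hfl1, hfl2, hw⟩ := ext3 hV p l1 l2 q' x y z hpl1 hpl2 hl12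
      (Ne.symm hxq) (Ne.symm hyq) hxy (Ne.symm hzq) hxz hyz
    obtain ⟨O1, O2, O3⟩ := orbit f hf z hw
    rw [hfp, hfl1, hsym z q', hsym x q'] at O2
    rw [hfp, hfl2, hsym z q', hsym y q'] at O3
    have key : ∀ T cx cy cz : ZMod 3, cx ≠ cy → cx ≠ cz → cy ≠ cz → T ≠ 0 →
        T + (cz - cx) ≠ 0 → T + (cz - cy) ≠ 0 → False := by decide
    exact key (Sm F χ f) _ _ _ hc.1 hc.2.1 hc.2.2 O1 O2 O3
  by_cases HII : ∀ x : Fin (n+1), ∃ c,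
      (univ.filter (fun z => z ≠ x ∧ χ s(x,z) ≠ c)).card ≤ 1
  · exact caseII F hV hN hforest hdiv χ hA HII
  · push_neg at HII
    obtain ⟨q, hq⟩ := HII
    have hq' : ∀ c : ZMod 3, 1 < (univ.filter (fun z => z ≠ q ∧ χ s(q,z) ≠ c)).card := by
      intro c
      have := hq c
      omega
    obtain ⟨z0, hz0⟩ := Finset.card_pos.mp (lt_trans one_pos (hq' 0))
    rw [Finset.mem_filter] at hz0
    set a := χ s(q, z0) with hadef
    obtain ⟨z1, hz1, z2, hz2, hz12⟩ := Finset.one_lt_card.mp (hq' a)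
    rw [Finset.mem_filter] at hz1 hz2
    set b := χ s(q,z1) with hbdef
    have hab' : a ≠ b := fun h => hz1.2.2 h.symm
    have hz01 : z0 ≠ z1 := by
      intro h
      exact hz1.2.2 (by rw [hbdef, hadef, ← h])
    have hz02 : z0 ≠ z2 := by
      intro h
      exact hz2.2.2 (by rw [hadef, ← h])
    have hz2b : χ s(q,z2) = b := by
      rcases C1 q z0 z1 z2 hz0.2.1 hz1.2.1 hz2.2.1 hz01 hz02 hz12 with h|h|h
      · exact absurd h.symm hz1.2.2
      · exact absurd h.symm hz2.2.2
      · exact h.symm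
    have hall : ∀ z, z ≠ q → χ s(q,z) = a ∨ χ s(q,z) = b := by
      intro z hz
      by_contra hcon
      push_neg at hcon
      have h1 : z0 ≠ z := by
        intro h
        exact hcon.1 (by rw [hadef, ← h])
      have h2 : z1 ≠ z := by
        intro h
        exact hcon.2 (by rw [hbdef, ← h])
      rcases C1 q z0 z1 z hz0.2.1 hz1.2.1 hz hz01 h1 h2 with h|h|h
      · exact hab' h
      · exact hcon.1 h.symm
      · exact hcon.2 h.symm
    set A0 := univ.filter (fun z => z ≠ q ∧ χ s(q,z) = a) with hA0def
    set B0 := univ.filter (fun z => z ≠ q ∧ χ s(q,z) = b) with hB0def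
    have hA0mem : ∀ z, z ∈ A0 ↔ z ≠ q ∧ χ s(q,z) = a := by
      intro z
      rw [hA0def, Finset.mem_filter]
      simp
    have hB0mem : ∀ z, z ∈ B0 ↔ z ≠ q ∧ χ s(q,z) = b := by
      intro z
      rw [hB0def, Finset.mem_filter]
      simp
    have hA0card : 2 ≤ A0.card := by
      have hsub : univ.filter (fun z => z ≠ q ∧ χ s(q,z) ≠ b) ⊆ A0 := by
        intro z hz
        rw [Finset.mem_filter] at hz
        exact (hA0mem z).mpr ⟨hz.2.1, (hall z hz.2.1).resolve_right hz.2.2⟩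
      have := Finset.card_le_card hsub
      have := hq' b
      omega
    have hB0card : 2 ≤ B0.card := by
      have hsub : univ.filter (fun z => z ≠ q ∧ χ s(q,z) ≠ a) ⊆ B0 := by
        intro z hz
        rw [Finset.mem_filter] at hz
        exact (hB0mem z).mpr ⟨hz.2.1, (hall z hz.2.1).resolve_left hz.2.2⟩
      have := Finset.card_le_card hsub
      have := hq' a
      omega
    have hcov : ∀ z : Fin (n+1), z = q ∨ z ∈ A0 ∨ z ∈ B0 := by
      intro z
      by_cases hzq : z = q
      · exact Or.inl hzq
      · rcases hall z hzq with h | h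
        · exact Or.inr (Or.inl ((hA0mem z).mpr ⟨hzq, h⟩))
        · exact Or.inr (Or.inr ((hB0mem z).mpr ⟨hzq, h⟩))
    have hdisj : ∀ z, z ∈ A0 → z ∈ B0 → False := by
      intro z h1 h2
      exact hab' ((((hA0mem z).mp h1).2).symm.trans (((hB0mem z).mp h2).2))
    have hsumAB : A0.card + B0.card = n := by
      have hdisj' : Disjoint A0 B0 := by
        rw [Finset.disjoint_left]
        intro z h1 h2
        exact hdisj z h1 h2
      have hunion : A0 ∪ B0 = univ.erase q := by
        ext z
        rw [Finset.mem_union, Finset.mem_erase]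
        constructor
        · rintro (h | h)
          · exact ⟨((hA0mem z).mp h).1, mem_univ z⟩
          · exact ⟨((hB0mem z).mp h).1, mem_univ z⟩
        · rintro ⟨h, -⟩
          rcases hall z h with hh | hh
          · exact Or.inl ((hA0mem z).mpr ⟨h, hh⟩)
          · exact Or.inr ((hB0mem z).mpr ⟨h, hh⟩)
      have := Finset.card_union_of_disjoint hdisj'
      rw [hunion, Finset.card_erase_of_mem (mem_univ q)] at this
      have hcu : (univ : Finset (Fin (n+1))).card = n + 1 := by simp
      omega
    rcases le_or_gt B0.card A0.card with hle | hlt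
    · exact caseI F hV hN hforest hdiv hnotstar hnotreg p l1 l2 hl12 hd1 hd2 ha1 ha2
        χ hA C1 q a b hab' A0 B0 hA0mem hB0mem hcov (by omega) hB0card
    · exact caseI F hV hN hforest hdiv hnotstar hnotreg p l1 l2 hl12 hd1 hd2 ha1 ha2
        χ hA C1 q b a (Ne.symm hab') B0 A0 hB0mem hA0mem
        (fun z => (hcov z).imp id Or.symm) (by omega) hA0card

end Main
end

section
/- Let F be a forest on n vertices with 3 dividing e(F) such that F contains two vertex-disjoint switching structures, and let χ : E(K_n) → Z_3 be an edge-coloring of K_n containing two vertex-disjoint alternating 4-cycles. Then there is a copy of F in K_n whose edge colors sum to 0 in Z_3. -/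
open Finset

/-- `(v₁, v₂, v₃, v₄)` is a switching structure of `F`: either `v₁v₂v₃v₄` is a path
whose inner vertices `v₂, v₃` have degree exactly two, or `v₂` and `v₃` are leaves
adjacent to `v₁` and `v₄` respectively. -/
def IsSwitchingStructure {V : Type} [Fintype V] [DecidableEq V]
    (F : SimpleGraph V) [DecidableRel F.Adj] (v₁ v₂ v₃ v₄ : V) : Prop :=
  ([v₁, v₂, v₃, v₄] : List V).Nodup ∧
    ((F.Adj v₁ v₂ ∧ F.Adj v₂ v₃ ∧ F.Adj v₃ v₄ ∧ F.degree v₂ = 2 ∧ F.degree v₃ = 2) ∨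
      (F.Adj v₁ v₂ ∧ F.degree v₂ = 1 ∧ F.Adj v₄ v₃ ∧ F.degree v₃ = 1))

/-- The 4-cycle `uvwz` is alternating for the coloring `χ`:
the sums of the colors of its two perfect matchings differ. -/
def IsAltC4 {N : ℕ} (χ : Sym2 (Fin N) → ZMod 3) (u v w z : Fin N) : Prop :=
  ([u, v, w, z] : List (Fin N)).Nodup ∧
    χ s(u, v) + χ s(w, z) ≠ χ s(v, w) + χ s(z, u)

lemma swap_sum {V : Type} [Fintype V] [DecidableEq V]
    (F : SimpleGraph V) [DecidableRel F.Adj] {N : ℕ} (χ : Sym2 (Fin N) → ZMod 3)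
    {v₁ v₂ v₃ v₄ : V} (hsw : IsSwitchingStructure F v₁ v₂ v₃ v₄) (f : V → Fin N) :
    ∑ e ∈ F.edgeFinset, χ (e.map (f ∘ Equiv.swap v₂ v₃))
      = ∑ e ∈ F.edgeFinset, χ (e.map f)
        + (χ s(f v₁, f v₃) + χ s(f v₂, f v₄))
        - (χ s(f v₁, f v₂) + χ s(f v₃, f v₄)) := by
  obtain ⟨hnd, hcase⟩ := hsw
  simp only [List.nodup_cons, List.mem_cons, List.not_mem_nil, or_false, not_or,
    List.mem_singleton, List.nodup_nil, and_true] at hnd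
  obtain ⟨⟨h12, h13, h14⟩, ⟨h23, h24⟩, h34, -⟩ := hnd
  have fw1 : Equiv.swap v₂ v₃ v₁ = v₁ := Equiv.swap_apply_of_ne_of_ne h12 h13
  have fw2 : Equiv.swap v₂ v₃ v₂ = v₃ := Equiv.swap_apply_left _ _
  have fw3 : Equiv.swap v₂ v₃ v₃ = v₂ := Equiv.swap_apply_right _ _
  have fw4 : Equiv.swap v₂ v₃ v₄ = v₄ :=
    Equiv.swap_apply_of_ne_of_ne (Ne.symm h24) (Ne.symm h34)
  rcases hcase with ⟨ha12, ha23, ha34, hd2, hd3⟩ | ⟨ha12, hd2, ha43, hd3⟩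
  · -- path case
    have hn2 : F.neighborFinset v₂ = {v₁, v₃} := by
      refine (Finset.eq_of_subset_of_card_le ?_ ?_).symm
      · intro x hx
        simp only [Finset.mem_insert, Finset.mem_singleton] at hx
        rcases hx with rfl | rfl
        · exact (SimpleGraph.mem_neighborFinset F v₂ x).mpr ha12.symm
        · exact (SimpleGraph.mem_neighborFinset F v₂ x).mpr ha23
      · rw [SimpleGraph.card_neighborFinset_eq_degree, hd2]
        simp [h13]
    have hn3 : F.neighborFinset v₃ = {v₂, v₄} := by
      refine (Finset.eq_of_subset_of_card_le ?_ ?_).symm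
      · intro x hx
        simp only [Finset.mem_insert, Finset.mem_singleton] at hx
        rcases hx with rfl | rfl
        · exact (SimpleGraph.mem_neighborFinset F v₃ x).mpr ha23.symm
        · exact (SimpleGraph.mem_neighborFinset F v₃ x).mpr ha34
      · rw [SimpleGraph.card_neighborFinset_eq_degree, hd3]
        simp [h24]
    have hadj2 : ∀ x, F.Adj v₂ x → x = v₁ ∨ x = v₃ := by
      intro x hx
      have : x ∈ F.neighborFinset v₂ := (SimpleGraph.mem_neighborFinset F v₂ x).mpr hx
      rw [hn2] at this; simpa using this
    have hadj3 : ∀ x, F.Adj v₃ x → x = v₂ ∨ x = v₄ := by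
      intro x hx
      have : x ∈ F.neighborFinset v₃ := (SimpleGraph.mem_neighborFinset F v₃ x).mpr hx
      rw [hn3] at this; simpa using this
    set A : Finset (Sym2 V) := {s(v₁, v₂), s(v₂, v₃), s(v₃, v₄)} with hAdef
    have hA : A ⊆ F.edgeFinset := by
      intro e he
      simp only [hAdef, Finset.mem_insert, Finset.mem_singleton] at he
      rcases he with rfl | rfl | rfl <;>
        simp [SimpleGraph.mem_edgeFinset, SimpleGraph.mem_edgeSet, ha12, ha23, ha34]
    have key : ∀ x y : V, F.Adj x y → s(x, y) ∉ A →
        Sym2.map (f ∘ Equiv.swap v₂ v₃) s(x, y) = Sym2.map f s(x, y) := by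
      intro x y hadj hne
      have hmemA : ∀ z w : V, F.Adj z w → z = v₂ ∨ z = v₃ ∨ w = v₂ ∨ w = v₃ →
          s(z, w) ∈ A := by
        intro z w hzw hc
        rcases hc with rfl | rfl | rfl | rfl
        · rcases hadj2 w hzw with rfl | rfl <;>
            simp [hAdef, Sym2.eq_iff]
        · rcases hadj3 w hzw with rfl | rfl <;>
            simp [hAdef, Sym2.eq_iff]
        · rcases hadj2 z hzw.symm with rfl | rfl <;>
            simp [hAdef, Sym2.eq_iff]
        · rcases hadj3 z hzw.symm with rfl | rfl <;>
            simp [hAdef, Sym2.eq_iff]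
      have hx2 : x ≠ v₂ := fun h => hne (hmemA x y hadj (Or.inl h))
      have hx3 : x ≠ v₃ := fun h => hne (hmemA x y hadj (Or.inr (Or.inl h)))
      have hy2 : y ≠ v₂ := fun h => hne (hmemA x y hadj (Or.inr (Or.inr (Or.inl h))))
      have hy3 : y ≠ v₃ := fun h => hne (hmemA x y hadj (Or.inr (Or.inr (Or.inr h))))
      rw [Sym2.map_pair_eq, Sym2.map_pair_eq, Function.comp_apply, Function.comp_apply,
        Equiv.swap_apply_of_ne_of_ne hx2 hx3, Equiv.swap_apply_of_ne_of_ne hy2 hy3]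
    have h1 : ∑ e ∈ F.edgeFinset, χ (e.map (f ∘ Equiv.swap v₂ v₃))
        - ∑ e ∈ F.edgeFinset, χ (e.map f)
        = ∑ e ∈ A, (χ (e.map (f ∘ Equiv.swap v₂ v₃)) - χ (e.map f)) := by
      rw [← Finset.sum_sub_distrib]
      refine (Finset.sum_subset hA ?_).symm
      intro e he hne
      obtain ⟨⟨x, y⟩, rfl⟩ := e.exists_rep
      have hadj : F.Adj x y := by
        rw [SimpleGraph.mem_edgeFinset] at he
        exact he
      rw [key x y hadj hne, sub_self]
    have hne1 : s(v₁, v₂) ≠ s(v₂, v₃) := by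
      simp [Sym2.eq_iff]; tauto
    have hne2 : s(v₁, v₂) ≠ s(v₃, v₄) := by
      simp [Sym2.eq_iff]; tauto
    have hne3 : s(v₂, v₃) ≠ s(v₃, v₄) := by
      simp [Sym2.eq_iff]; tauto
    have h2 : ∑ e ∈ A, (χ (e.map (f ∘ Equiv.swap v₂ v₃)) - χ (e.map f))
        = (χ s(f v₁, f v₃) + χ s(f v₂, f v₄))
          - (χ s(f v₁, f v₂) + χ s(f v₃, f v₄)) := by
      rw [hAdef, Finset.sum_insert (by simp [hne1, hne2]),
        Finset.sum_insert (by simp [hne3]), Finset.sum_singleton]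
      simp only [Sym2.map_pair_eq, Function.comp_apply, fw1, fw2, fw3, fw4]
      rw [show s(f v₃, f v₂) = s(f v₂, f v₃) from Sym2.eq_swap]
      ring
    linear_combination h1 + h2
  · -- leaf case
    have hn2 : F.neighborFinset v₂ = {v₁} := by
      refine (Finset.eq_of_subset_of_card_le ?_ ?_).symm
      · intro x hx
        simp only [Finset.mem_singleton] at hx
        subst hx
        exact (SimpleGraph.mem_neighborFinset F v₂ x).mpr ha12.symm
      · rw [SimpleGraph.card_neighborFinset_eq_degree, hd2]
        simp
    have hn3 : F.neighborFinset v₃ = {v₄} := by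
      refine (Finset.eq_of_subset_of_card_le ?_ ?_).symm
      · intro x hx
        simp only [Finset.mem_singleton] at hx
        subst hx
        exact (SimpleGraph.mem_neighborFinset F v₃ x).mpr ha43.symm
      · rw [SimpleGraph.card_neighborFinset_eq_degree, hd3]
        simp
    have hadj2 : ∀ x, F.Adj v₂ x → x = v₁ := by
      intro x hx
      have : x ∈ F.neighborFinset v₂ := (SimpleGraph.mem_neighborFinset F v₂ x).mpr hx
      rw [hn2] at this; simpa using this
    have hadj3 : ∀ x, F.Adj v₃ x → x = v₄ := by
      intro x hx
      have : x ∈ F.neighborFinset v₃ := (SimpleGraph.mem_neighborFinset F v₃ x).mpr hx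
      rw [hn3] at this; simpa using this
    set A : Finset (Sym2 V) := {s(v₁, v₂), s(v₃, v₄)} with hAdef
    have hA : A ⊆ F.edgeFinset := by
      intro e he
      simp only [hAdef, Finset.mem_insert, Finset.mem_singleton] at he
      rcases he with rfl | rfl <;>
        simp [SimpleGraph.mem_edgeFinset, SimpleGraph.mem_edgeSet, ha12, ha43, ha43.symm]
    have key : ∀ x y : V, F.Adj x y → s(x, y) ∉ A →
        Sym2.map (f ∘ Equiv.swap v₂ v₃) s(x, y) = Sym2.map f s(x, y) := by
      intro x y hadj hne
      have hmemA : ∀ z w : V, F.Adj z w → z = v₂ ∨ z = v₃ ∨ w = v₂ ∨ w = v₃ →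
          s(z, w) ∈ A := by
        intro z w hzw hc
        rcases hc with rfl | rfl | rfl | rfl
        · rcases hadj2 w hzw with rfl
          simp [hAdef, Sym2.eq_iff]
        · rcases hadj3 w hzw with rfl
          simp [hAdef, Sym2.eq_iff]
        · rcases hadj2 z hzw.symm with rfl
          simp [hAdef, Sym2.eq_iff]
        · rcases hadj3 z hzw.symm with rfl
          simp [hAdef, Sym2.eq_iff]
      have hx2 : x ≠ v₂ := fun h => hne (hmemA x y hadj (Or.inl h))
      have hx3 : x ≠ v₃ := fun h => hne (hmemA x y hadj (Or.inr (Or.inl h)))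
      have hy2 : y ≠ v₂ := fun h => hne (hmemA x y hadj (Or.inr (Or.inr (Or.inl h))))
      have hy3 : y ≠ v₃ := fun h => hne (hmemA x y hadj (Or.inr (Or.inr (Or.inr h))))
      rw [Sym2.map_pair_eq, Sym2.map_pair_eq, Function.comp_apply, Function.comp_apply,
        Equiv.swap_apply_of_ne_of_ne hx2 hx3, Equiv.swap_apply_of_ne_of_ne hy2 hy3]
    have h1 : ∑ e ∈ F.edgeFinset, χ (e.map (f ∘ Equiv.swap v₂ v₃))
        - ∑ e ∈ F.edgeFinset, χ (e.map f)
        = ∑ e ∈ A, (χ (e.map (f ∘ Equiv.swap v₂ v₃)) - χ (e.map f)) := by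
      rw [← Finset.sum_sub_distrib]
      refine (Finset.sum_subset hA ?_).symm
      intro e he hne
      obtain ⟨⟨x, y⟩, rfl⟩ := e.exists_rep
      have hadj : F.Adj x y := by
        rw [SimpleGraph.mem_edgeFinset] at he
        exact he
      rw [key x y hadj hne, sub_self]
    have hne2 : s(v₁, v₂) ≠ s(v₃, v₄) := by
      simp [Sym2.eq_iff]; tauto
    have h2 : ∑ e ∈ A, (χ (e.map (f ∘ Equiv.swap v₂ v₃)) - χ (e.map f))
        = (χ s(f v₁, f v₃) + χ s(f v₂, f v₄))
          - (χ s(f v₁, f v₂) + χ s(f v₃, f v₄)) := by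
      rw [hAdef, Finset.sum_insert (by simp [hne2]), Finset.sum_singleton]
      simp only [Sym2.map_pair_eq, Function.comp_apply, fw1, fw2, fw3, fw4]
      ring
    linear_combination h1 + h2


lemma exists_inj_extend8 {V : Type} [Fintype V] [DecidableEq V] {n : ℕ}
    (hcard : Fintype.card V = n)
    (v₁ v₂ v₃ v₄ u₁ u₂ u₃ u₄ : V)
    (hV : ([v₁, v₂, v₃, v₄, u₁, u₂, u₃, u₄] : List V).Nodup)
    (a b c d a' b' c' d' : Fin n)
    (hT : ([a, b, c, d, a', b', c', d'] : List (Fin n)).Nodup) :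
    ∃ f : V → Fin n, Function.Injective f ∧ f v₁ = a ∧ f v₂ = b ∧ f v₃ = c ∧ f v₄ = d ∧
      f u₁ = a' ∧ f u₂ = b' ∧ f u₃ = c' ∧ f u₄ = d' := by
  classical
  have hV' := hV
  simp only [List.nodup_cons, List.mem_cons, List.not_mem_nil, or_false, not_or,
    List.mem_singleton, List.nodup_nil, and_true] at hV'
  obtain ⟨⟨e12, e13, e14, e15, e16, e17, e18⟩, ⟨e23, e24, e25, e26, e27, e28⟩,
    ⟨e34, e35, e36, e37, e38⟩, ⟨e45, e46, e47, e48⟩, ⟨e56, e57, e58⟩, ⟨e67, e68⟩, e78, -⟩ := hV'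
  set L : List V := [v₁, v₂, v₃, v₄, u₁, u₂, u₃, u₄] with hL
  set M : List (Fin n) := [a, b, c, d, a', b', c', d'] with hM
  set g : V → Fin n := fun x => M.getD (L.idxOf x) a with hg
  have hlen : L.length = M.length := rfl
  have hinj : Set.InjOn g ↑L.toFinset := by
    intro x hx y hy hxy
    rw [Finset.mem_coe, List.mem_toFinset] at hx hy
    have hix : L.idxOf x < M.length := hlen ▸ List.idxOf_lt_length_iff.2 hx
    have hiy : L.idxOf y < M.length := hlen ▸ List.idxOf_lt_length_iff.2 hy
    rw [hg] at hxy
    simp only [List.getD_eq_getElem _ _ hix, List.getD_eq_getElem _ _ hiy] at hxy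
    have := (hT.getElem_inj_iff).mp hxy
    exact (List.idxOf_inj hx).mp this
  have hαt : Fintype.card V = (Finset.univ : Finset (Fin n)).card := by simp [hcard]
  obtain ⟨e, he⟩ := Finset.exists_equiv_extend_of_card_eq hαt
    (Finset.subset_univ (L.toFinset.image g)) hinj
  have hval : ∀ x ∈ L, (e x : Fin n) = g x := fun x hx => he x (by simpa using hx)
  refine ⟨fun x => (e x : Fin n), fun x y h => e.injective (Subtype.ext h),
    ?_, ?_, ?_, ?_, ?_, ?_, ?_, ?_⟩
  · show ((e v₁ : Fin n)) = _
    rw [hval v₁ (by simp [hL])]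
    simp [hg, hM, hL, List.idxOf_cons_self]
  · show ((e v₂ : Fin n)) = _
    rw [hval v₂ (by simp [hL])]
    simp [hg, hM, hL, List.idxOf_cons_self, List.idxOf_cons_ne, e12]
  · show ((e v₃ : Fin n)) = _
    rw [hval v₃ (by simp [hL])]
    simp [hg, hM, hL, List.idxOf_cons_self, List.idxOf_cons_ne, e13, e23]
  · show ((e v₄ : Fin n)) = _
    rw [hval v₄ (by simp [hL])]
    simp [hg, hM, hL, List.idxOf_cons_self, List.idxOf_cons_ne,
      e14, e24, e34]
  · show ((e u₁ : Fin n)) = _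
    rw [hval u₁ (by simp [hL])]
    simp [hg, hM, hL, List.idxOf_cons_self, List.idxOf_cons_ne,
      e15, e25, e35, e45]
  · show ((e u₂ : Fin n)) = _
    rw [hval u₂ (by simp [hL])]
    simp [hg, hM, hL, List.idxOf_cons_self, List.idxOf_cons_ne,
      e16, e26, e36, e46, e56]
  · show ((e u₃ : Fin n)) = _
    rw [hval u₃ (by simp [hL])]
    simp [hg, hM, hL, List.idxOf_cons_self, List.idxOf_cons_ne,
      e17, e27, e37, e47, e57, e67]
  · show ((e u₄ : Fin n)) = _
    rw [hval u₄ (by simp [hL])]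
    simp [hg, hM, hL, List.idxOf_cons_self, List.idxOf_cons_ne,
      e18, e28, e38, e48, e58, e68, e78]



theorem stmt5 {V : Type} [Fintype V] [DecidableEq V]
    (F : SimpleGraph V) [DecidableRel F.Adj] (n : ℕ)
    (hcard : Fintype.card V = n)
    (hforest : F.IsAcyclic)
    (hdiv : 3 ∣ F.edgeFinset.card)
    (hsw : ∃ v₁ v₂ v₃ v₄ u₁ u₂ u₃ u₄ : V,
      ([v₁, v₂, v₃, v₄, u₁, u₂, u₃, u₄] : List V).Nodup ∧
      IsSwitchingStructure F v₁ v₂ v₃ v₄ ∧ IsSwitchingStructure F u₁ u₂ u₃ u₄)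
    (χ : Sym2 (Fin n) → ZMod 3)
    (halt : ∃ a b c d a' b' c' d' : Fin n,
      ([a, b, c, d, a', b', c', d'] : List (Fin n)).Nodup ∧
      IsAltC4 χ a b c d ∧ IsAltC4 χ a' b' c' d') :
    HasZeroSumCopy F χ := by
  obtain ⟨v₁, v₂, v₃, v₄, u₁, u₂, u₃, u₄, hnd8, hsw1, hsw2⟩ := hsw
  obtain ⟨a, b, c, d, a', b', c', d', hnd8', hc1, hc2⟩ := halt
  obtain ⟨-, hc1⟩ := hc1
  obtain ⟨-, hc2⟩ := hc2

  -- nodup of permuted target list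
  have hndT : ([a, b, d, c, a', b', d', c'] : List (Fin n)).Nodup := by
    simp only [List.nodup_cons, List.mem_cons, List.not_mem_nil, or_false, not_or,
      List.mem_singleton, List.nodup_nil, and_true] at hnd8' ⊢
    tauto
  obtain ⟨f₀, hinj, hf1, hf2, hf3, hf4, hf5, hf6, hf7, hf8⟩ :=
    exists_inj_extend8 hcard v₁ v₂ v₃ v₄ u₁ u₂ u₃ u₄ hnd8 a b d c a' b' d' c' hndT
  -- distinctness facts between the two structures
  have hnd8c := hnd8
  simp only [List.nodup_cons, List.mem_cons, List.not_mem_nil, or_false, not_or,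
    List.mem_singleton, List.nodup_nil, and_true] at hnd8c
  obtain ⟨⟨e12, e13, e14, e15, e16, e17, e18⟩, ⟨e23, e24, e25, e26, e27, e28⟩,
    ⟨e34, e35, e36, e37, e38⟩, ⟨e45, e46, e47, e48⟩, -, -, -, -⟩ := hnd8c
  -- the two shifts are nonzero
  set X1 : ZMod 3 := (χ s(a, d) + χ s(b, c)) - (χ s(a, b) + χ s(d, c)) with hX1def
  set X2 : ZMod 3 := (χ s(a', d') + χ s(b', c')) - (χ s(a', b') + χ s(d', c')) with hX2def
  have hX1 : X1 ≠ 0 := by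
    rw [hX1def, show s(a, d) = s(d, a) from Sym2.eq_swap, show s(d, c) = s(c, d) from Sym2.eq_swap]
    exact sub_ne_zero.mpr fun h => hc1 (h.symm.trans (add_comm _ _))
  have hX2 : X2 ≠ 0 := by
    rw [hX2def, show s(a', d') = s(d', a') from Sym2.eq_swap,
      show s(d', c') = s(c', d') from Sym2.eq_swap]
    exact sub_ne_zero.mpr fun h => hc2 (h.symm.trans (add_comm _ _))
  -- the swap identities
  have h1 := swap_sum F χ hsw1 f₀
  rw [hf1, hf2, hf3, hf4] at h1
  have h2 := swap_sum F χ hsw2 f₀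
  rw [hf5, hf6, hf7, hf8] at h2
  have h12 := swap_sum F χ hsw2 (f₀ ∘ Equiv.swap v₂ v₃)
  have k5 : (f₀ ∘ Equiv.swap v₂ v₃) u₁ = a' := by
    rw [Function.comp_apply, Equiv.swap_apply_of_ne_of_ne (Ne.symm e25) (Ne.symm e35), hf5]
  have k6 : (f₀ ∘ Equiv.swap v₂ v₃) u₂ = b' := by
    rw [Function.comp_apply, Equiv.swap_apply_of_ne_of_ne (Ne.symm e26) (Ne.symm e36), hf6]
  have k7 : (f₀ ∘ Equiv.swap v₂ v₃) u₃ = d' := by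
    rw [Function.comp_apply, Equiv.swap_apply_of_ne_of_ne (Ne.symm e27) (Ne.symm e37), hf7]
  have k8 : (f₀ ∘ Equiv.swap v₂ v₃) u₄ = c' := by
    rw [Function.comp_apply, Equiv.swap_apply_of_ne_of_ne (Ne.symm e28) (Ne.symm e38), hf8]
  rw [k5, k6, k7, k8] at h12
  have tri : ∀ S t1 t2 : ZMod 3, t1 ≠ 0 → t2 ≠ 0 →
      (S = 0 ∨ S + t1 = 0 ∨ S + t2 = 0 ∨ S + t1 + t2 = 0) := by decide
  rcases tri (∑ e ∈ F.edgeFinset, χ (e.map f₀)) X1 X2 hX1 hX2 with h | h | h | h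
  · exact ⟨f₀, hinj, h⟩
  · exact ⟨f₀ ∘ Equiv.swap v₂ v₃, hinj.comp (Equiv.injective _), by
      rw [hX1def] at h; linear_combination h1 + h⟩
  · exact ⟨f₀ ∘ Equiv.swap u₂ u₃, hinj.comp (Equiv.injective _), by
      rw [hX2def] at h; linear_combination h2 + h⟩
  · exact ⟨(f₀ ∘ Equiv.swap v₂ v₃) ∘ Equiv.swap u₂ u₃,
      (hinj.comp (Equiv.injective _)).comp (Equiv.injective _), by
      rw [hX1def, hX2def] at h; linear_combination h12 + h1 + h⟩
end

section
/- Let n be a positive integer and let χ : E(K_n) → Z_3 be an edge-coloring containing no alternating 4-cycle, i.e., for every 4-cycle uvwz one has χ(uv) + χ(wz) = χ(vw) + χ(zu). Then χ is a CC coloring: the vertex set of K_n can be partitioned into three (possibly empty) sets V_0, V_1, V_2 such that, for every i ∈ Z_3, every edge inside V_i has color i, and every edge joining V_{i+1} and V_{i+2} (indices mod 3) has color i. -/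
open Finset

/-- `χ` is a CC ("clique classes") coloring of the complete graph on `Fin N`:
there is a partition of the vertices into classes `V₀, V₁, V₂` (given by the
class-assignment map `P`) such that every edge inside a class `Vᵢ` has color `i`,
and every edge joining two distinct classes `Vⱼ, Vₖ` has the third color
(the color `i ∉ {j, k}`). -/
def IsCCColoring {N : ℕ} (χ : Sym2 (Fin N) → ZMod 3) : Prop :=
  ∃ P : Fin N → ZMod 3, ∀ u v : Fin N, u ≠ v →
    ((P u = P v ∧ χ s(u, v) = P u) ∨
      (P u ≠ P v ∧ χ s(u, v) ≠ P u ∧ χ s(u, v) ≠ P v))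

/-!
Over `ℤ₃` a coloring without alternating 4-cycles is a "potential" coloring:
`χ(uv) = Q u + Q v` for some `Q : V → ℤ₃`. Indeed, for a triangle `uab` the defect
`χ(ua) + χ(ub) - χ(ab)` depends only on the apex `u`, since changing `b` to `b'` changes it by
`χ(ub) + χ(ab') - χ(ab) - χ(ub')`, which vanishes on the 4-cycle `u b a b'`; and `Q u` is half
of that defect, i.e. its negative. Putting `P = -Q`, the color of `uv` is `-(P u + P v)`,
which in `ℤ₃` equals `P u` when `P u = P v` and is the third value otherwise.
-/

namespace EdgeColoring

variable {V G : Type*}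

def NoAlternatingFourCycle [Add G] (χ : Sym2 V → G) : Prop :=
  ∀ u v w z : V, [u, v, w, z].Nodup → χ s(u, v) + χ s(w, z) = χ s(v, w) + χ s(z, u)

def IsPotential [Add G] (χ : Sym2 V → G) (Q : V → G) : Prop :=
  ∀ u v : V, u ≠ v → χ s(u, v) = Q u + Q v

section Defect

variable [AddCommGroup G] (χ : Sym2 V → G)

def triangleDefect (u a b : V) : G := χ s(u, a) + χ s(u, b) - χ s(a, b)

lemma triangleDefect_comm (u a b : V) : triangleDefect χ u a b = triangleDefect χ u b a := by
  simp only [triangleDefect, Sym2.eq_swap (a := a)]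
  abel

variable {χ}

lemma triangleDefect_eq_of_ne_right (hχ : NoAlternatingFourCycle χ) {u a b b' : V}
    (hua : u ≠ a) (hub : u ≠ b) (hub' : u ≠ b') (hab : a ≠ b) (hab' : a ≠ b') :
    triangleDefect χ u a b = triangleDefect χ u a b' := by
  obtain rfl | hbb' := eq_or_ne b b'
  · rfl
  have h := hχ u b a b' (by simp [*, hab.symm])
  simp only [triangleDefect, Sym2.eq_swap (a := b) (b := a), Sym2.eq_swap (a := b') (b := u)] at h ⊢
  linear_combination (norm := abel) h

lemma triangleDefect_eq (hχ : NoAlternatingFourCycle χ) {u a b a' b' : V}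
    (hua : u ≠ a) (hub : u ≠ b) (hab : a ≠ b) (hua' : u ≠ a') (hub' : u ≠ b') (hab' : a' ≠ b') :
    triangleDefect χ u a b = triangleDefect χ u a' b' := by
  obtain rfl | hb'a := eq_or_ne b' a
  · calc triangleDefect χ u b' b = triangleDefect χ u b' a' :=
          triangleDefect_eq_of_ne_right hχ hua hub hua' hab hab'.symm
      _ = triangleDefect χ u a' b' := triangleDefect_comm χ u b' a'
  · calc triangleDefect χ u a b = triangleDefect χ u a b' :=
          triangleDefect_eq_of_ne_right hχ hua hub hub' hab hb'a.symm
      _ = triangleDefect χ u b' a := triangleDefect_comm χ u a b'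
      _ = triangleDefect χ u b' a' :=
          triangleDefect_eq_of_ne_right hχ hub' hua hua' hb'a hab'.symm
      _ = triangleDefect χ u a' b' := triangleDefect_comm χ u b' a'

end Defect

lemma exists_ne_ne_of_ne {a b c : V} (hab : a ≠ b) (hac : a ≠ c) (hbc : b ≠ c) (u v : V) :
    ∃ w : V, u ≠ w ∧ v ≠ w := by
  by_cases hua : u = a <;> by_cases hva : v = a
  · exact ⟨b, hua ▸ hab, hva ▸ hab⟩
  · by_cases hvb : v = b
    · exact ⟨c, hua ▸ hac, hvb ▸ hbc⟩
    · exact ⟨b, hua ▸ hab, hvb⟩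
  · by_cases hub : u = b
    · exact ⟨c, hub ▸ hbc, hva ▸ hac⟩
    · exact ⟨b, hub, hva ▸ hab⟩
  · exact ⟨a, hua, hva⟩

lemma zmod3_eq_neg_two_mul (g : ZMod 3) : g = -(2 * g) := by
  linear_combination g * (by decide : (3 : ZMod 3) = 0)

lemma exists_isPotential_of_ne (χ : Sym2 V → ZMod 3) (hχ : NoAlternatingFourCycle χ)
    {a b c : V} (hab : a ≠ b) (hac : a ≠ c) (hbc : b ≠ c) : ∃ Q, IsPotential χ Q := by
  choose x hx using fun u ↦ exists_ne_ne_of_ne hab hac hbc u u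
  choose y hy using fun u ↦ exists_ne_ne_of_ne hab hac hbc u (x u)
  refine ⟨fun u ↦ -triangleDefect χ u (x u) (y u), fun u v huv ↦ ?_⟩
  obtain ⟨w, huw, hvw⟩ := exists_ne_ne_of_ne hab hac hbc u v
  dsimp only
  rw [triangleDefect_eq hχ (hx u).1 (hy u).1 (hy u).2 huv huw hvw,
    triangleDefect_eq hχ (hx v).1 (hy v).1 (hy v).2 huv.symm hvw huw]
  simp only [triangleDefect, Sym2.eq_swap (a := v) (b := u)]
  linear_combination zmod3_eq_neg_two_mul (χ s(u, v))

lemma exists_isPotential_of_forall_eq (χ : Sym2 V → ZMod 3)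
    (h : ∀ a b c : V, a ≠ b → a ≠ c → b = c) : ∃ Q, IsPotential χ Q := by
  classical
  refine ⟨fun u ↦ if hu : ∃ v, u ≠ v then -χ s(u, hu.choose) else 0, fun u v huv ↦ ?_⟩
  have hu : ∃ w, u ≠ w := ⟨v, huv⟩
  have hv : ∃ w, v ≠ w := ⟨u, huv.symm⟩
  dsimp only
  rw [dif_pos hu, dif_pos hv, ← h u v _ huv hu.choose_spec, ← h v u _ huv.symm hv.choose_spec,
    Sym2.eq_swap]
  exact (zmod3_eq_neg_two_mul _).trans (by ring)

theorem exists_isPotential (χ : Sym2 V → ZMod 3) (hχ : NoAlternatingFourCycle χ) :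
    ∃ Q, IsPotential χ Q := by
  by_cases h : ∃ a b c : V, a ≠ b ∧ a ≠ c ∧ b ≠ c
  · obtain ⟨a, b, c, hab, hac, hbc⟩ := h
    exact exists_isPotential_of_ne χ hχ hab hac hbc
  · push Not at h
    exact exists_isPotential_of_forall_eq χ h

lemma zmod3_neg_add_dichotomy : ∀ p q x : ZMod 3, x = -(p + q) →
    (p = q ∧ x = p) ∨ (p ≠ q ∧ x ≠ p ∧ x ≠ q) := by decide

lemma isCCColoring_of_isPotential {N : ℕ} {χ : Sym2 (Fin N) → ZMod 3} {Q : Fin N → ZMod 3}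
    (hQ : IsPotential χ Q) : IsCCColoring χ :=
  ⟨fun u ↦ -Q u, fun u v huv ↦ zmod3_neg_add_dichotomy _ _ _ (by rw [hQ u v huv]; ring)⟩

end EdgeColoring

theorem stmt6_general (n : ℕ) (χ : Sym2 (Fin n) → ZMod 3)
    (hnoalt : ∀ u v w z : Fin n, ([u, v, w, z] : List (Fin n)).Nodup →
      χ s(u, v) + χ s(w, z) = χ s(v, w) + χ s(z, u)) :
    IsCCColoring χ :=
  have ⟨_, hQ⟩ := EdgeColoring.exists_isPotential χ hnoalt
  EdgeColoring.isCCColoring_of_isPotential hQ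

theorem stmt6 (n : ℕ) (hn : 0 < n) (χ : Sym2 (Fin n) → ZMod 3)
    (hnoalt : ∀ u v w z : Fin n, ([u, v, w, z] : List (Fin n)).Nodup →
      χ s(u, v) + χ s(w, z) = χ s(v, w) + χ s(z, u)) :
    IsCCColoring χ :=
  stmt6_general n χ hnoalt
end

section
/- Let K_n be edge-colored by a CC coloring with colors in Z_3, and let F be a forest on n vertices with 3 dividing e(F) such that either F has, for each residue r ∈ {0,1,2}, a vertex of degree ≡ r (mod 3), or F has at least two vertices of degree ≡ 0 (mod 3). Then there is a copy of F in K_n whose edge colors sum to 0 in Z_3. -/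
open Finset

section Helpers
variable {V : Type} [Fintype V] [DecidableEq V]
set_option linter.unusedSectionVars false

variable {V : Type} [Fintype V] [DecidableEq V]

private lemma zmod3_choose (R x y : ZMod 3) (hxy : x ≠ y) :
    (0*y + 1*x + 2*x + R = 0) ∨ (0*x + 1*x + 2*y + R = 0) ∨ (0*x + 1*y + 2*x + R = 0) := by
  revert R x y; decide

private lemma exists_perm_three (a b c x y z : V) (hab : a ≠ b) (hac : a ≠ c) (hbc : b ≠ c)
    (hxy : x ≠ y) (hxz : x ≠ z) (hyz : y ≠ z) :
    ∃ σ : Equiv.Perm V, σ a = x ∧ σ b = y ∧ σ c = z := by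
  classical
  set τ1 := Equiv.swap a x with hτ1
  have h1a : τ1 a = x := Equiv.swap_apply_left a x
  set τ2 := Equiv.swap (τ1 b) y with hτ2
  set σ2 := τ1.trans τ2 with hσ2
  have h2a : σ2 a = x := by
    have hne1 : x ≠ τ1 b := by rw [← h1a]; exact fun h => hab (τ1.injective h)
    have : τ2 x = x := Equiv.swap_apply_of_ne_of_ne hne1 hxy
    simp [hσ2, Equiv.trans_apply, h1a, this]
  have h2b : σ2 b = y := by simp [hσ2, Equiv.trans_apply, hτ2, Equiv.swap_apply_left]
  set τ3 := Equiv.swap (σ2 c) z with hτ3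
  refine ⟨σ2.trans τ3, ?_, ?_, ?_⟩
  · have hne1 : x ≠ σ2 c := by rw [← h2a]; exact fun h => hac (σ2.injective h)
    simp [Equiv.trans_apply, h2a, hτ3, Equiv.swap_apply_of_ne_of_ne hne1 hxz]
  · have hne1 : y ≠ σ2 c := by rw [← h2b]; exact fun h => hbc (σ2.injective h)
    simp [Equiv.trans_apply, h2b, hτ3, Equiv.swap_apply_of_ne_of_ne hne1 hyz]
  · simp [Equiv.trans_apply, hτ3, Equiv.swap_apply_left]

private lemma sum_split (T : Finset V) (F : V → ZMod 3) :
    ∑ v, F v = ∑ v ∈ T, F v + ∑ v ∈ univ \ T, F v := by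
  rw [add_comm, Finset.sum_sdiff (subset_univ T)]

private lemma coreA (d Q : V → ZMod 3) (hsum : ∑ v, d v = 0) (h4 : 4 ≤ Fintype.card V)
    (v₀ v₁ v₂ : V) (h0 : d v₀ = 0) (h1 : d v₁ = 1) (h2 : d v₂ = 2) :
    ∃ σ : Equiv.Perm V, ∑ v, d v * Q (σ v) = 0 := by
  classical
  by_cases hQ : ∀ a b : V, Q a = Q b
  · refine ⟨1, ?_⟩
    calc ∑ v, d v * Q ((1 : Equiv.Perm V) v) = ∑ v, d v * Q v₀ :=
          Finset.sum_congr rfl (fun v _ => by rw [Equiv.Perm.one_apply, hQ v v₀])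
      _ = (∑ v, d v) * Q v₀ := (Finset.sum_mul _ _ _).symm
      _ = 0 := by rw [hsum, zero_mul]
  · push_neg at hQ
    obtain ⟨p', q', hp'q'⟩ := hQ
    obtain ⟨p, q, hpq, hQpq⟩ := Fintype.exists_ne_map_eq_of_card_lt Q
      (by rw [ZMod.card]; omega)
    have hr : ∃ r, Q r ≠ Q p := by
      by_cases h : Q p' = Q p
      · exact ⟨q', fun hc => hp'q' (by rw [h, hc])⟩
      · exact ⟨p', h⟩
    obtain ⟨r, hQr⟩ := hr
    have hrp : r ≠ p := fun h => hQr (by rw [h])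
    have hrq : r ≠ q := fun h => hQr (by rw [h, ← hQpq])
    have h01 : v₀ ≠ v₁ := by
      intro h; have := congrArg d h; rw [h0, h1] at this; exact absurd this (by decide)
    have h02 : v₀ ≠ v₂ := by
      intro h; have := congrArg d h; rw [h0, h2] at this; exact absurd this (by decide)
    have h12 : v₁ ≠ v₂ := by
      intro h; have := congrArg d h; rw [h1, h2] at this; exact absurd this (by decide)
    obtain ⟨σ₀, hσr, hσp, hσq⟩ := exists_perm_three v₀ v₁ v₂ r p q h01 h02 h12
      hrp hrq hpq
    set T : Finset V := {v₀, v₁, v₂} with hT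
    set R := ∑ v ∈ univ \ T, d v * Q (σ₀ v) with hRdef
    have hsplit : ∀ σ : Equiv.Perm V, (∀ v, v ∉ T → σ v = σ₀ v) →
        ∑ v, d v * Q (σ v) = d v₀ * Q (σ v₀) + d v₁ * Q (σ v₁) + d v₂ * Q (σ v₂) + R := by
      intro σ hσ
      rw [sum_split T (fun v => d v * Q (σ v))]
      congr 1
      · rw [hT, Finset.sum_insert (by simp [h01, h02]),
          Finset.sum_insert (by simp [h12]), Finset.sum_singleton, add_assoc]
      · exact Finset.sum_congr rfl (fun v hv => by
          rw [hσ v (Finset.mem_sdiff.mp hv).2])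
    have E0 := hsplit σ₀ (fun v _ => rfl)
    rw [hσr, hσp, hσq, h0, h1, h2, ← hQpq] at E0
    have E1 := hsplit (σ₀ * Equiv.swap v₀ v₂) (fun v hv => by
      have hv' : v ≠ v₀ ∧ v ≠ v₁ ∧ v ≠ v₂ := by simpa [hT] using hv
      rw [Equiv.Perm.mul_apply, Equiv.swap_apply_of_ne_of_ne hv'.1 hv'.2.2])
    rw [show (σ₀ * Equiv.swap v₀ v₂) v₀ = σ₀ v₂ by
        rw [Equiv.Perm.mul_apply, Equiv.swap_apply_left],
      show (σ₀ * Equiv.swap v₀ v₂) v₁ = σ₀ v₁ by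
        rw [Equiv.Perm.mul_apply, Equiv.swap_apply_of_ne_of_ne (Ne.symm h01) h12],
      show (σ₀ * Equiv.swap v₀ v₂) v₂ = σ₀ v₀ by
        rw [Equiv.Perm.mul_apply, Equiv.swap_apply_right],
      hσr, hσp, hσq, h0, h1, h2, ← hQpq] at E1
    have E2 := hsplit (σ₀ * Equiv.swap v₀ v₁) (fun v hv => by
      have hv' : v ≠ v₀ ∧ v ≠ v₁ ∧ v ≠ v₂ := by simpa [hT] using hv
      rw [Equiv.Perm.mul_apply, Equiv.swap_apply_of_ne_of_ne hv'.1 hv'.2.1])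
    rw [show (σ₀ * Equiv.swap v₀ v₁) v₀ = σ₀ v₁ by
        rw [Equiv.Perm.mul_apply, Equiv.swap_apply_left],
      show (σ₀ * Equiv.swap v₀ v₁) v₁ = σ₀ v₀ by
        rw [Equiv.Perm.mul_apply, Equiv.swap_apply_right],
      show (σ₀ * Equiv.swap v₀ v₁) v₂ = σ₀ v₂ by
        rw [Equiv.Perm.mul_apply, Equiv.swap_apply_of_ne_of_ne (Ne.symm h02) (Ne.symm h12)],
      hσr, hσp, hσq, h0, h1, h2, ← hQpq] at E2
    rcases zmod3_choose R (Q p) (Q r) (Ne.symm hQr) with h | h | h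
    · exact ⟨σ₀, by rw [E0]; exact h⟩
    · exact ⟨σ₀ * Equiv.swap v₀ v₂, by rw [E1]; exact h⟩
    · exact ⟨σ₀ * Equiv.swap v₀ v₁, by rw [E2]; exact h⟩


variable {V : Type} [Fintype V] [DecidableEq V]

private lemma egz5 (Q : V → ZMod 3) (s : Finset V) (hs : s.card = 5) :
    ∃ t ⊆ s, t.card = 3 ∧ ∑ x ∈ t, Q x = 0 := by
  classical
  by_cases hbig : ∃ c : ZMod 3, 3 ≤ #(s.filter (fun a => Q a = c))
  · obtain ⟨c, hc⟩ := hbig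
    obtain ⟨t, hts, htc⟩ := Finset.exists_subset_card_eq hc
    refine ⟨t, hts.trans (Finset.filter_subset _ _), htc, ?_⟩
    have : ∀ x ∈ t, Q x = c := fun x hx => (Finset.mem_filter.mp (hts hx)).2
    rw [Finset.sum_congr rfl this, Finset.sum_const, htc]
    rw [nsmul_eq_mul, ZMod.natCast_self 3, zero_mul]
  · push_neg at hbig
    have hfib := Finset.card_eq_sum_card_fiberwise
      (f := Q) (s := s) (t := (univ : Finset (ZMod 3))) (fun x _ => mem_univ _)
    have huniv : (univ : Finset (ZMod 3)) = {0, 1, 2} := by decide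
    rw [huniv, Finset.sum_insert (by decide), Finset.sum_insert (by decide),
      Finset.sum_singleton, hs] at hfib
    have hb0 := hbig 0; have hb1 := hbig 1; have hb2 := hbig 2
    obtain ⟨a, ha⟩ := Finset.card_pos.mp (show 0 < #(s.filter (fun x => Q x = 0)) by omega)
    obtain ⟨b, hb⟩ := Finset.card_pos.mp (show 0 < #(s.filter (fun x => Q x = 1)) by omega)
    obtain ⟨c, hc⟩ := Finset.card_pos.mp (show 0 < #(s.filter (fun x => Q x = 2)) by omega)
    rw [Finset.mem_filter] at ha hb hc
    have hab : a ≠ b := fun h => by rw [h, hb.2] at ha; exact absurd ha.2 (by decide)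
    have hac : a ≠ c := fun h => by rw [h, hc.2] at ha; exact absurd ha.2 (by decide)
    have hbc : b ≠ c := fun h => by rw [h, hc.2] at hb; exact absurd hb.2 (by decide)
    refine ⟨{a, b, c}, ?_, ?_, ?_⟩
    · intro x hx
      simp only [Finset.mem_insert, Finset.mem_singleton] at hx
      rcases hx with rfl | rfl | rfl
      exacts [ha.1, hb.1, hc.1]
    · rw [Finset.card_insert_of_notMem (by simp [hab, hac]),
        Finset.card_insert_of_notMem (by simp [hbc]), Finset.card_singleton]
    · rw [Finset.sum_insert (by simp [hab, hac]), Finset.sum_insert (by simp [hbc]),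
        Finset.sum_singleton, ha.2, hb.2, hc.2]
      decide

private lemma egz_main (Q : V → ZMod 3) : ∀ m : ℕ, ∀ s : Finset V, 3 * m + 2 ≤ s.card →
    ∃ t ⊆ s, t.card = 3 * m ∧ ∑ x ∈ t, Q x = 0 := by
  intro m
  induction m with
  | zero => exact fun s _ => ⟨∅, Finset.empty_subset _, by simp, by simp⟩
  | succ m ih =>
    intro s hs
    obtain ⟨s₅, hs₅s, hs₅⟩ := Finset.exists_subset_card_eq (show 5 ≤ s.card by omega)
    obtain ⟨t₀, ht₀, ht₀c, ht₀s⟩ := egz5 Q s₅ hs₅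
    have ht₀s' : t₀ ⊆ s := ht₀.trans hs₅s
    obtain ⟨t₁, ht₁, ht₁c, ht₁s⟩ := ih (s \ t₀)
      (by rw [Finset.card_sdiff_of_subset ht₀s', ht₀c]; omega)
    have hdisj : Disjoint t₀ t₁ := by
      rw [Finset.disjoint_left]
      exact fun x hx0 hx1 => (Finset.mem_sdiff.mp (ht₁ hx1)).2 hx0
    refine ⟨t₀ ∪ t₁, Finset.union_subset ht₀s' (ht₁.trans (Finset.sdiff_subset)), ?_, ?_⟩
    · rw [Finset.card_union_of_disjoint hdisj, ht₀c, ht₁c]; ring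
    · rw [Finset.sum_union hdisj, ht₀s, ht₁s, add_zero]

private lemma coreB (d Q : V → ZMod 3) (hsum : ∑ v, d v = 0)
    (hA : ∀ (v₀ v₁ v₂ : V), d v₀ = 0 → d v₁ = 1 → d v₂ = 2 →
      ∃ σ : Equiv.Perm V, ∑ v, d v * Q (σ v) = 0)
    (v w : V) (hvw : v ≠ w) (hv : d v = 0) (hw : d w = 0) :
    ∃ σ : Equiv.Perm V, ∑ x, d x * Q (σ x) = 0 := by
  classical
  by_cases hz : ∀ u, d u = 0
  · exact ⟨1, by simp [hz]⟩
  push_neg at hz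
  obtain ⟨u₀, hu₀⟩ := hz
  by_cases h12 : (∃ u₁, d u₁ = 1) ∧ (∃ u₂, d u₂ = 2)
  · obtain ⟨⟨u₁, hd1⟩, ⟨u₂, hd2⟩⟩ := h12
    exact hA v u₁ u₂ hv hd1 hd2
  · -- uniform case
    have hval : ∀ u, d u ≠ 0 → d u = d u₀ := by
      intro u hu
      by_contra hne
      have h2' : ∀ a b : ZMod 3, a ≠ 0 → b ≠ 0 → a ≠ b →
          (a = 1 ∨ b = 1) ∧ (a = 2 ∨ b = 2) := by decide
      obtain ⟨hone, htwo⟩ := h2' (d u) (d u₀) hu hu₀ hne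
      exact h12 ⟨hone.elim (fun h => ⟨u, h⟩) (fun h => ⟨u₀, h⟩),
        htwo.elim (fun h => ⟨u, h⟩) (fun h => ⟨u₀, h⟩)⟩
    set K : Finset V := univ.filter (fun u => d u ≠ 0) with hK
    have hvK : v ∉ K := by simp [hK, hv]
    have hwK : w ∉ K := by simp [hK, hw]
    have hsubK : K ⊆ univ \ {v, w} := by
      intro x hx
      rw [Finset.mem_sdiff]
      refine ⟨mem_univ _, ?_⟩
      simp only [Finset.mem_insert, Finset.mem_singleton]
      rintro (rfl | rfl)
      exacts [hvK hx, hwK hx]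
    have hcardvw : ({v, w} : Finset V).card = 2 := by
      rw [Finset.card_insert_of_notMem (by simp [hvw]), Finset.card_singleton]
    have hcard2 : 2 ≤ Fintype.card V := by
      have := Finset.card_le_card (show ({v, w} : Finset V) ⊆ univ from subset_univ _)
      rw [hcardvw, Finset.card_univ] at this; exact this
    have hKcard : K.card + 2 ≤ Fintype.card V := by
      have h1 := Finset.card_le_card hsubK
      rw [Finset.card_sdiff_of_subset (subset_univ _), hcardvw, Finset.card_univ] at h1
      omega
    -- 3 ∣ K.card
    have hKsum : ∑ x ∈ K, d x = 0 := by
      have h1 : ∑ x ∈ univ \ K, d x = 0 :=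
        Finset.sum_eq_zero (fun x hx => by
          have := (Finset.mem_sdiff.mp hx).2
          simp only [hK, Finset.mem_filter, mem_univ, true_and, not_not] at this
          exact this)
      have h2 : ∑ x ∈ univ, d x = ∑ x ∈ univ \ K, d x + ∑ x ∈ K, d x :=
        (Finset.sum_sdiff (subset_univ K)).symm
      rw [hsum, h1, zero_add] at h2
      exact h2.symm
    have hKsum2 : (K.card : ZMod 3) * d u₀ = 0 := by
      rw [← nsmul_eq_mul, ← Finset.sum_const, ← hKsum]
      exact Finset.sum_congr rfl (fun x hx => by
        rw [hval x (by simpa [hK] using hx)])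
    have hKdvd : 3 ∣ K.card := by
      rcases mul_eq_zero.mp hKsum2 with h | h
      · exact (ZMod.natCast_eq_zero_iff _ 3).mp h
      · exact absurd h hu₀
    obtain ⟨m, hm⟩ := hKdvd
    obtain ⟨T, hTuniv, hTcard, hTsum⟩ := egz_main Q m univ
      (by rw [Finset.card_univ]; omega)
    have hcards : Fintype.card {x // x ∈ K} = Fintype.card {x // x ∈ T} := by
      rw [Fintype.card_coe, Fintype.card_coe, hTcard, hm]
    have e1 : {x // x ∈ K} ≃ {x // x ∈ T} := Fintype.equivOfCardEq hcards
    have e2 : {x // ¬ x ∈ K} ≃ {x // ¬ x ∈ T} := Fintype.equivOfCardEq (by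
      rw [Fintype.card_subtype_compl, Fintype.card_subtype_compl, hcards])
    set σ : Equiv.Perm V := Equiv.subtypeCongr e1 e2 with hσ
    have hσpos : ∀ x (h : x ∈ K), σ x = ↑(e1 ⟨x, h⟩) := by
      intro x h
      simp [hσ, Equiv.subtypeCongr, h]
    have hσneg : ∀ x (h : x ∉ K), σ x = ↑(e2 ⟨x, h⟩) := by
      intro x h
      simp [hσ, Equiv.subtypeCongr, h]
    have hmapsto : ∀ x ∈ K, σ x ∈ T := fun x h => by
      rw [hσpos x h]; exact (e1 ⟨x, h⟩).2
    have hmapsback : ∀ y ∈ T, σ.symm y ∈ K := by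
      intro y hy
      by_contra hns
      have := hσneg _ hns
      rw [Equiv.apply_symm_apply] at this
      rw [this] at hy
      exact (e2 ⟨σ.symm y, hns⟩).2 hy
    refine ⟨σ, ?_⟩
    have hrest : ∑ x ∈ univ \ K, d x * Q (σ x) = 0 :=
      Finset.sum_eq_zero (fun x hx => by
        have := (Finset.mem_sdiff.mp hx).2
        simp only [hK, Finset.mem_filter, mem_univ, true_and, not_not] at this
        rw [this, zero_mul])
    rw [← Finset.sum_sdiff (subset_univ K), hrest, zero_add]
    have hKQ : ∑ x ∈ K, d x * Q (σ x) = d u₀ * ∑ x ∈ K, Q (σ x) := by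
      rw [Finset.mul_sum]
      exact Finset.sum_congr rfl (fun x hx => by
        rw [hval x (by simpa [hK] using hx)])
    rw [hKQ]
    have : ∑ x ∈ K, Q (σ x) = ∑ y ∈ T, Q y := by
      refine Finset.sum_nbij' (fun a => σ a) (fun a => σ.symm a) hmapsto hmapsback
        (fun a _ => Equiv.symm_apply_apply σ a) (fun a _ => Equiv.apply_symm_apply σ a)
        (fun a _ => rfl)
    rw [this, hTsum, mul_zero]

variable {V : Type} [Fintype V] [DecidableEq V]

private lemma dart_sum {M : Type} [AddCommMonoid M] (G : SimpleGraph V) [DecidableRel G.Adj]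
    (g : V → M) :
    ∑ d : G.Dart, g d.toProd.1 = ∑ v, G.degree v • g v := by
  rw [← Finset.sum_fiberwise (univ : Finset G.Dart) (fun d => d.toProd.1)
    (fun d => g d.toProd.1)]
  refine Finset.sum_congr rfl fun v _ => ?_
  have h1 : ∀ d ∈ filter (fun d : G.Dart => d.toProd.1 = v) univ, g d.toProd.1 = g v :=
    fun d hd => by rw [(Finset.mem_filter.mp hd).2]
  rw [Finset.sum_congr rfl h1, Finset.sum_const, SimpleGraph.dart_fst_fiber_card_eq_degree]

private lemma edge_sum {M : Type} [AddCommMonoid M] (G : SimpleGraph V) [DecidableRel G.Adj]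
    (g : V → M) (H : Sym2 V → M) (hH : ∀ u v, G.Adj u v → H s(u, v) = g u + g v) :
    ∑ e ∈ G.edgeFinset, H e = ∑ d : G.Dart, g d.toProd.1 := by
  rw [← Finset.sum_fiberwise_of_maps_to (g := SimpleGraph.Dart.edge)
    (fun d _ => SimpleGraph.mem_edgeFinset.mpr d.edge_mem)
    (fun d => g d.toProd.1)]
  refine Finset.sum_congr rfl fun e he => ?_
  revert he
  refine Sym2.inductionOn e ?_
  intro u w he
  have hadj : G.Adj u w := SimpleGraph.mem_edgeFinset.mp he
  let dd : G.Dart := ⟨(u, w), hadj⟩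
  have hfib : filter (fun d' : G.Dart => d'.edge = s(u, w)) univ = {dd, dd.symm} := by
    have h := SimpleGraph.Dart.edge_fiber dd
    convert h using 2
    exact Iff.rfl
  have hnm : dd ∉ ({dd.symm} : Finset G.Dart) := by
    simp only [Finset.mem_singleton]
    exact fun h => dd.symm_ne h.symm
  rw [hfib, Finset.sum_insert hnm, Finset.sum_singleton, hH u w hadj]
  rfl
end Helpers

theorem stmt7 {V : Type} [Fintype V] [DecidableEq V]
    (F : SimpleGraph V) [DecidableRel F.Adj] (n : ℕ)
    (hcard : Fintype.card V = n)
    (hforest : F.IsAcyclic)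
    (hdiv : 3 ∣ F.edgeFinset.card)
    (hdeg : ((∃ v, F.degree v % 3 = 0) ∧ (∃ v, F.degree v % 3 = 1) ∧
        (∃ v, F.degree v % 3 = 2)) ∨
      (∃ v w : V, v ≠ w ∧ F.degree v % 3 = 0 ∧ F.degree w % 3 = 0))
    (χ : Sym2 (Fin n) → ZMod 3)
    (hcc : IsCCColoring χ) :
    HasZeroSumCopy F χ := by
  classical
  obtain ⟨P, hP⟩ := hcc
  set ε : V ≃ Fin n := Fintype.equivFinOfCardEq hcard with hε
  set Q : V → ZMod 3 := fun v => P (ε v) with hQdef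
  set d : V → ZMod 3 := fun v => ((F.degree v : ZMod 3)) with hddef
  have hsum : ∑ v, d v = 0 := by
    have h := F.sum_degrees_eq_twice_card_edges
    have h2 : ((∑ v, F.degree v : ℕ) : ZMod 3) = 0 := by
      rw [h, Nat.cast_mul, (ZMod.natCast_eq_zero_iff _ 3).mpr hdiv, mul_zero]
    rw [Nat.cast_sum] at h2
    exact h2
  have hres : ∀ (v : V) (r : ℕ), F.degree v % 3 = r → d v = (r : ZMod 3) := by
    intro v r h
    show ((F.degree v : ℕ) : ZMod 3) = (r : ZMod 3)
    rw [← ZMod.natCast_mod (F.degree v) 3, h]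
  have hval3 : ∀ (v : V) (r : ℕ), r < 3 → d v = (r : ZMod 3) → F.degree v % 3 = r := by
    intro v r hr h
    have h2 := congrArg ZMod.val h
    rw [ZMod.val_natCast, ZMod.val_natCast] at h2
    omega
  have hA : ∀ (v₀ v₁ v₂ : V), d v₀ = 0 → d v₁ = 1 → d v₂ = 2 →
      ∃ σ : Equiv.Perm V, ∑ v, d v * Q (σ v) = 0 := by
    intro v₀ v₁ v₂ hd0 hd1 hd2
    have h01 : v₀ ≠ v₁ := by
      intro h; have := congrArg d h; rw [hd0, hd1] at this; exact absurd this (by decide)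
    have h02 : v₀ ≠ v₂ := by
      intro h; have := congrArg d h; rw [hd0, hd2] at this; exact absurd this (by decide)
    have h12 : v₁ ≠ v₂ := by
      intro h; have := congrArg d h; rw [hd1, hd2] at this; exact absurd this (by decide)
    have hcardT : ({v₀, v₁, v₂} : Finset V).card = 3 := by
      rw [Finset.card_insert_of_notMem (by simp [h01, h02]),
        Finset.card_insert_of_notMem (by simp [h12]), Finset.card_singleton]
    have hc3 : 3 ≤ Fintype.card V := by
      have := Finset.card_le_card (show ({v₀, v₁, v₂} : Finset V) ⊆ univ from subset_univ _)
      rw [hcardT, Finset.card_univ] at this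
      exact this
    have hne3 : Fintype.card V ≠ 3 := by
      intro h3
      have hlt : ∀ x : V, F.degree x < 3 := fun x => h3 ▸ F.degree_lt_card_verts x
      have e0 : F.degree v₀ = 0 := by
        have := hval3 v₀ 0 (by norm_num) (by rw [Nat.cast_zero]; exact hd0)
        have := hlt v₀; omega
      have e1 : F.degree v₁ = 1 := by
        have := hval3 v₁ 1 (by norm_num) (by rw [Nat.cast_one]; exact hd1)
        have := hlt v₁; omega
      have e2 : F.degree v₂ = 2 := by
        have := hval3 v₂ 2 (by norm_num) (by rw [Nat.cast_two]; exact hd2)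
        have := hlt v₂; omega
      have huniv : ({v₀, v₁, v₂} : Finset V) = univ :=
        Finset.eq_of_subset_of_card_le (subset_univ _)
          (by rw [Finset.card_univ, h3, hcardT])
      have hsd := F.sum_degrees_eq_twice_card_edges
      rw [← huniv, Finset.sum_insert (by simp [h01, h02]),
        Finset.sum_insert (by simp [h12]), Finset.sum_singleton, e0, e1, e2] at hsd
      omega
    exact coreA d Q hsum (by omega) v₀ v₁ v₂ hd0 hd1 hd2
  have hcore : ∃ σ : Equiv.Perm V, ∑ v, d v * Q (σ v) = 0 := by
    rcases hdeg with ⟨⟨v₀, h₀⟩, ⟨v₁, h₁⟩, ⟨v₂, h₂⟩⟩ | ⟨v, w, hvw, hv, hw⟩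
    · exact hA v₀ v₁ v₂ (by rw [hres v₀ 0 h₀, Nat.cast_zero])
        (by rw [hres v₁ 1 h₁, Nat.cast_one]) (by rw [hres v₂ 2 h₂, Nat.cast_two])
    · exact coreB d Q hsum hA v w hvw
        (by rw [hres v 0 hv, Nat.cast_zero]) (by rw [hres w 0 hw, Nat.cast_zero])
  obtain ⟨σ, hσ⟩ := hcore
  have hfinj : Function.Injective (fun v => ε (σ v)) :=
    fun a b h => σ.injective (ε.injective h)
  refine ⟨fun v => ε (σ v), hfinj, ?_⟩
  set f : V → Fin n := fun v => ε (σ v) with hf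
  have hkey : ∀ u v' : Fin n, u ≠ v' → χ s(u, v') = -(P u) + -(P v') := by
    intro u v' huv
    rcases hP u v' huv with ⟨h1, h2⟩ | ⟨h1, h2, h3⟩
    · rw [h2, ← h1]
      have : ∀ a : ZMod 3, a = -a + -a := by decide
      exact this _
    · have : ∀ a b c : ZMod 3, a ≠ b → c ≠ a → c ≠ b → c = -a + -b := by decide
      exact this _ _ _ h1 h2 h3
  have hsum2 : ∑ e ∈ F.edgeFinset, χ (e.map f) =
      ∑ dd : F.Dart, (fun x => -(P (f x))) dd.toProd.1 := by
    refine edge_sum F (fun x => -(P (f x))) (fun e => χ (e.map f)) ?_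
    intro u v' hadj
    show χ (Sym2.map f s(u, v')) = -P (f u) + -P (f v')
    rw [Sym2.map_pair_eq]
    exact hkey (f u) (f v') (fun h => hadj.ne (hfinj h))
  rw [hsum2, dart_sum F (fun x => -(P (f x)))]
  show ∑ v, F.degree v • (-(P (f v))) = 0
  have hterm : ∀ v, F.degree v • (-(P (f v))) = -(d v * Q (σ v)) := by
    intro v
    rw [nsmul_eq_mul, mul_neg]
  rw [Finset.sum_congr rfl (fun v _ => hterm v), Finset.sum_neg_distrib, hσ, neg_zero]
end
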